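/- arXiv:1902.08677 — 10 statements merged into one kernel-verified Lean document; each statement's English description precedes it below -/
import Mathlib

section
/- There is no ideal on ℕ containing all finite subsets of ℕ which is a Gδ subset of the Cantor space 2^ℕ; that is, if I is an ideal on ℕ (so ℕ ∉ I) with Fin ⊆ I, then I is not a Gδ subset of 2^ℕ. -/
open Set Filter Topology

/-- An ideal on a set `X`: contains `∅`, does not contain `X`, closed under
finite unions and subsets. -/
def IsIdeal {X : Type*} (I : Set (Set X)) : Prop :=
  ∅ ∈ I ∧ (Set.univ : Set X) ∉ I ∧ (∀ A B : Set X, A ∈ I → B ∈ I → A ∪ B ∈ I) ∧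
    ∀ A B : Set X, A ⊆ B → B ∈ I → A ∈ I

/-- `I` contains all finite sets. -/
def ContainsFin {X : Type*} (I : Set (Set X)) : Prop := ∀ A : Set X, A.Finite → A ∈ I

/-- Characteristic function, identifying subsets of `ℕ` with points of the
Cantor space `ℕ → Bool`. -/
noncomputable def chi (A : Set ℕ) : ℕ → Bool := fun n => @decide (n ∈ A) (Classical.propDecidable _)

lemma chi_injective : Function.Injective chi := by
  intro A B h
  ext i
  have := congrFun h i
  simpa [chi, decide_eq_decide] using this

/-- One step of the construction. -/
noncomputable def idealStep (g : Set ℕ → ℕ → ℕ → ℕ) (n : ℕ) (p : ℕ × Set ℕ × Set ℕ) :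
    ℕ × Set ℕ × Set ℕ :=
  let m := p.1; let a := p.2.1; let b := p.2.2
  let m₁ := g a m n
  let b' := b ∪ Set.Ico m m₁
  let m₂ := g b' m₁ n
  (m₂, a ∪ Set.Ico m₁ m₂, b')

/-- The recursive construction. -/
noncomputable def idealSeq (g : Set ℕ → ℕ → ℕ → ℕ) : ℕ → ℕ × Set ℕ × Set ℕ
  | 0 => (0, ∅, ∅)
  | n + 1 => idealStep g n (idealSeq g n)

/-- There is no ideal on `ℕ` containing all finite sets which is a `Gδ`
subset of the Cantor space. -/
theorem no_Gdelta_ideal (I : Set (Set ℕ)) (hI : IsIdeal I) (hfin : ContainsFin I) :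
    ¬ IsGδ (chi '' I) := by
  obtain ⟨hempty, huniv, hunion, hdown⟩ := hI
  intro hG
  obtain ⟨U, hUopen, hUeq⟩ := isGδ_iff_eq_iInter_nat.1 hG
  -- key extension lemma
  have key : ∀ (s : Set ℕ) (m n : ℕ), ∃ m', m + 1 ≤ m' ∧
      (s ∈ I → ∀ X : Set ℕ, (∀ i < m', (i ∈ X ↔ i ∈ s)) → chi X ∈ U n) := by
    intro s m n
    by_cases hs : s ∈ I
    · have hmem : chi s ∈ U n := by
        have : chi s ∈ chi '' I := ⟨s, hs, rfl⟩
        rw [hUeq] at this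
        exact mem_iInter.1 this n
      obtain ⟨J, u, hJu, hsub⟩ := isOpen_pi_iff.1 (hUopen n) (chi s) hmem
      refine ⟨max (m + 1) (J.sup id + 1), le_max_left _ _, fun _ X hX => ?_⟩
      apply hsub
      intro i hi
      have hiJ : i ∈ J := hi
      have hile : i < max (m + 1) (J.sup id + 1) :=
        lt_of_lt_of_le (Nat.lt_succ_of_le (Finset.le_sup (f := id) hiJ)) (le_max_right _ _)
      have : chi X i = chi s i := by
        simp only [chi, decide_eq_decide]
        exact hX i hile
      rw [this]
      exact (hJu i hiJ).2
    · exact ⟨m + 1, le_rfl, fun h => absurd h hs⟩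
  choose g hg1 hg2 using key
  set F := idealSeq g with hF
  set m : ℕ → ℕ := fun n => (F n).1 with hm
  set a : ℕ → Set ℕ := fun n => (F n).2.1 with ha
  set b : ℕ → Set ℕ := fun n => (F n).2.2 with hb
  set m₁ : ℕ → ℕ := fun n => g (a n) (m n) n with hm₁
  -- unfold one step
  have hm0 : m 0 = 0 := rfl
  have ha0 : a 0 = ∅ := rfl
  have hb0 : b 0 = ∅ := rfl
  have hbs : ∀ n, b (n + 1) = b n ∪ Set.Ico (m n) (m₁ n) := fun n => rfl
  have hms : ∀ n, m (n + 1) = g (b (n + 1)) (m₁ n) n := fun n => rfl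
  have has : ∀ n, a (n + 1) = a n ∪ Set.Ico (m₁ n) (m (n + 1)) := fun n => rfl
  -- basic inequalities
  have hlt1 : ∀ n, m n < m₁ n := fun n => hg1 (a n) (m n) n
  have hlt2 : ∀ n, m₁ n < m (n + 1) := fun n => by
    rw [hms]; exact hg1 (b (n + 1)) (m₁ n) n
  have hmono : ∀ n, m n < m (n + 1) := fun n => (hlt1 n).trans (hlt2 n)
  have hmle : ∀ {j k : ℕ}, j ≤ k → m j ≤ m k := by
    intro j k h
    induction h with
    | refl => exact le_refl _
    | step h ih => exact le_trans ih (le_of_lt (hmono _))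
  have hmge : ∀ n, n ≤ m n := by
    intro n
    induction n with
    | zero => simp [hm0]
    | succ k ih => exact Nat.succ_le_of_lt (lt_of_le_of_lt ih (hmono k))
  -- invariant : finiteness, bounds, partition
  have inv : ∀ n, (a n).Finite ∧ (b n).Finite ∧ a n ∪ b n = Set.Iio (m n) := by
    intro n
    induction n with
    | zero =>
      refine ⟨by simp [ha0], by simp [hb0], ?_⟩
      ext i
      simp [ha0, hb0, hm0]
    | succ k ih =>
      obtain ⟨hfa, hfb, hab⟩ := ih
      refine ⟨?_, ?_, ?_⟩
      · rw [has]; exact hfa.union (Set.finite_Ico _ _)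
      · rw [hbs]; exact hfb.union (Set.finite_Ico _ _)
      · rw [has, hbs]
        ext i
        have hik : i ∈ a k ∪ b k ↔ i < m k := by rw [hab]; exact Iff.rfl
        have h1 := hlt1 k
        have h2 := hlt2 k
        simp only [Set.mem_union, Set.mem_Ico, Set.mem_Iio] at hik ⊢
        by_cases hia : i ∈ a k <;> by_cases hib : i ∈ b k <;>
          simp [hia, hib] at hik ⊢ <;> omega
  have haI : ∀ n, a n ∈ I := fun n => hfin _ (inv n).1
  have hbI : ∀ n, b n ∈ I := fun n => hfin _ (inv n).2.1
  -- bounds of a n, b n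
  have hasub : ∀ n, a n ⊆ Set.Iio (m n) := fun n =>
    le_trans (Set.subset_union_left) (le_of_eq (inv n).2.2)
  have hbsub : ∀ n, b n ⊆ Set.Iio (m n) := fun n =>
    le_trans (Set.subset_union_right) (le_of_eq (inv n).2.2)
  -- stability: elements below m k don't change after stage k
  have stab_a : ∀ k j, k ≤ j → ∀ i, i < m k → (i ∈ a j ↔ i ∈ a k) := by
    intro k j hkj
    induction hkj with
    | refl => intro i _; rfl
    | @step j' h ih =>
      intro i hi
      rw [has]
      have hub : i < m₁ j' := lt_of_lt_of_le hi (le_trans (hmle h) (le_of_lt (hlt1 j')))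
      simp only [Set.mem_union, Set.mem_Ico]
      constructor
      · rintro (h1 | ⟨h1, _⟩)
        · exact (ih i hi).1 h1
        · omega
      · exact fun h1 => Or.inl ((ih i hi).2 h1)
  have stab_b : ∀ k j, k ≤ j → ∀ i, i < m k → (i ∈ b j ↔ i ∈ b k) := by
    intro k j hkj
    induction hkj with
    | refl => intro i _; rfl
    | @step j' h ih =>
      intro i hi
      rw [hbs]
      have hub : i < m j' := lt_of_lt_of_le hi (hmle h)
      simp only [Set.mem_union, Set.mem_Ico]
      constructor
      · rintro (h1 | ⟨h1, _⟩)
        · exact (ih i hi).1 h1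
        · omega
      · exact fun h1 => Or.inl ((ih i hi).2 h1)
  have amono : ∀ k j, k ≤ j → a k ⊆ a j := by
    intro k j hkj
    induction hkj with
    | refl => exact subset_rfl
    | step _ ih => exact le_trans ih (by rw [has]; exact Set.subset_union_left)
  have bmono : ∀ k j, k ≤ j → b k ⊆ b j := by
    intro k j hkj
    induction hkj with
    | refl => exact subset_rfl
    | step _ ih => exact le_trans ih (by rw [hbs]; exact Set.subset_union_left)
  set A : Set ℕ := ⋃ n, a n with hA
  set B : Set ℕ := ⋃ n, b n with hB
  -- A agrees with a n below m₁ n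
  have hAagree : ∀ n i, i < m₁ n → (i ∈ A ↔ i ∈ a n) := by
    intro n i hi
    constructor
    · rintro hiA
      obtain ⟨j, hj⟩ := Set.mem_iUnion.1 hiA
      rcases le_or_gt j n with h | h
      · exact amono j n h hj
      · -- j ≥ n+1 : use stability at level n+1
        have hi' : i < m (n + 1) := lt_of_lt_of_le hi (le_of_lt (hlt2 n))
        have := (stab_a (n + 1) j h i hi').1 hj
        rw [has] at this
        rcases this with h1 | h1
        · exact h1
        · exact absurd h1.1 (not_le.2 hi)
    · intro h1; exact Set.mem_iUnion.2 ⟨n, h1⟩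
  have hBagree : ∀ n i, i < m (n + 1) → (i ∈ B ↔ i ∈ b (n + 1)) := by
    intro n i hi
    constructor
    · rintro hiB
      obtain ⟨j, hj⟩ := Set.mem_iUnion.1 hiB
      rcases le_or_gt j (n + 1) with h | h
      · exact bmono j (n + 1) h hj
      · exact (stab_b (n + 1) j (le_of_lt h) i hi).1 hj
    · intro h1; exact Set.mem_iUnion.2 ⟨n + 1, h1⟩
  -- chi A and chi B lie in every U n
  have hAU : ∀ n, chi A ∈ U n := by
    intro n
    exact hg2 (a n) (m n) n (haI n) A (fun i hi => hAagree n i hi)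
  have hBU : ∀ n, chi B ∈ U n := by
    intro n
    have := hg2 (b (n + 1)) (m₁ n) n (hbI (n + 1)) B
    rw [← hms] at this
    exact this (fun i hi => hBagree n i hi)
  have hAI : A ∈ I := by
    have : chi A ∈ chi '' I := by rw [hUeq]; exact mem_iInter.2 hAU
    obtain ⟨A', hA', hchi⟩ := this
    rwa [chi_injective hchi] at hA'
  have hBI : B ∈ I := by
    have : chi B ∈ chi '' I := by rw [hUeq]; exact mem_iInter.2 hBU
    obtain ⟨B', hB', hchi⟩ := this
    rwa [chi_injective hchi] at hB'
  have hcover : A ∪ B = Set.univ := by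
    apply Set.eq_univ_of_forall
    intro i
    have hi : i ∈ a (i + 1) ∪ b (i + 1) := by
      rw [(inv (i + 1)).2.2]
      exact lt_of_lt_of_le (Nat.lt_succ_self i) (hmge (i + 1))
    rcases hi with h | h
    · exact Or.inl (Set.mem_iUnion.2 ⟨i + 1, h⟩)
    · exact Or.inr (Set.mem_iUnion.2 ⟨i + 1, h⟩)
  exact huniv (hcover ▸ hunion A B hAI hBI)
end

section
/- (Solecki) Let I be an ideal on ℕ containing all finite sets. Then I is an Fσ P-ideal if and only if there is a lower semicontinuous submeasure φ such that I = Exh(φ) = Fin(φ), where Fin(φ) = {A ⊆ ℕ : φ(A) < ∞} and Exh(φ) = {A ⊆ ℕ : lim_{n→∞} φ(A \ {0,1,…,n}) = 0}. -/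
open Set Filter Topology ENNReal

def IsFsigma {Y : Type*} [TopologicalSpace Y] (S : Set Y) : Prop :=
  ∃ F : ℕ → Set Y, (∀ n, IsClosed (F n)) ∧ S = ⋃ n, F n

def IsLSCSM (φ : Set ℕ → ℝ≥0∞) : Prop :=
  φ ∅ = 0 ∧ (∀ A B : Set ℕ, φ A ≤ φ (A ∪ B) ∧ φ (A ∪ B) ≤ φ A + φ B) ∧
    ∀ A : Set ℕ, Tendsto (fun n => φ (A ∩ {k | k ≤ n})) atTop (nhds (φ A))

def FinPhi (φ : Set ℕ → ℝ≥0∞) : Set (Set ℕ) := {A | φ A < ⊤}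

def ExhPhi (φ : Set ℕ → ℝ≥0∞) : Set (Set ℕ) :=
  {A | Tendsto (fun n => φ (A \ {k | k ≤ n})) atTop (nhds 0)}

def IsPIdeal (I : Set (Set ℕ)) : Prop :=
  ∀ E : ℕ → Set ℕ, (∀ n, E n ∈ I) → ∃ F ∈ I, ∀ n, (E n \ F).Finite


/-!
Backward direction: by lower semicontinuity the sets `{A | φ A ≤ m}` are closed, and given
`Eₙ ∈ Exh(φ)` one cuts from each `Eₙ` an initial segment so that the rest has submeasure at most
`2⁻ⁿ`; by countable subadditivity the union of the rests has finite submeasure, and it almost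
contains every `Eₙ`.

Forward direction, with `Set ℕ` carrying the Cantor topology. Call a closed hereditary family
`𝒞 ⊆ I` that contains a tail `A \ [0, m]` of every `A ∈ I` a tail base. The Baire category theorem
and the P-property give a tail base. A second Baire argument, on pairs of sets in the part of `𝒞`
whose initial segments remain extendable by tails of members of `I`, halves a tail base `𝒞`: it
yields a tail base `𝒟` with `𝒟 ∪ 𝒟 ⊆ 𝒞`. Iterating gives tail bases `𝒞 i` with
`𝒞 (i+1) ∪ 𝒞 (i+1) ⊆ 𝒞 i`, where `𝒞 0` can be taken to contain the singletons. Let `φ A` be the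
supremum, over the initial segments `F` of `A`, of the least cost of covering `F` by pieces
`B ∈ 𝒞 i`, a piece of level `i` costing `2⁻ⁱ`. Every `A ∈ I` has a tail in each `𝒞 i`, so
`A ∈ Exh(φ)`. Conversely, merging pieces pairwise, level by level, turns a cover of cost `c` into
at most `c + 1` members of `𝒞 0`; so if `φ A < ∞`, all initial segments of `A` lie in the closed
family of unions of `N` members of `𝒞 0`, hence so does `A`, and `A ∈ I`.
-/

namespace IsLSCSM

variable {φ : Set ℕ → ℝ≥0∞} (hφ : IsLSCSM φ)
include hφ

lemma mono {A B : Set ℕ} (h : A ⊆ B) : φ A ≤ φ B := by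
  simpa [union_eq_self_of_subset_left h] using (hφ.2.1 A B).1

lemma union_le (A B : Set ℕ) : φ (A ∪ B) ≤ φ A + φ B := (hφ.2.1 A B).2

lemma eq_iSup_inter_Iic (A : Set ℕ) : φ A = ⨆ n, φ (A ∩ Iic n) :=
  tendsto_nhds_unique (hφ.2.2 A) <| tendsto_atTop_iSup fun _ _ hmn =>
    hφ.mono (inter_subset_inter_right A (Iic_subset_Iic.2 hmn))

lemma biUnion_lt_le_sum (B : ℕ → Set ℕ) (r : ℕ) :
    φ (⋃ i < r, B i) ≤ ∑ i ∈ Finset.range r, φ (B i) := by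
  induction r with
  | zero => simpa using hφ.1.le
  | succ r ih =>
    rw [biUnion_lt_succ, Finset.sum_range_succ]
    exact (hφ.union_le _ _).trans (add_le_add_left ih _)

lemma iUnion_le_tsum (B : ℕ → Set ℕ) : φ (⋃ i, B i) ≤ ∑' i, φ (B i) := by
  rw [hφ.eq_iSup_inter_Iic]
  refine iSup_le fun n => ?_
  obtain ⟨J, hJ, hsub⟩ : ∃ J : Set ℕ, J.Finite ∧ (⋃ i, B i) ∩ Iic n ⊆ ⋃ i ∈ J, B i :=
    finite_subset_iUnion ((finite_Iic n).subset inter_subset_right) inter_subset_left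
  obtain ⟨r, hr⟩ := hJ.bddAbove
  have hcov : (⋃ i, B i) ∩ Iic n ⊆ ⋃ i < r + 1, B i := fun x hx => by
    obtain ⟨i, hi, hxi⟩ := mem_iUnion₂.1 (hsub hx)
    exact mem_iUnion₂.2 ⟨i, Nat.lt_succ_of_le (hr hi), hxi⟩
  calc φ ((⋃ i, B i) ∩ Iic n) ≤ φ (⋃ i < r + 1, B i) := hφ.mono hcov
    _ ≤ ∑ i ∈ Finset.range (r + 1), φ (B i) := hφ.biUnion_lt_le_sum B _
    _ ≤ ∑' i, φ (B i) := ENNReal.sum_le_tsum _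

lemma mem_finPhi_of_mem_exhPhi (hIic : ∀ n, φ (Iic n) ≠ ⊤) {A : Set ℕ} (hA : A ∈ ExhPhi φ) :
    A ∈ FinPhi φ := by
  obtain ⟨n, hn⟩ := ENNReal.tendsto_atTop_zero.1 hA 1 one_pos
  calc φ A = φ (A ∩ Iic n ∪ A \ Iic n) := by rw [inter_union_sdiff]
    _ ≤ φ (Iic n) + 1 :=
      (hφ.union_le _ _).trans (add_le_add (hφ.mono inter_subset_right) (hn n le_rfl))
    _ < ⊤ := ENNReal.add_lt_top.2 ⟨(hIic n).lt_top, one_lt_top⟩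

end IsLSCSM

namespace IsIdeal

variable {I : Set (Set ℕ)} (hI : IsIdeal I)
include hI

lemma mem_of_subset {A B : Set ℕ} (h : A ⊆ B) (hB : B ∈ I) : A ∈ I := hI.2.2.2 A B h hB

lemma union_mem {A B : Set ℕ} (hA : A ∈ I) (hB : B ∈ I) : A ∪ B ∈ I := hI.2.2.1 A B hA hB

end IsIdeal

lemma diff_Iic_subset_diff_Iic (A : Set ℕ) {m n : ℕ} (h : m ≤ n) : A \ Iic n ⊆ A \ Iic m :=
  fun _ hx => ⟨hx.1, fun hxm => hx.2 (hxm.trans h)⟩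

lemma diff_Iic_diff_Iic_of_le (A : Set ℕ) {k m : ℕ} (h : k ≤ m) :
    (A \ Iic m) \ Iic k = A \ Iic m := by
  ext x
  simp only [Set.mem_sdiff, mem_Iic, not_le]
  exact ⟨And.left, fun hx => ⟨hx, by omega⟩⟩

lemma union_inter_Iic_of_subset_Ioi (S : Set ℕ) {D : Set ℕ} {j K : ℕ} (hD : D ⊆ Ioi K)
    (hj : j ≤ K) : (S ∪ D) ∩ Iic j = S ∩ Iic j := by
  rw [union_inter_distrib_right, eq_empty_of_forall_notMem (s := D ∩ Iic j) fun x hx =>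
    (hD hx.1 : K < x).not_ge (hj.trans' hx.2), union_empty]

section CantorTopology

noncomputable instance : TopologicalSpace (Set ℕ) := .induced chi inferInstance

@[simp] lemma chi_eq_true {A : Set ℕ} {n : ℕ} : chi A n = true ↔ n ∈ A := by
  simp [chi]

noncomputable def chiHomeomorph : Set ℕ ≃ₜ (ℕ → Bool) where
  toFun := chi
  invFun f := {n | f n = true}
  left_inv A := by ext n; simp
  right_inv f := by funext n; cases h : f n <;> simp [← Bool.not_eq_true, h]
  continuous_toFun := continuous_induced_dom
  continuous_invFun := continuous_induced_rng.2 <| by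
    refine continuous_pi fun n => ?_
    convert continuous_apply n using 1
    funext f; cases h : f n <;> simp [← Bool.not_eq_true, h]

instance : CompactSpace (Set ℕ) := chiHomeomorph.symm.compactSpace

instance : T2Space (Set ℕ) := chiHomeomorph.symm.t2Space

lemma continuous_iff_isClopen_setOf_mem {X : Type*} [TopologicalSpace X] {f : X → Set ℕ} :
    Continuous f ↔ ∀ n, IsClopen {x | n ∈ f x} := by
  simp only [continuous_induced_rng, continuous_pi_iff, continuous_bool_rng true]
  simp [Set.preimage]

lemma isClopen_setOf_mem (n : ℕ) : IsClopen {A : Set ℕ | n ∈ A} :=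
  continuous_iff_isClopen_setOf_mem.1 continuous_id n

lemma continuous_union : Continuous fun p : Set ℕ × Set ℕ => p.1 ∪ p.2 :=
  continuous_iff_isClopen_setOf_mem.2 fun n =>
    ((isClopen_setOf_mem n).preimage continuous_fst).union
      ((isClopen_setOf_mem n).preimage continuous_snd)

lemma continuous_inter : Continuous fun p : Set ℕ × Set ℕ => p.1 ∩ p.2 :=
  continuous_iff_isClopen_setOf_mem.2 fun n =>
    ((isClopen_setOf_mem n).preimage continuous_fst).inter
      ((isClopen_setOf_mem n).preimage continuous_snd)

lemma continuous_diff_Iic (m : ℕ) : Continuous fun A : Set ℕ => A \ Iic m :=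
  continuous_iff_isClopen_setOf_mem.2 fun n => by
    by_cases hn : n ≤ m
    · simpa [hn] using isClopen_empty
    · simpa [hn] using isClopen_setOf_mem n

lemma isClosed_setOf_subset (B : Set ℕ) : IsClosed {A : Set ℕ | A ⊆ B} := by
  have : {A : Set ℕ | A ⊆ B} = ⋂ n ∈ Bᶜ, {A | n ∈ A}ᶜ := by
    ext A; simp [subset_def, not_imp_not]
  rw [this]
  exact isClosed_biInter fun n _ => (isClopen_setOf_mem n).compl.isClosed

lemma isClosed_setOf_subsingleton : IsClosed {S : Set ℕ | S.Subsingleton} := by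
  have : {S : Set ℕ | S.Subsingleton} = ⋂ (a) (b) (_ : a ≠ b), ({S | a ∈ S} ∩ {S | b ∈ S})ᶜ := by
    ext S
    simp only [Set.Subsingleton, mem_iInter, mem_compl_iff, mem_inter_iff]
    exact ⟨fun h a b hab hS => hab (h hS.1 hS.2),
      fun h a ha b hb => by_contra fun hab => h a b hab ⟨ha, hb⟩⟩
  rw [this]
  exact isClosed_iInter fun a => isClosed_iInter fun b => isClosed_iInter fun _ =>
    ((isClopen_setOf_mem a).inter (isClopen_setOf_mem b)).compl.isClosed

lemma isClosed_lowerClosure_of_isClosed {𝒜 : Set (Set ℕ)} (h : IsClosed 𝒜) :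
    IsClosed (lowerClosure 𝒜 : Set (Set ℕ)) := by
  have : (lowerClosure 𝒜 : Set (Set ℕ)) = (fun p : Set ℕ × Set ℕ => p.1 ∩ p.2) '' (𝒜 ×ˢ univ) := by
    ext A
    refine ⟨fun ⟨B, hB, hAB⟩ => ⟨(B, A), ⟨hB, trivial⟩, inter_eq_right.2 hAB⟩, ?_⟩
    rintro ⟨⟨B, C⟩, ⟨hB, -⟩, rfl⟩
    exact ⟨B, hB, inter_subset_left⟩
  rw [this]
  exact ((h.isCompact.prod isCompact_univ).image continuous_inter).isClosed

lemma isClopen_setOf_inter_Iic_eq (A : Set ℕ) (k : ℕ) :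
    IsClopen {B : Set ℕ | B ∩ Iic k = A ∩ Iic k} := by
  have : {B : Set ℕ | B ∩ Iic k = A ∩ Iic k} =
      ⋂ i ∈ Finset.range (k + 1), {B | i ∈ B ↔ i ∈ A} := by
    ext B
    simp only [mem_iInter, Finset.mem_range, Set.ext_iff, mem_inter_iff, mem_Iic, Nat.lt_succ_iff]
    refine ⟨fun h i hi => by simpa [hi] using h i, fun h i => ?_⟩
    by_cases hi : i ≤ k
    · simpa [hi] using h i hi
    · simp [hi]
  rw [this]
  refine isClopen_biInter_finset fun i _ => ?_
  by_cases hi : i ∈ A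
  · simpa [hi] using isClopen_setOf_mem i
  · simp only [hi, iff_false]
    exact (isClopen_setOf_mem i).compl

lemma nhds_hasBasis_inter_Iic (A : Set ℕ) :
    (𝓝 A).HasBasis (fun _ => True) fun k => {B : Set ℕ | B ∩ Iic k = A ∩ Iic k} := by
  refine ⟨fun 𝒰 => ⟨fun h => ?_, fun ⟨k, _, hk⟩ =>
    Filter.mem_of_superset ((isClopen_setOf_inter_Iic_eq A k).isOpen.mem_nhds rfl) hk⟩⟩
  obtain ⟨V, hV, hVU⟩ := mem_comap.1 (nhds_induced chi A ▸ h)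
  obtain ⟨J, t, hJ, hJV⟩ :=
    isOpen_pi_iff.1 isOpen_interior (chi A) (mem_interior_iff_mem_nhds.2 hV)
  refine ⟨J.sup id, trivial, fun B hB =>
    hVU (show chi B ∈ V from interior_subset (hJV (show chi B ∈ _ from fun i hi => ?_)))⟩
  have hiB : i ∈ B ↔ i ∈ A := by
    simpa [show i ≤ J.sup id from Finset.le_sup (f := id) hi] using congrArg (i ∈ ·) hB
  by_cases hA : i ∈ A <;> simpa [chi, hA, hiB] using (hJ i hi).2

lemma antitone_setOf_inter_Iic_eq (A : Set ℕ) :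
    Antitone fun k => {B : Set ℕ | B ∩ Iic k = A ∩ Iic k} := fun j k hjk B (hB : _ = _) => by
  show B ∩ Iic j = A ∩ Iic j
  simpa only [inter_assoc, Iic_inter_Iic, min_eq_right hjk] using congrArg (· ∩ Iic j) hB

lemma tendsto_inter_Iic (A : Set ℕ) : Tendsto (fun n => A ∩ Iic n) atTop (𝓝 A) :=
  (nhds_hasBasis_inter_Iic A).tendsto_right_iff.2 fun k _ =>
    (eventually_ge_atTop k).mono fun n hn =>
      show A ∩ Iic n ∩ Iic k = A ∩ Iic k by rw [inter_assoc, Iic_inter_Iic, min_eq_right hn]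

lemma isClopen_setOf_inter_Iic_mem (𝒮 : Set (Set ℕ)) (k : ℕ) :
    IsClopen {A : Set ℕ | A ∩ Iic k ∈ 𝒮} := by
  have key : ∀ 𝒮 : Set (Set ℕ), IsOpen {A : Set ℕ | A ∩ Iic k ∈ 𝒮} := fun 𝒮 =>
    isOpen_iff_mem_nhds.2 fun A hA => mem_of_superset
      ((nhds_hasBasis_inter_Iic A).mem_of_mem (i := k) trivial) fun B (hB : _ = _) =>
        show B ∩ Iic k ∈ 𝒮 by rwa [hB]
  refine ⟨?_, key 𝒮⟩
  convert (key 𝒮ᶜ).isClosed_compl using 1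
  ext A; simp

lemma isFsigma_chi_image_iff {𝒮 : Set (Set ℕ)} :
    IsFsigma (chi '' 𝒮) ↔ ∃ F : ℕ → Set (Set ℕ), (∀ n, IsClosed (F n)) ∧ 𝒮 = ⋃ n, F n := by
  constructor
  · rintro ⟨F, hF, h𝒮⟩
    refine ⟨fun n => chi ⁻¹' F n, fun n => (hF n).preimage chiHomeomorph.continuous, ?_⟩
    rw [← preimage_iUnion, ← h𝒮]
    exact (chiHomeomorph.injective.preimage_image 𝒮).symm
  · rintro ⟨F, hF, rfl⟩
    exact ⟨fun n => chi '' F n, fun n => chiHomeomorph.isClosedMap _ (hF n), image_iUnion⟩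

end CantorTopology

theorem IsClosed.exists_mem_nhdsWithin_of_subset_iUnion {X : Type*} [TopologicalSpace X]
    [CompactSpace X] [T2Space X] {T : Set X} (hT : IsClosed T) (hne : T.Nonempty)
    {H : ℕ → Set X} (hH : ∀ m, IsClosed (H m)) (hcov : T ⊆ ⋃ m, H m) :
    ∃ m, ∃ x ∈ T, H m ∈ 𝓝[T] x := by
  have := isCompact_iff_compactSpace.1 hT.isCompact
  have := hne.to_subtype
  obtain ⟨m, x, hx⟩ := nonempty_interior_of_iUnion_of_closed
    (f := fun m => ((↑) : T → X) ⁻¹' H m) (fun m => (hH m).preimage continuous_subtype_val)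
    (eq_univ_of_forall fun x => by simpa using hcov x.2)
  exact ⟨m, x, x.2, mem_of_superset (mem_nhds_subtype_iff_nhdsWithin.1
    (mem_interior_iff_mem_nhds.1 hx)) (image_preimage_subset _ _)⟩

namespace IsLSCSM

variable {φ : Set ℕ → ℝ≥0∞} (hφ : IsLSCSM φ)
include hφ

theorem isFsigma_chi_image_finPhi : IsFsigma (chi '' FinPhi φ) := by
  refine isFsigma_chi_image_iff.2 ⟨fun m : ℕ => {A | φ A ≤ m}, fun m => ?_, ?_⟩
  · have : {A | φ A ≤ m} = ⋂ n, {A | A ∩ Iic n ∈ {S | φ S ≤ m}} := by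
      ext A
      simp [hφ.eq_iSup_inter_Iic A]
    change IsClosed {A | φ A ≤ m}
    rw [this]
    exact isClosed_iInter fun n => (isClopen_setOf_inter_Iic_mem _ n).isClosed
  · ext A
    simp only [FinPhi, mem_iUnion]
    exact ⟨fun h => (ENNReal.exists_nat_gt h.ne).imp fun _ => le_of_lt,
      fun ⟨m, hm⟩ => hm.trans_lt (natCast_lt_top m)⟩

theorem isPIdeal_finPhi (h : ExhPhi φ = FinPhi φ) : IsPIdeal (FinPhi φ) := by
  intro E hE
  rw [← h] at hE
  have : ∀ n, ∃ k, φ (E n \ Iic k) ≤ 2⁻¹ ^ n := fun n =>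
    (ENNReal.tendsto_atTop_zero.1 (hE n) _ (ENNReal.pow_pos (by simp) n)).imp
      fun k hk => hk k le_rfl
  choose k hk using this
  refine ⟨⋃ n, E n \ Iic (k n), ?_, fun n => (finite_Iic (k n)).subset fun x hx => ?_⟩
  · calc φ (⋃ n, E n \ Iic (k n)) ≤ ∑' n, φ (E n \ Iic (k n)) := hφ.iUnion_le_tsum _
      _ ≤ ∑' n, (2⁻¹ : ℝ≥0∞) ^ n := ENNReal.tsum_le_tsum hk
      _ < ⊤ := by
        rw [ENNReal.tsum_geometric, ENNReal.one_sub_inv_two, inv_inv]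
        exact ofNat_lt_top
  · by_contra hxk
    exact hx.2 (mem_iUnion.2 ⟨n, hx.1, hxk⟩)

end IsLSCSM

structure IsTailBase (I 𝒞 : Set (Set ℕ)) : Prop where
  isClosed : IsClosed 𝒞
  isLowerSet : IsLowerSet 𝒞
  subset : 𝒞 ⊆ I
  exists_diff_Iic_mem : ∀ A ∈ I, ∃ m, A \ Iic m ∈ 𝒞

def Extendable (I 𝒞 : Set (Set ℕ)) (S : Set ℕ) : Prop := ∀ A ∈ I, ∃ m, S ∪ A \ Iic m ∈ 𝒞

def extendablePart (I 𝒞 : Set (Set ℕ)) : Set (Set ℕ) := {A | ∀ k, Extendable I 𝒞 (A ∩ Iic k)}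

section TailBase

variable {I : Set (Set ℕ)}

lemma exists_diff_Iic_mem_lowerClosure (hI : IsIdeal I) {F : ℕ → Set (Set ℕ)}
    (hF : ∀ n, IsClosed (F n)) (hIF : I = ⋃ n, F n) {A : Set ℕ} (hA : A ∈ I) :
    ∃ n k, ∀ B ⊆ A, B \ Iic k ∈ lowerClosure (F n) := by
  obtain ⟨n, B₀, hB₀, hnhds⟩ := (isClosed_setOf_subset A).exists_mem_nhdsWithin_of_subset_iUnion
    ⟨∅, empty_subset A⟩ hF fun B hB => hIF ▸ hI.mem_of_subset hB hA
  obtain ⟨k, -, hk⟩ := ((nhds_hasBasis_inter_Iic B₀).inf_principal _).mem_iff.1 hnhds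
  refine ⟨n, k, fun B hB => mem_lowerClosure.2 ⟨B₀ ∩ Iic k ∪ B \ Iic k, hk ⟨?_, ?_⟩, ?_⟩⟩
  · show (B₀ ∩ Iic k ∪ B \ Iic k) ∩ Iic k = B₀ ∩ Iic k
    ext x
    simp only [mem_inter_iff, mem_union, Set.mem_sdiff, mem_Iic]
    tauto
  · exact union_subset (inter_subset_left.trans hB₀) (sdiff_subset.trans hB)
  · exact subset_union_right

lemma exists_isTailBase (hI : IsIdeal I) (hP : IsPIdeal I) {F : ℕ → Set (Set ℕ)}
    (hF : ∀ n, IsClosed (F n)) (hIF : I = ⋃ n, F n) : ∃ 𝒞, IsTailBase I 𝒞 := by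
  suffices ∃ M, ∀ A ∈ I, ∃ m, A \ Iic m ∈ lowerClosure (F M) by
    obtain ⟨M, hM⟩ := this
    exact ⟨_, isClosed_lowerClosure_of_isClosed (hF M), (lowerClosure _).lower,
      fun A ⟨B, hB, hAB⟩ => hI.mem_of_subset hAB (hIF ▸ mem_iUnion_of_mem M hB), hM⟩
  by_contra! hbad
  choose A hAI hA using hbad
  obtain ⟨Z, hZI, hAZ⟩ := hP A hAI
  obtain ⟨n, k, hk⟩ := exists_diff_Iic_mem_lowerClosure hI hF hIF hZI
  obtain ⟨b, hb⟩ := (hAZ n).bddAbove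
  have hsub : A n \ Iic (max k b) ⊆ Z := fun x hx =>
    by_contra fun hxZ => hx.2 (le_max_of_le_right (hb ⟨hx.1, hxZ⟩))
  exact hA n (max k b) (diff_Iic_diff_Iic_of_le _ (le_max_left k b) ▸ hk _ hsub)

namespace Extendable

variable {𝒞 : Set (Set ℕ)} {S T : Set ℕ}

lemma mono (h𝒞 : IsLowerSet 𝒞) (hS : Extendable I 𝒞 S) (hTS : T ⊆ S) : Extendable I 𝒞 T :=
  fun A hA => (hS A hA).imp fun _ hm => h𝒞 (union_subset_union_left _ hTS) hm

lemma mem (hI : IsIdeal I) (hS : Extendable I 𝒞 S) : S ∈ 𝒞 := by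
  simpa using (hS ∅ hI.1).choose_spec

lemma mem_extendablePart (h𝒞 : IsLowerSet 𝒞) (hS : Extendable I 𝒞 S) :
    S ∈ extendablePart I 𝒞 :=
  fun _ => hS.mono h𝒞 inter_subset_left

lemma exists_union_diff_Iic (hI : IsIdeal I) (hP : IsPIdeal I) (h𝒞 : IsLowerSet 𝒞)
    (hS : Extendable I 𝒞 S) {A : Set ℕ} (hA : A ∈ I) : ∃ m, Extendable I 𝒞 (S ∪ A \ Iic m) := by
  by_contra! hbad
  simp only [Extendable, not_forall, not_exists] at hbad
  choose G hGI hG using hbad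
  obtain ⟨Z, hZI, hGZ⟩ := hP G hGI
  obtain ⟨m, hm⟩ := hS _ (hI.union_mem hA hZI)
  obtain ⟨b, hb⟩ := (hGZ m).bddAbove
  refine hG m (max m b) (h𝒞 (fun x hx => ?_) hm)
  simp only [mem_union, Set.mem_sdiff, mem_Iic, not_le] at hx ⊢
  rcases hx with (hxS | ⟨hxA, hmx⟩) | ⟨hxG, hx⟩
  · exact .inl hxS
  · exact .inr ⟨.inl hxA, hmx⟩
  · refine .inr ⟨.inr ?_, (le_max_left m b).trans_lt hx⟩
    by_contra hxZ
    exact (hb ⟨hxG, hxZ⟩).not_gt ((le_max_right m b).trans_lt hx)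

end Extendable

namespace IsTailBase

variable {𝒞 : Set (Set ℕ)} (h𝒞 : IsTailBase I 𝒞)
include h𝒞

lemma empty_mem (hI : ∅ ∈ I) : ∅ ∈ 𝒞 := by
  simpa using (h𝒞.exists_diff_Iic_mem ∅ hI).choose_spec

lemma union {𝒮 : Set (Set ℕ)} (h𝒮 : IsClosed 𝒮) (h𝒮' : IsLowerSet 𝒮) (h𝒮I : 𝒮 ⊆ I) :
    IsTailBase I (𝒞 ∪ 𝒮) :=
  ⟨h𝒞.isClosed.union h𝒮, h𝒞.isLowerSet.union h𝒮', union_subset h𝒞.subset h𝒮I,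
    fun A hA => (h𝒞.exists_diff_Iic_mem A hA).imp fun _ h => .inl h⟩

lemma extendable_empty : Extendable I 𝒞 ∅ := fun A hA => by
  simpa using h𝒞.exists_diff_Iic_mem A hA

lemma extendablePart_subset (hI : IsIdeal I) : extendablePart I 𝒞 ⊆ 𝒞 := fun A hA =>
  h𝒞.isClosed.mem_of_tendsto (tendsto_inter_Iic A) (Eventually.of_forall fun k => (hA k).mem hI)

lemma isTailBase_extendablePart (hI : IsIdeal I) (hP : IsPIdeal I) :
    IsTailBase I (extendablePart I 𝒞) where
  isClosed := by
    rw [extendablePart, ofPred_forall]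
    exact isClosed_iInter fun k =>
      (isClopen_setOf_inter_Iic_mem {S | Extendable I 𝒞 S} k).isClosed
  isLowerSet _ _ hBA hA k := (hA k).mono h𝒞.isLowerSet (inter_subset_inter_left _ hBA)
  subset := (h𝒞.extendablePart_subset hI).trans h𝒞.subset
  exists_diff_Iic_mem A hA :=
    (h𝒞.extendable_empty.exists_union_diff_Iic hI hP h𝒞.isLowerSet hA).imp fun _ hm => by
      simpa using hm.mem_extendablePart h𝒞.isLowerSet

lemma isTailBase_setOf_union_mem_extendablePart (hI : IsIdeal I) (hP : IsPIdeal I)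
    {S T : Set ℕ} (hS : Extendable I 𝒞 S) (hT : Extendable I 𝒞 T) (K : ℕ) :
    IsTailBase I {D | D ⊆ Ioi K ∧ S ∪ D ∈ extendablePart I 𝒞 ∧ T ∪ D ∈ extendablePart I 𝒞} := by
  have hℰ := h𝒞.isTailBase_extendablePart hI hP
  have hunion : ∀ S : Set ℕ, Continuous (S ∪ ·) := fun S =>
    continuous_union.comp (continuous_const.prodMk continuous_id)
  refine ⟨(isClosed_setOf_subset _).inter ((hℰ.isClosed.preimage (hunion S)).inter
      (hℰ.isClosed.preimage (hunion T))), ?_, ?_, fun A hA => ?_⟩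
  · rintro D E hED ⟨hD, hSD, hTD⟩
    exact ⟨hED.trans hD, hℰ.isLowerSet (union_subset_union_right _ hED) hSD,
      hℰ.isLowerSet (union_subset_union_right _ hED) hTD⟩
  · rintro D ⟨-, hSD, -⟩
    exact hℰ.subset (hℰ.isLowerSet subset_union_right hSD)
  obtain ⟨m₁, h₁⟩ := hS.exists_union_diff_Iic hI hP h𝒞.isLowerSet hA
  obtain ⟨m₂, h₂⟩ := hT.exists_union_diff_Iic hI hP h𝒞.isLowerSet hA
  have key : ∀ {U : Set ℕ} {m : ℕ}, Extendable I 𝒞 (U ∪ A \ Iic m) → m ≤ max (max m₁ m₂) K →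
      U ∪ A \ Iic (max (max m₁ m₂) K) ∈ extendablePart I 𝒞 := fun hU hm =>
    (hU.mono h𝒞.isLowerSet (union_subset_union_right _ (diff_Iic_subset_diff_Iic A hm))
      ).mem_extendablePart h𝒞.isLowerSet
  exact ⟨max (max m₁ m₂) K, fun x hx => (le_max_right _ K).trans_lt (not_le.1 hx.2),
    key h₁ ((le_max_left _ _).trans (le_max_left _ _)),
    key h₂ ((le_max_right _ _).trans (le_max_left _ _))⟩

/-- Baire category on `ℰ × ℰ`, for `ℰ` the extendable part of `𝒞`, yields `X, Y ∈ ℰ`, `k` and `m₀`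
such that `(A ∪ B) \ Iic m₀ ∈ 𝒞` whenever `A, B ∈ ℰ` agree with `X, Y` up to `k`. Sets above
`max k m₀` whose unions with both beginnings `X ∩ Iic k`, `Y ∩ Iic k` stay in `ℰ` then pair
into `𝒞`. -/
theorem exists_isTailBase_union_mem (hI : IsIdeal I) (hP : IsPIdeal I) :
    ∃ 𝒟, IsTailBase I 𝒟 ∧ ∀ A ∈ 𝒟, ∀ B ∈ 𝒟, A ∪ B ∈ 𝒞 := by
  set ℰ := extendablePart I 𝒞
  have hℰ : IsTailBase I ℰ := h𝒞.isTailBase_extendablePart hI hP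
  have hℰ₀ : ∅ ∈ ℰ := h𝒞.extendable_empty.mem_extendablePart h𝒞.isLowerSet
  obtain ⟨m₀, ⟨X, Y⟩, ⟨hX, hY⟩, hnhds⟩ :=
    (hℰ.isClosed.prod hℰ.isClosed).exists_mem_nhdsWithin_of_subset_iUnion ⟨(∅, ∅), hℰ₀, hℰ₀⟩
      (H := fun m => {p : Set ℕ × Set ℕ | (p.1 ∪ p.2) \ Iic m ∈ 𝒞})
      (fun m => h𝒞.isClosed.preimage ((continuous_diff_Iic m).comp continuous_union))
      fun p hp => mem_iUnion.2 (h𝒞.exists_diff_Iic_mem _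
        (hI.union_mem (hℰ.subset hp.1) (hℰ.subset hp.2)))
  rw [nhdsWithin_prod_eq] at hnhds
  have hanti : ∀ Z : Set ℕ, AntitoneOn (fun k => {A | A ∩ Iic k = Z ∩ Iic k} ∩ ℰ) {_k | True} :=
    fun Z => Antitone.antitoneOn
      (fun _ _ h => inter_subset_inter_left ℰ (antitone_setOf_inter_Iic_eq Z h)) _
  obtain ⟨k, -, hk⟩ := (((nhds_hasBasis_inter_Iic X).inf_principal ℰ).prod_same_index_anti
    ((nhds_hasBasis_inter_Iic Y).inf_principal ℰ) (hanti X) (hanti Y)).mem_iff.1 hnhds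
  refine ⟨_, h𝒞.isTailBase_setOf_union_mem_extendablePart hI hP (hX k) (hY k) (max k m₀), ?_⟩
  rintro D ⟨hD, hXD, -⟩ E ⟨hE, -, hYE⟩
  have hXk := union_inter_Iic_of_subset_Ioi (X ∩ Iic k) hD (le_max_left k m₀)
  have hYk := union_inter_Iic_of_subset_Ioi (Y ∩ Iic k) hE (le_max_left k m₀)
  rw [inter_assoc, inter_self] at hXk hYk
  refine h𝒞.isLowerSet (fun x hx => ?_) (@hk (_, _) ⟨⟨hXk, hXD⟩, ⟨hYk, hYE⟩⟩)
  have hm₀x : m₀ < x := (le_max_right k m₀).trans_lt (hx.elim (@hD x) (@hE x))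
  exact ⟨hx.elim (fun h => .inl (.inr h)) (fun h => .inr (.inr h)), hm₀x.not_ge⟩

end IsTailBase

theorem exists_tower (hI : IsIdeal I) (hP : IsPIdeal I) {𝒞₀ : Set (Set ℕ)}
    (h𝒞₀ : IsTailBase I 𝒞₀) : ∃ 𝒞 : ℕ → Set (Set ℕ), 𝒞 0 = 𝒞₀ ∧ (∀ i, IsTailBase I (𝒞 i)) ∧
      ∀ i, ∀ A ∈ 𝒞 (i + 1), ∀ B ∈ 𝒞 (i + 1), A ∪ B ∈ 𝒞 i := by
  choose! half hhalf using fun 𝒞 (h : IsTailBase I 𝒞) => h.exists_isTailBase_union_mem hI hP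
  have hgood : ∀ i, IsTailBase I (half^[i] 𝒞₀) := by
    intro i
    induction i with
    | zero => exact h𝒞₀
    | succ i ih => exact Function.iterate_succ_apply' half i 𝒞₀ ▸ (hhalf _ ih).1
  exact ⟨fun i => half^[i] 𝒞₀, rfl, hgood,
    fun i => by simpa only [Function.iterate_succ_apply'] using (hhalf _ (hgood i)).2⟩

end TailBase

section TowerSubmeasure

variable (𝒞 : ℕ → Set (Set ℕ))

def PiecesIn (L : List (ℕ × Set ℕ)) : Prop := ∀ p ∈ L, p.2 ∈ 𝒞 p.1

noncomputable def piecesCost (L : List (ℕ × Set ℕ)) : ℝ≥0∞ :=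
  (L.map fun p => (2⁻¹ : ℝ≥0∞) ^ p.1).sum

noncomputable def coverWeight (F : Set ℕ) : ℝ≥0∞ :=
  ⨅ (L : List (ℕ × Set ℕ)) (_ : PiecesIn 𝒞 L) (_ : F ⊆ ⋃ p ∈ L, p.2), piecesCost L

noncomputable def towerSubmeasure (A : Set ℕ) : ℝ≥0∞ := ⨆ n, coverWeight 𝒞 (A ∩ Iic n)

variable {𝒞}

lemma piecesCost_append (L₁ L₂ : List (ℕ × Set ℕ)) :
    piecesCost (L₁ ++ L₂) = piecesCost L₁ + piecesCost L₂ := by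
  simp [piecesCost]

lemma piecesCost_of_forall_eq {L : List (ℕ × Set ℕ)} {i : ℕ} (h : ∀ p ∈ L, p.1 = i) :
    piecesCost L = L.length * 2⁻¹ ^ i := by
  rw [piecesCost, List.map_congr_left fun p hp => by rw [h p hp], List.map_const',
    List.sum_replicate, nsmul_eq_mul]

lemma PiecesIn.append {L₁ L₂ : List (ℕ × Set ℕ)} (h₁ : PiecesIn 𝒞 L₁) (h₂ : PiecesIn 𝒞 L₂) :
    PiecesIn 𝒞 (L₁ ++ L₂) := fun p hp => (List.mem_append.1 hp).elim (h₁ p) (h₂ p)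

lemma biUnion_append (L₁ L₂ : List (ℕ × Set ℕ)) :
    ⋃ p ∈ L₁ ++ L₂, p.2 = (⋃ p ∈ L₁, p.2) ∪ ⋃ p ∈ L₂, p.2 := by
  simp [List.mem_append, iUnion_or, iUnion_union_distrib]

lemma coverWeight_le {L : List (ℕ × Set ℕ)} (hL : PiecesIn 𝒞 L) {F : Set ℕ}
    (hF : F ⊆ ⋃ p ∈ L, p.2) : coverWeight 𝒞 F ≤ piecesCost L :=
  iInf_le_of_le L <| iInf_le_of_le hL <| iInf_le _ hF

lemma coverWeight_mono {F G : Set ℕ} (h : F ⊆ G) : coverWeight 𝒞 F ≤ coverWeight 𝒞 G :=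
  le_iInf fun _ => le_iInf fun hL => le_iInf fun hG => coverWeight_le hL (h.trans hG)

lemma coverWeight_union_le (F G : Set ℕ) :
    coverWeight 𝒞 (F ∪ G) ≤ coverWeight 𝒞 F + coverWeight 𝒞 G :=
  ENNReal.le_iInf_add_iInf fun L₁ L₂ => ENNReal.le_iInf_add_iInf fun h₁ h₂ =>
    ENNReal.le_iInf_add_iInf fun hF hG => by
      rw [← piecesCost_append]
      exact coverWeight_le (h₁.append h₂) (biUnion_append L₁ L₂ ▸ union_subset_union hF hG)

lemma coverWeight_Iic_le (h𝒞 : ∀ n, {n} ∈ 𝒞 0) (n : ℕ) : coverWeight 𝒞 (Iic n) ≤ n + 1 := by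
  simpa [piecesCost, Function.comp_def] using
    coverWeight_le (L := (List.range (n + 1)).map fun j => (0, {j}))
      (by simpa [PiecesIn] using fun j _ => h𝒞 j) fun j hj => by simpa using Nat.lt_succ_of_le hj

lemma towerSubmeasure_inter_Iic (A : Set ℕ) (n : ℕ) :
    towerSubmeasure 𝒞 (A ∩ Iic n) = coverWeight 𝒞 (A ∩ Iic n) :=
  le_antisymm (iSup_le fun _ => coverWeight_mono inter_subset_left)
    (le_iSup_of_le n (by rw [inter_assoc, inter_self]))

lemma towerSubmeasure_mono : Monotone (towerSubmeasure 𝒞) := fun _ _ h =>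
  iSup_mono fun _ => coverWeight_mono (inter_subset_inter_left _ h)

lemma isLSCSM_towerSubmeasure : IsLSCSM (towerSubmeasure 𝒞) := by
  refine ⟨?_, fun A B => ⟨towerSubmeasure_mono subset_union_left, ?_⟩, fun A => ?_⟩
  · refine nonpos_iff_eq_zero.1 (iSup_le fun _ => ?_)
    simpa [piecesCost] using coverWeight_le (𝒞 := 𝒞) (L := []) (by simp [PiecesIn]) (by simp)
  · refine iSup_le fun n => ?_
    rw [union_inter_distrib_right]
    exact (coverWeight_union_le _ _).trans
      (add_le_add (le_iSup (fun n => coverWeight 𝒞 (A ∩ Iic n)) n)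
        (le_iSup (fun n => coverWeight 𝒞 (B ∩ Iic n)) n))
  · change Tendsto (fun n => towerSubmeasure 𝒞 (A ∩ Iic n)) atTop _
    simp_rw [towerSubmeasure_inter_Iic]
    exact tendsto_atTop_iSup fun m n h =>
      coverWeight_mono (inter_subset_inter_right _ (Iic_subset_Iic.2 h))

lemma towerSubmeasure_le_of_subset_mem {i : ℕ} {A B : Set ℕ} (hB : B ∈ 𝒞 i) (hAB : A ⊆ B) :
    towerSubmeasure 𝒞 A ≤ 2⁻¹ ^ i :=
  iSup_le fun _ => by
    simpa [piecesCost] using coverWeight_le (𝒞 := 𝒞) (L := [(i, B)]) (by simpa [PiecesIn])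
      (by simpa using inter_subset_left.trans hAB)

lemma towerSubmeasure_Iic_ne_top (h𝒞 : ∀ n, {n} ∈ 𝒞 0) (n : ℕ) :
    towerSubmeasure 𝒞 (Iic n) ≠ ⊤ :=
  ne_top_of_le_ne_top (ENNReal.add_ne_top.2 ⟨natCast_ne_top n, one_ne_top⟩) <|
    iSup_le fun _ => (coverWeight_mono inter_subset_left).trans (coverWeight_Iic_le h𝒞 n)

lemma exists_pairing {𝒜 ℬ : Set (Set ℕ)} (h : ∀ A ∈ 𝒜, ∀ B ∈ 𝒜, A ∪ B ∈ ℬ) :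
    ∀ M : List (Set ℕ), (∀ A ∈ M, A ∈ 𝒜) → ∃ M' : List (Set ℕ), (∀ B ∈ M', B ∈ ℬ) ∧
      (⋃ A ∈ M, A) ⊆ (⋃ B ∈ M', B) ∧ 2 * M'.length ≤ M.length + 1
  | [], _ => ⟨[], by simp⟩
  | [A], hM => ⟨[A ∪ A], by simpa using h A (hM A (by simp)) A (hM A (by simp)), by simp, by simp⟩
  | A :: B :: M, hM => by
    obtain ⟨M', hM'ℬ, hMM', hlen⟩ := exists_pairing h M fun C hC => hM C (by simp [hC])
    refine ⟨(A ∪ B) :: M', ?_, ?_, ?_⟩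
    · simpa using ⟨h A (hM A (by simp)) B (hM B (by simp)), hM'ℬ⟩
    · simpa only [List.mem_cons, iUnion_iUnion_eq_or_left, union_assoc] using
        union_subset_union_right _ (union_subset_union_right _ hMM')
    · simp only [List.length_cons]
      omega

lemma two_inv_pow_eq_add (d : ℕ) : (2⁻¹ : ℝ≥0∞) ^ d = 2⁻¹ ^ (d + 1) + 2⁻¹ ^ (d + 1) := by
  rw [← two_mul, pow_succ, mul_comm, mul_assoc, ENNReal.inv_mul_cancel two_ne_zero ofNat_ne_top,
    mul_one]

namespace PiecesIn

variable (hpair : ∀ i, ∀ A ∈ 𝒞 (i + 1), ∀ B ∈ 𝒞 (i + 1), A ∪ B ∈ 𝒞 i)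
include hpair

/-- The pieces of the deepest level `d + 1` are merged in pairs into pieces of level `d`; the one
piece possibly left unpaired costs the extra `2⁻¹ ^ (d + 1)`. -/
lemma exists_levels_le {d : ℕ} {L : List (ℕ × Set ℕ)} (hL : PiecesIn 𝒞 L)
    (hd : ∀ p ∈ L, p.1 ≤ d + 1) : ∃ L', PiecesIn 𝒞 L' ∧ (∀ p ∈ L', p.1 ≤ d) ∧
      (⋃ p ∈ L, p.2) ⊆ (⋃ p ∈ L', p.2) ∧ piecesCost L' ≤ piecesCost L + 2⁻¹ ^ (d + 1) := by
  set top := L.filter fun p => p.1 = d + 1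
  set rest := L.filter fun p => !decide (p.1 = d + 1)
  obtain ⟨M, hM, htopM, hlen⟩ := exists_pairing (hpair d) (top.map Prod.snd) fun B hB => by
    obtain ⟨p, hp, rfl⟩ := List.mem_map.1 hB
    obtain ⟨hpL, hpd⟩ := List.mem_filter.1 hp
    simpa [of_decide_eq_true hpd] using hL p hpL
  refine ⟨rest ++ M.map (d, ·), ?_, ?_, ?_, ?_⟩
  · refine fun p hp => (List.mem_append.1 hp).elim (fun h => hL p (List.mem_filter.1 h).1) ?_
    rintro h
    obtain ⟨B, hB, rfl⟩ := List.mem_map.1 h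
    exact hM B hB
  · intro p hp
    rcases List.mem_append.1 hp with h | h
    · obtain ⟨hpL, hpd⟩ := List.mem_filter.1 h
      have := hd p hpL
      simp only [Bool.not_eq_true', decide_eq_false_iff_not] at hpd
      omega
    · obtain ⟨B, -, rfl⟩ := List.mem_map.1 h
      rfl
  · refine iUnion₂_subset fun p hp x hx => ?_
    by_cases hpd : p.1 = d + 1
    · obtain ⟨B, hB, hxB⟩ := mem_iUnion₂.1 (htopM (mem_iUnion₂.2 ⟨p.2,
        List.mem_map.2 ⟨p, List.mem_filter.2 ⟨hp, decide_eq_true hpd⟩, rfl⟩, hx⟩))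
      exact mem_iUnion₂.2 ⟨(d, B), List.mem_append_right _ (List.mem_map.2 ⟨B, hB, rfl⟩), hxB⟩
    · exact mem_iUnion₂.2 ⟨p, List.mem_append_left _ (List.mem_filter.2 ⟨hp, by simpa⟩), hx⟩
  · have hsplit : piecesCost L = piecesCost top + piecesCost rest := by
      rw [← piecesCost_append]
      exact ((List.filter_append_perm _ L).map _).sum_eq.symm
    have htop : piecesCost top = top.length * 2⁻¹ ^ (d + 1) :=
      piecesCost_of_forall_eq fun p hp => of_decide_eq_true (List.mem_filter.1 hp).2
    calc piecesCost (rest ++ M.map (d, ·))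
        = piecesCost rest + ((2 * M.length : ℕ) : ℝ≥0∞) * 2⁻¹ ^ (d + 1) := by
          rw [piecesCost_append, piecesCost_of_forall_eq (L := M.map (d, ·)) (i := d) (by simp),
            List.length_map, two_inv_pow_eq_add, ← two_mul]
          push_cast
          ring
      _ ≤ piecesCost rest + ((top.length + 1 : ℕ) : ℝ≥0∞) * 2⁻¹ ^ (d + 1) := by
          gcongr
          simpa using hlen
      _ = piecesCost L + 2⁻¹ ^ (d + 1) := by
          rw [hsplit, htop]
          push_cast
          ring

lemma exists_level_zero_cover_of_le :
    ∀ {d : ℕ} {L : List (ℕ × Set ℕ)}, PiecesIn 𝒞 L → (∀ p ∈ L, p.1 ≤ d) →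
      ∃ Y : List (Set ℕ), (∀ B ∈ Y, B ∈ 𝒞 0) ∧ (⋃ p ∈ L, p.2) ⊆ (⋃ B ∈ Y, B) ∧
        Y.length + 2⁻¹ ^ d ≤ piecesCost L + 1
  | 0, L, hL, hd => by
    have h0 : ∀ p ∈ L, p.1 = 0 := fun p hp => Nat.le_zero.1 (hd p hp)
    refine ⟨L.map Prod.snd, fun B hB => ?_, fun x hx => ?_, ?_⟩
    · obtain ⟨p, hp, rfl⟩ := List.mem_map.1 hB
      simpa [h0 p hp] using hL p hp
    · obtain ⟨p, hp, hxp⟩ := mem_iUnion₂.1 hx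
      exact mem_iUnion₂.2 ⟨p.2, List.mem_map_of_mem hp, hxp⟩
    · simp [piecesCost_of_forall_eq h0]
  | d + 1, L, hL, hd => by
    obtain ⟨L', hL', hd', hLL', hcost⟩ := hL.exists_levels_le hpair hd
    obtain ⟨Y, hY, hL'Y, hlen⟩ := hL'.exists_level_zero_cover_of_le hd'
    refine ⟨Y, hY, hLL'.trans hL'Y, ?_⟩
    rw [two_inv_pow_eq_add, ← add_assoc] at hlen
    refine (ENNReal.add_le_add_iff_right
      (pow_ne_top (n := d + 1) (ENNReal.inv_ne_top.2 two_ne_zero))).1 ?_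
    calc (Y.length : ℝ≥0∞) + 2⁻¹ ^ (d + 1) + 2⁻¹ ^ (d + 1) ≤ piecesCost L' + 1 := hlen
      _ ≤ piecesCost L + 2⁻¹ ^ (d + 1) + 1 := by gcongr
      _ = piecesCost L + 1 + 2⁻¹ ^ (d + 1) := add_right_comm _ _ _

lemma exists_level_zero_cover {L : List (ℕ × Set ℕ)} (hL : PiecesIn 𝒞 L) :
    ∃ Y : List (Set ℕ), (∀ B ∈ Y, B ∈ 𝒞 0) ∧ (⋃ p ∈ L, p.2) ⊆ (⋃ B ∈ Y, B) ∧
      Y.length ≤ piecesCost L + 1 :=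
  (hL.exists_level_zero_cover_of_le hpair (d := (L.map Prod.fst).sum) fun _ hp =>
    List.le_sum_of_mem (List.mem_map_of_mem hp)).imp fun _ ⟨hY, hLY, hlen⟩ =>
      ⟨hY, hLY, le_self_add.trans hlen⟩

end PiecesIn

end TowerSubmeasure

def finUnions (𝒦 : Set (Set ℕ)) : ℕ → Set (Set ℕ)
  | 0 => {∅}
  | N + 1 => image2 (· ∪ ·) 𝒦 (finUnions 𝒦 N)

section FinUnions

variable {𝒦 : Set (Set ℕ)}

lemma isClosed_finUnions (h𝒦 : IsClosed 𝒦) : ∀ N, IsClosed (finUnions 𝒦 N)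
  | 0 => isClosed_singleton
  | N + 1 => by
    rw [finUnions, ← image_prod]
    exact ((h𝒦.isCompact.prod (isClosed_finUnions h𝒦 N).isCompact).image
      continuous_union).isClosed

lemma isLowerSet_finUnions (h𝒦 : IsLowerSet 𝒦) : ∀ N, IsLowerSet (finUnions 𝒦 N)
  | 0 => fun _ _ h (hA : _ = ∅) => subset_empty_iff.1 (hA ▸ h)
  | N + 1 => by
    rintro _ B hBA ⟨K, hK, U, hU, rfl⟩
    refine ⟨B ∩ K, h𝒦 inter_subset_right hK, B ∩ U,
      isLowerSet_finUnions h𝒦 N inter_subset_right hU, ?_⟩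
    exact (inter_union_distrib_left B K U).symm.trans (inter_eq_left.2 hBA)

lemma empty_mem_finUnions (h𝒦 : ∅ ∈ 𝒦) : ∀ N, ∅ ∈ finUnions 𝒦 N
  | 0 => rfl
  | N + 1 => ⟨∅, h𝒦, ∅, empty_mem_finUnions h𝒦 N, empty_union ∅⟩

lemma finUnions_subset {I : Set (Set ℕ)} (hI : IsIdeal I) (h𝒦 : 𝒦 ⊆ I) :
    ∀ N, finUnions 𝒦 N ⊆ I
  | 0 => singleton_subset_iff.2 hI.1
  | N + 1 => by
    rintro _ ⟨K, hK, U, hU, rfl⟩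
    exact hI.union_mem (h𝒦 hK) (finUnions_subset hI h𝒦 N hU)

lemma biUnion_mem_finUnions (h𝒦 : ∅ ∈ 𝒦) :
    ∀ (Y : List (Set ℕ)) (N : ℕ), (∀ B ∈ Y, B ∈ 𝒦) → Y.length ≤ N →
      (⋃ B ∈ Y, B) ∈ finUnions 𝒦 N
  | [], N, _, _ => by simpa using empty_mem_finUnions h𝒦 N
  | B :: Y, N + 1, hY, hlen => ⟨B, hY B (by simp), _,
      biUnion_mem_finUnions h𝒦 Y N (fun C hC => hY C (by simp [hC])) (by simpa using hlen),
      by simp⟩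

end FinUnions

section Forward

variable {I : Set (Set ℕ)} {𝒞 : ℕ → Set (Set ℕ)}

lemma tendsto_towerSubmeasure_diff_Iic (h𝒞 : ∀ i, IsTailBase I (𝒞 i)) {A : Set ℕ}
    (hA : A ∈ I) : Tendsto (fun n => towerSubmeasure 𝒞 (A \ Iic n)) atTop (𝓝 0) := by
  refine ENNReal.tendsto_atTop_zero.2 fun ε hε => ?_
  obtain ⟨i, hi⟩ := ENNReal.exists_inv_two_pow_lt hε.ne'
  obtain ⟨m, hm⟩ := (h𝒞 i).exists_diff_Iic_mem A hA
  exact ⟨m, fun n hn =>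
    (towerSubmeasure_le_of_subset_mem hm (diff_Iic_subset_diff_Iic A hn)).trans hi.le⟩

lemma mem_of_towerSubmeasure_lt_top
    (hpair : ∀ i, ∀ A ∈ 𝒞 (i + 1), ∀ B ∈ 𝒞 (i + 1), A ∪ B ∈ 𝒞 i) (hI : IsIdeal I)
    (h𝒞₀ : IsTailBase I (𝒞 0)) {A : Set ℕ} (hA : towerSubmeasure 𝒞 A < ⊤) : A ∈ I := by
  obtain ⟨N, hN⟩ := ENNReal.exists_nat_gt (ENNReal.add_ne_top.2 ⟨hA.ne, ofNat_ne_top (n := 2)⟩)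
  have hmem : ∀ n, A ∩ Iic n ∈ finUnions (𝒞 0) N := fun n => by
    have : coverWeight 𝒞 (A ∩ Iic n) < towerSubmeasure 𝒞 A + 1 :=
      (le_iSup (fun n => coverWeight 𝒞 (A ∩ Iic n)) n).trans_lt
        (ENNReal.lt_add_right hA.ne one_ne_zero)
    simp only [coverWeight, iInf_lt_iff, exists_prop] at this
    obtain ⟨L, hL, hcov, hcost⟩ := this
    obtain ⟨Y, hY, hLY, hlen⟩ := hL.exists_level_zero_cover hpair
    refine isLowerSet_finUnions h𝒞₀.isLowerSet N (hcov.trans hLY)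
      (biUnion_mem_finUnions (h𝒞₀.empty_mem hI.1) Y N hY ?_)
    have : (Y.length : ℝ≥0∞) < N := calc
      (Y.length : ℝ≥0∞) ≤ piecesCost L + 1 := hlen
      _ ≤ towerSubmeasure 𝒞 A + 1 + 1 := by gcongr
      _ < N := by rwa [add_assoc, one_add_one_eq_two]
    exact_mod_cast this.le
  exact finUnions_subset hI h𝒞₀.subset N ((isClosed_finUnions h𝒞₀.isClosed N).mem_of_tendsto
    (tendsto_inter_Iic A) (Eventually.of_forall hmem))

end Forward

theorem exists_isLSCSM_of_isFsigma_of_isPIdeal {I : Set (Set ℕ)} (hI : IsIdeal I)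
    (hfin : ContainsFin I) (hFσ : IsFsigma (chi '' I)) (hP : IsPIdeal I) :
    ∃ φ : Set ℕ → ℝ≥0∞, IsLSCSM φ ∧ I = ExhPhi φ ∧ I = FinPhi φ := by
  obtain ⟨F, hF, hIF⟩ := isFsigma_chi_image_iff.1 hFσ
  obtain ⟨𝒞₀, h𝒞₀⟩ := exists_isTailBase hI hP hF hIF
  obtain ⟨𝒞, h𝒞0, h𝒞, hpair⟩ := exists_tower hI hP (h𝒞₀.union isClosed_setOf_subsingleton
    (fun _ _ h hs => hs.anti h) fun _ hs => hfin _ hs.finite)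
  have hsingle : ∀ n, {n} ∈ 𝒞 0 := fun n => h𝒞0 ▸ .inr subsingleton_singleton
  have hφ : IsLSCSM (towerSubmeasure 𝒞) := isLSCSM_towerSubmeasure
  have hExh : I ⊆ ExhPhi (towerSubmeasure 𝒞) := fun _ hA =>
    tendsto_towerSubmeasure_diff_Iic h𝒞 hA
  have hFin : FinPhi (towerSubmeasure 𝒞) ⊆ I := fun _ hA =>
    mem_of_towerSubmeasure_lt_top hpair hI (h𝒞 0) hA
  have hExhFin : ExhPhi (towerSubmeasure 𝒞) ⊆ FinPhi (towerSubmeasure 𝒞) := fun _ hA =>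
    hφ.mem_finPhi_of_mem_exhPhi (towerSubmeasure_Iic_ne_top hsingle) hA
  exact ⟨_, hφ, hExh.antisymm (hExhFin.trans hFin), (hExh.trans hExhFin).antisymm hFin⟩

/-- Solecki: `I` is an `Fσ` P-ideal iff `I = Exh(φ) = Fin(φ)` for some lscsm `φ`. -/
theorem solecki_fsigma_pideal (I : Set (Set ℕ)) (hI : IsIdeal I) (hfin : ContainsFin I) :
    (IsFsigma (chi '' I) ∧ IsPIdeal I) ↔
      ∃ φ : Set ℕ → ℝ≥0∞, IsLSCSM φ ∧ I = ExhPhi φ ∧ I = FinPhi φ := by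
  refine ⟨fun ⟨hFσ, hP⟩ => exists_isLSCSM_of_isFsigma_of_isPIdeal hI hfin hFσ hP, ?_⟩
  rintro ⟨φ, hφ, hExh, rfl⟩
  exact ⟨hφ.isFsigma_chi_image_finPhi, hφ.isPIdeal_finPhi hExh.symm⟩
end

section
/- Every ideal on ℕ containing all finite sets which is an Fσ subset of 2^ℕ is p⁺: for every decreasing sequence (Aₙ) of sets in I⁺ there is A ∈ I⁺ such that A ⊆* Aₙ for all n. -/
open Set Filter Topology

lemma chi_true_iff (A : Set ℕ) (k : ℕ) : chi A k = true ↔ k ∈ A := by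
  simp [chi]

/-- Key lemma: if `K` is a closed set contained in `chi '' I` and `A ∉ I`, there is a
finite `s ⊆ A` such that no set whose characteristic function lies in `K` contains `s`. -/
lemma key_lemma (I : Set (Set ℕ)) (hI : IsIdeal I) (K : Set (ℕ → Bool)) (hK : IsClosed K)
    (hKI : K ⊆ chi '' I) (A : Set ℕ) (hA : A ∉ I) :
    ∃ s : Set ℕ, s.Finite ∧ s ⊆ A ∧ ∀ Y : Set ℕ, chi Y ∈ K → ¬ s ⊆ Y := by
  by_contra h
  push_neg at h
  have h' : ∀ n : ℕ, ∃ Y : Set ℕ, chi Y ∈ K ∧ A ∩ Set.Iio n ⊆ Y := by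
    intro n
    exact h (A ∩ Set.Iio n) ((Set.finite_Iio n).subset Set.inter_subset_right)
      Set.inter_subset_left
  choose Y hY1 hY2 using h'
  have hcomp : IsCompact K := hK.isCompact
  obtain ⟨a, haK, φ, hφ, hconv⟩ := hcomp.tendsto_subseq hY1
  obtain ⟨C, hC, hchiC⟩ := hKI haK
  have hAC : A ⊆ C := by
    intro k hk
    have hev : Tendsto (fun n => chi (Y (φ n)) k) atTop (𝓝 (a k)) :=
      ((continuous_apply k).tendsto a).comp hconv
    rw [nhds_discrete, tendsto_pure] at hev
    obtain ⟨N, hN⟩ := hev.exists_forall_of_atTop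
    set n := max N (k + 1) with hn
    have h1 : chi (Y (φ n)) k = a k := hN n (le_max_left _ _)
    have h2 : k ∈ Y (φ n) := by
      apply hY2 (φ n)
      refine ⟨hk, ?_⟩
      have : k + 1 ≤ φ n := le_trans (le_max_right _ _) (hφ.le_apply)
      exact lt_of_lt_of_le (Nat.lt_succ_self k) this
    have h3 : a k = true := by
      rw [← h1, chi_true_iff]; exact h2
    have : chi C k = true := by rw [hchiC, h3]
    rwa [chi_true_iff] at this
  exact hA (hI.2.2.2 A C hAC hC)

/-- Every `Fσ` ideal on `ℕ` (containing all finite sets) is `p⁺`: for every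
decreasing sequence `(Aₙ)` of `I`-positive sets there is an `I`-positive `A`
with `A ⊆* Aₙ` for all `n`. -/
theorem fsigma_is_pplus (I : Set (Set ℕ)) (hI : IsIdeal I) (hfin : ContainsFin I)
    (hF : IsFsigma (chi '' I)) (A : ℕ → Set ℕ) (hpos : ∀ n, A n ∉ I)
    (hdec : ∀ n, A (n + 1) ⊆ A n) :
    ∃ B : Set ℕ, B ∉ I ∧ ∀ n, (B \ A n).Finite := by
  obtain ⟨F, hFc, hFU⟩ := hF
  have hFsub : ∀ n, F n ⊆ chi '' I := by
    intro n
    rw [hFU]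
    exact Set.subset_iUnion F n
  have hs : ∀ n : ℕ, ∃ s : Set ℕ, s.Finite ∧ s ⊆ A n ∧
      ∀ Y : Set ℕ, chi Y ∈ F n → ¬ s ⊆ Y := fun n =>
    key_lemma I hI (F n) (hFc n) (hFsub n) (A n) (hpos n)
  choose s hsfin hsA hsK using hs
  have hAanti : Antitone A := antitone_nat_of_succ_le hdec
  refine ⟨⋃ n, s n, ?_, ?_⟩
  · intro hB
    have : chi (⋃ n, s n) ∈ ⋃ n, F n := by
      rw [← hFU]
      exact Set.mem_image_of_mem chi hB
    obtain ⟨m, hm⟩ := Set.mem_iUnion.mp this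
    exact hsK m (⋃ n, s n) hm (Set.subset_iUnion s m)
  · intro n
    have hsub : (⋃ k, s k) \ A n ⊆ ⋃ k ∈ Set.Iio n, s k := by
      intro x hx
      obtain ⟨⟨_, ⟨k, rfl⟩, hxk⟩, hxA⟩ := hx
      rcases lt_or_ge k n with hkn | hkn
      · exact Set.mem_biUnion hkn hxk
      · exact absurd (hAanti hkn (hsA k hxk)) hxA
    exact (Set.Finite.biUnion (Set.finite_Iio n) fun k _ => hsfin k).subset hsub
end

section
/- (Hrušák–Meza-Alcántara) Let I be an ideal on ℕ containing all finite sets. The following are equivalent: (i) I is Farah, i.e., there is a countable collection (Kₙ) of hereditary families of subsets of ℕ, each closed as a subset of 2^ℕ, such that I = {A ⊆ ℕ : for every n there is m with A \ {0,1,…,m} ∈ Kₙ}; (ii) there is a sequence (Fₙ) of hereditary Fσ subsets of 2^ℕ, each closed under finite changes, such that I = ⋂ₙ Fₙ; (iii) there is a sequence (Fₙ) of Fσ subsets of 2^ℕ, each closed under finite changes, such that I = ⋂ₙ Fₙ. -/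
open Set Filter Topology

def Hereditary (K : Set (Set ℕ)) : Prop := ∀ A ∈ K, ∀ B ⊆ A, B ∈ K

/-- `K` is closed under finite changes: `A ∆ F ∈ K` for `A ∈ K` and `F` finite. -/
def ClosedUnderFiniteChanges (K : Set (Set ℕ)) : Prop :=
  ∀ A ∈ K, ∀ F : Set ℕ, F.Finite → symmDiff A F ∈ K

/-- `I` is Farah: determined by a countable sequence of closed hereditary families. -/
def IsFarah (I : Set (Set ℕ)) : Prop :=
  ∃ K : ℕ → Set (Set ℕ), (∀ n, Hereditary (K n) ∧ IsClosed (chi '' K n)) ∧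
    I = {A : Set ℕ | ∀ n, ∃ m, A \ {k | k ≤ m} ∈ K n}

namespace FarahAux

def psi (x : ℕ → Bool) : Set ℕ := {n | x n = true}
lemma chi_eq_true {A : Set ℕ} {n : ℕ} : chi A n = true ↔ n ∈ A := by
  simp [chi, decide_eq_true_iff]
lemma psi_chi (A : Set ℕ) : psi (chi A) = A := by ext n; simp [psi, chi_eq_true]
lemma chi_psi (x : ℕ → Bool) : chi (psi x) = x := by
  funext n
  rcases Bool.eq_false_or_eq_true (x n) with h | h <;>
    simp [psi, h, chi, Classical.propDecidable]
lemma chi_injective : Function.Injective chi := by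
  intro A B h; rw [← psi_chi A, ← psi_chi B, h]
lemma chi_surjective : Function.Surjective chi := fun x => ⟨psi x, chi_psi x⟩

lemma image_chi (S : Set (Set ℕ)) : chi '' S = psi ⁻¹' S := by
  ext x
  constructor
  · rintro ⟨A, hA, rfl⟩; simpa [psi_chi] using hA
  · intro hx; exact ⟨psi x, hx, chi_psi x⟩
lemma isClopen_coord (n : ℕ) : IsClopen {x : ℕ → Bool | x n = true} :=
  (isClopen_discrete {true}).preimage (continuous_apply n)

-- downward closure is closed
lemma isClosed_down (S : Set (Set ℕ)) (hS : IsClosed (chi '' S)) :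
    IsClosed (chi '' {B | ∃ A ∈ S, B ⊆ A}) := by
  set R : Set ((ℕ → Bool) × (ℕ → Bool)) := ⋂ n, ({p | p.2 n = true}ᶜ ∪ {p | p.1 n = true}) with hR
  have hRclosed : IsClosed R := by
    refine isClosed_iInter fun n => IsClosed.union ?_ ?_
    · exact (isClosed_compl_iff.mpr (((isClopen_coord n).preimage continuous_snd).isOpen))
    · exact ((isClopen_coord n).preimage continuous_fst).isClosed
  have key : chi '' {B | ∃ A ∈ S, B ⊆ A} = Prod.snd '' (((chi '' S) ×ˢ (univ : Set (ℕ → Bool))) ∩ R) := by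
    rw [image_chi]
    ext x
    constructor
    · rintro ⟨A, hAS, hsub⟩
      refine ⟨(chi A, x), ⟨⟨⟨A, hAS, rfl⟩, trivial⟩, ?_⟩, rfl⟩
      simp only [hR, mem_iInter, mem_union, mem_compl_iff, mem_setOf_eq]
      intro n
      by_cases h : x n = true
      · right; exact chi_eq_true.mpr (hsub h)
      · left; exact h
    · rintro ⟨⟨y, x⟩, ⟨⟨⟨A, hAS, rfl⟩, -⟩, hr⟩, rfl⟩
      refine ⟨A, hAS, fun n hn => ?_⟩
      simp only [hR, mem_iInter, mem_union, mem_compl_iff, mem_setOf_eq] at hr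
      rcases hr n with h | h
      · exact absurd hn h
      · exact chi_eq_true.mp h
  rw [key]
  have hcs : IsCompact (((chi '' S) ×ˢ (univ : Set (ℕ → Bool))) ∩ R) :=
    ((hS.isCompact.prod isCompact_univ).inter_right hRclosed)
  exact (hcs.image continuous_snd).isClosed

-- closedness of the K-construction
lemma isClosed_K (D : ℕ → Set (Set ℕ)) (hD : ∀ j, IsClosed (chi '' D j)) :
    IsClosed (chi '' {B | ∀ j ∈ B, B ∈ D j}) := by
  rw [image_chi]
  have : psi ⁻¹' {B | ∀ j ∈ B, B ∈ D j} = ⋂ j, ({x : ℕ → Bool | x j = true}ᶜ ∪ psi ⁻¹' (D j)) := by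
    ext x
    simp only [mem_preimage, mem_setOf_eq, mem_iInter, mem_union, mem_compl_iff]
    constructor
    · intro h j
      by_cases hx : x j = true
      · exact Or.inr (h j hx)
      · exact Or.inl hx
    · intro h j hj
      rcases h j with h' | h'
      · exact absurd hj h'
      · exact h'
  rw [this]
  refine isClosed_iInter fun j => IsClosed.union (isClosed_compl_iff.mpr (isClopen_coord j).isOpen) ?_
  rw [← image_chi]; exact hD j

lemma single_F_repr (F : Set (Set ℕ)) (hher : Hereditary F) (hfs : IsFsigma (chi '' F))
    (hfc : ClosedUnderFiniteChanges F) (hfinF : ∀ A : Set ℕ, A.Finite → A ∈ F) :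
    ∃ K : Set (Set ℕ), Hereditary K ∧ IsClosed (chi '' K) ∧
      F = {A | ∃ m, A \ {k | k ≤ m} ∈ K} := by
  obtain ⟨C, hCcl, hCeq⟩ := hfs
  set G : ℕ → Set (Set ℕ) := fun k => chi ⁻¹' (⋃ i ∈ Finset.Iic k, C i) with hG
  set D : ℕ → Set (Set ℕ) := fun k => {B | ∃ A ∈ G k, B ⊆ A} with hD
  have hGF : ∀ k, G k ⊆ F := by
    intro k A hA
    have h1 : chi A ∈ ⋃ n, C n := by
      simp only [hG, mem_preimage, mem_iUnion] at hA
      obtain ⟨i, _, hi⟩ := hA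
      exact mem_iUnion.mpr ⟨i, hi⟩
    rw [← hCeq] at h1
    obtain ⟨A', hA', hAA⟩ := h1
    rwa [← chi_injective hAA]
  have hDF : ∀ k, D k ⊆ F := by
    rintro k B ⟨A, hA, hBA⟩
    exact hher A (hGF k hA) B hBA
  have hDher : ∀ k, Hereditary (D k) := by
    rintro k B ⟨A, hA, hBA⟩ B' hB'
    exact ⟨A, hA, hB'.trans hBA⟩
  have hDmono : ∀ k j, k ≤ j → D k ⊆ D j := by
    rintro k j hkj B ⟨A, hA, hBA⟩
    refine ⟨A, ?_, hBA⟩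
    simp only [hG, mem_preimage, mem_iUnion] at hA ⊢
    obtain ⟨i, hik, hi⟩ := hA
    exact ⟨i, by simp only [Finset.mem_Iic] at *; omega, hi⟩
  have hDcl : ∀ k, IsClosed (chi '' D k) := by
    intro k
    apply isClosed_down
    have : chi '' G k = ⋃ i ∈ Finset.Iic k, C i :=
      Set.image_preimage_eq _ chi_surjective
    rw [this]
    exact isClosed_biUnion_finset fun i _ => hCcl i
  refine ⟨{B | ∀ j ∈ B, B ∈ D j}, ?_, isClosed_K D hDcl, ?_⟩
  · intro B hB B' hB' j hj
    exact hDher j B (hB j (hB' hj)) B' hB'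
  · ext A
    simp only [mem_setOf_eq]
    constructor
    · intro hA
      have : chi A ∈ ⋃ n, C n := by rw [← hCeq]; exact ⟨A, hA, rfl⟩
      obtain ⟨k, hk⟩ := mem_iUnion.mp this
      have hADk : A ∈ D k := ⟨A, by simp [hG, mem_iUnion]; exact ⟨k, le_refl k, hk⟩, subset_rfl⟩
      refine ⟨k, fun j hj => ?_⟩
      have hjk : k ≤ j := by
        simp only [mem_diff, mem_setOf_eq] at hj
        omega
      exact hDmono k j hjk (hDher k A hADk _ diff_subset)
    · rintro ⟨m, hT⟩
      set T := A \ {k | k ≤ m} with hTdef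
      by_cases hTe : T = ∅
      · have : A ⊆ {k | k ≤ m} := by
          intro i hi
          by_contra h
          have : i ∈ T := ⟨hi, h⟩
          simp [hTe] at this
        exact hfinF A ((Set.finite_Iic m).subset this)
      · obtain ⟨j, hj⟩ := Set.nonempty_iff_ne_empty.mpr hTe
        have hTF : T ∈ F := hDF j (hT j hj)
        have key : symmDiff T (A ∩ {k | k ≤ m}) = A := by
          ext i
          simp only [symmDiff_def, Set.sup_eq_union, mem_union, mem_diff, mem_inter_iff,
            mem_setOf_eq, hTdef]
          tauto
        rw [← key]
        exact hfc T hTF _ ((Set.finite_Iic m).subset (inter_subset_right.trans subset_rfl))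

lemma exists_finset_agree {V : Set (ℕ → Bool)} (hV : IsOpen V) {x : ℕ → Bool} (hx : x ∈ V) :
    ∃ I : Finset ℕ, ∀ y : ℕ → Bool, (∀ i ∈ I, y i = x i) → y ∈ V := by
  obtain ⟨I, u, hu, hsub⟩ := isOpen_pi_iff.mp hV x hx
  refine ⟨I, fun y hy => hsub ?_⟩
  intro i hi
  rw [hy i hi]
  exact (hu i hi).2

lemma bool_eq_of_iff {a b : Bool} (h : a = true ↔ b = true) : a = b := by
  cases a <;> cases b <;> simp_all

lemma hered_Fsigma (F : Set (Set ℕ)) (hfs : IsFsigma (chi '' F)) (hfc : ClosedUnderFiniteChanges F) :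
    IsFsigma (chi '' {A : Set ℕ | ∀ B ⊆ A, B ∈ F}) := by
  classical
  obtain ⟨C, hCcl, hCeq⟩ := hfs
  have hmemF : ∀ (B : Set ℕ) (k : ℕ), chi B ∈ C k → B ∈ F := by
    intro B k hB
    have : chi B ∈ chi '' F := by rw [hCeq]; exact mem_iUnion.mpr ⟨k, hB⟩
    rw [image_chi] at this
    simpa [psi_chi] using this
  set E : ℕ × ℕ × Finset ℕ → Set (Set ℕ) := fun p =>
    {A | ∀ t : Finset ℕ, ↑t ⊆ A \ {i | i ≤ p.2.1} → chi (↑t ∪ ↑p.2.2) ∈ C p.1} with hE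
  -- each E is closed
  have hEcl : ∀ p, IsClosed (chi '' E p) := by
    rintro ⟨k, j, s⟩
    rw [image_chi]
    have heq : psi ⁻¹' E (k, j, s) =
        ⋂ t : Finset ℕ, {x : ℕ → Bool | ↑t ⊆ psi x \ {i | i ≤ j} → chi (↑t ∪ ↑s) ∈ C k} := by
      ext x; simp [hE, mem_iInter]
    rw [heq]
    refine isClosed_iInter fun t => ?_
    by_cases hc : chi (↑t ∪ ↑s : Set ℕ) ∈ C k
    · have : {x : ℕ → Bool | ↑t ⊆ psi x \ {i | i ≤ j} → chi (↑t ∪ ↑s) ∈ C k} = univ := by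
        ext x; simp [hc]
      rw [this]; exact isClosed_univ
    · have : {x : ℕ → Bool | ↑t ⊆ psi x \ {i | i ≤ j} → chi (↑t ∪ ↑s) ∈ C k} =
          {x : ℕ → Bool | (↑t : Set ℕ) ⊆ psi x \ {i | i ≤ j}}ᶜ := by
        ext x; simp [hc]
      rw [this]
      rw [isClosed_compl_iff]
      have : {x : ℕ → Bool | (↑t : Set ℕ) ⊆ psi x \ {i | i ≤ j}} =
          ⋂ i ∈ t, {x : ℕ → Bool | i ∈ psi x \ {i | i ≤ j}} := by
        ext x; simp [Set.subset_def]
      rw [this]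
      refine isOpen_biInter_finset fun i hi => ?_
      by_cases hij : i ≤ j
      · have : {x : ℕ → Bool | i ∈ psi x \ {i | i ≤ j}} = ∅ := by
          ext x; simp [hij]
        rw [this]; exact isOpen_empty
      · have : {x : ℕ → Bool | i ∈ psi x \ {i | i ≤ j}} = {x : ℕ → Bool | x i = true} := by
          ext x; simp [psi, hij]
        rw [this]; exact (isClopen_coord i).isOpen
  -- E p ⊆ H
  have hEH : ∀ p, E p ⊆ {A : Set ℕ | ∀ B ⊆ A, B ∈ F} := by
    rintro ⟨k, j, s⟩ A hA B hBA
    set B' : Set ℕ := (B \ {i | i ≤ j}) ∪ ↑s with hB'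
    have hB'C : chi B' ∈ C k := by
      rw [← (hCcl k).closure_eq]
      rw [mem_closure_iff]
      intro O hO hmem
      obtain ⟨I, hI⟩ := exists_finset_agree hO hmem
      set t : Finset ℕ := I.filter (fun i => i ∈ B ∧ ¬ i ≤ j) with ht
      have htsub : (↑t : Set ℕ) ⊆ A \ {i | i ≤ j} := by
        intro i hi
        simp only [ht, Finset.coe_filter, mem_setOf_eq] at hi
        exact ⟨hBA hi.2.1, hi.2.2⟩
      have hct : chi (↑t ∪ ↑s) ∈ C k := hA t htsub
      refine ⟨chi (↑t ∪ ↑s), hI _ ?_, hct⟩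
      intro i hiI
      apply bool_eq_of_iff
      rw [chi_eq_true, chi_eq_true]
      simp only [hB', ht, Finset.coe_filter, mem_union, mem_setOf_eq, mem_diff,
        Finset.mem_coe]
      tauto
    have hB'F : B' ∈ F := hmemF B' k hB'C
    have hfin : (symmDiff B' B).Finite := by
      apply ((Set.finite_Iic j).union s.finite_toSet).subset
      intro i hi
      simp only [symmDiff_def, Set.sup_eq_union, mem_union, mem_diff, hB',
        mem_setOf_eq, Finset.mem_coe, Set.mem_Iic] at hi ⊢
      tauto
    have h2 := hfc B' hB'F _ hfin
    rwa [symmDiff_symmDiff_cancel_left] at h2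
  -- H ⊆ ⋃ E  (Baire category)
  have hHE : {A : Set ℕ | ∀ B ⊆ A, B ∈ F} ⊆ ⋃ p, E p := by
    intro A hA
    set X : Set (ℕ → Bool) := {x | psi x ⊆ A} with hX
    have hXcl : IsClosed X := by
      have : X = ⋂ i, {x : ℕ → Bool | x i = true → i ∈ A} := by
        ext x; simp [hX, psi, Set.subset_def]
      rw [this]
      refine isClosed_iInter fun i => ?_
      by_cases hi : i ∈ A
      · have : {x : ℕ → Bool | x i = true → i ∈ A} = univ := by ext x; simp [hi]
        rw [this]; exact isClosed_univ
      · have : {x : ℕ → Bool | x i = true → i ∈ A} = {x : ℕ → Bool | x i = true}ᶜ := by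
          ext x; simp [hi]
        rw [this]; exact isClosed_compl_iff.mpr (isClopen_coord i).isOpen
    haveI : CompactSpace X := isCompact_iff_compactSpace.mp hXcl.isCompact
    haveI : Nonempty X := ⟨⟨fun _ => false, by simp [hX, psi]⟩⟩
    haveI : BaireSpace X := BaireSpace.of_t2Space_locallyCompactSpace
    have hcover : ⋃ k, (Subtype.val ⁻¹' (C k) : Set X) = univ := by
      rw [eq_univ_iff_forall]
      intro x
      have hxF : psi x.val ∈ F := hA _ x.2
      have : chi (psi x.val) ∈ chi '' F := ⟨_, hxF, rfl⟩
      rw [chi_psi x.val, hCeq] at this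
      obtain ⟨k, hk⟩ := mem_iUnion.mp this
      exact mem_iUnion.mpr ⟨k, hk⟩
    obtain ⟨k, x₀, hx₀⟩ := nonempty_interior_of_iUnion_of_closed
      (fun k => (hCcl k).preimage continuous_subtype_val) hcover
    obtain ⟨V, hVopen, hVeq⟩ := isOpen_induced_iff.mp
      (isOpen_interior : IsOpen (interior (Subtype.val ⁻¹' (C k) : Set X)))
    have hx₀V : x₀.val ∈ V := by rw [← hVeq] at hx₀; exact hx₀
    obtain ⟨I, hI⟩ := exists_finset_agree hVopen hx₀V
    set j : ℕ := I.sup id with hj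
    set s : Finset ℕ := I.filter (fun i => x₀.val i = true) with hs
    refine mem_iUnion.mpr ⟨(k, j, s), ?_⟩
    intro t ht
    set y : ℕ → Bool := chi (↑t ∪ ↑s) with hy
    have hyX : y ∈ X := by
      rw [hX, mem_setOf_eq, hy, psi_chi]
      intro i hi
      rcases hi with hi | hi
      · exact (ht hi).1
      · simp only [hs, Finset.coe_filter, mem_setOf_eq] at hi
        exact x₀.2 hi.2
    have hagree : ∀ i ∈ I, y i = x₀.val i := by
      intro i hiI
      have hij : i ≤ j := Finset.le_sup (f := id) hiI
      have hit : i ∉ (↑t : Set ℕ) := fun h => (ht h).2 hij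
      apply bool_eq_of_iff
      rw [hy, chi_eq_true]
      simp only [mem_union, Finset.mem_coe, hs, Finset.mem_filter]
      constructor
      · rintro (h | h)
        · exact absurd h hit
        · exact h.2
      · intro h; exact Or.inr ⟨hiI, h⟩
    have hyV : y ∈ V := hI y hagree
    have : (⟨y, hyX⟩ : X) ∈ interior (Subtype.val ⁻¹' (C k) : Set X) := by
      rw [← hVeq]; exact hyV
    have h3 : (⟨y, hyX⟩ : X) ∈ (Subtype.val ⁻¹' (C k) : Set X) := interior_subset this
    exact h3
  -- assemble
  have hHeq : {A : Set ℕ | ∀ B ⊆ A, B ∈ F} = ⋃ p, E p :=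
    Subset.antisymm hHE (iUnion_subset hEH)
  obtain ⟨e, he⟩ := exists_surjective_nat (ℕ × ℕ × Finset ℕ)
  refine ⟨fun m => chi '' E (e m), fun m => hEcl (e m), ?_⟩
  rw [hHeq, image_iUnion]
  exact (he.iUnion_comp fun p => chi '' E p).symm


def fm (m : ℕ) (x : ℕ → Bool) : ℕ → Bool := fun i => if i ≤ m then false else x i

lemma continuous_fm (m : ℕ) : Continuous (fm m) := by
  apply continuous_pi
  intro i
  by_cases h : i ≤ m
  · simp only [fm, h, if_true]
    exact continuous_const
  · simp only [fm, h, if_false]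
    exact continuous_apply i

lemma psi_fm (m : ℕ) (x : ℕ → Bool) : psi (fm m x) = psi x \ {k | k ≤ m} := by
  ext i
  by_cases h : i ≤ m
  · simp [psi, fm, h]
  · simp only [fm, psi, mem_setOf_eq, mem_diff, if_neg h]
    constructor
    · intro hx; exact ⟨hx, h⟩
    · intro hx; exact hx.1

lemma tail_Fsigma (K : Set (Set ℕ)) (hK : IsClosed (chi '' K)) :
    IsFsigma (chi '' {A | ∃ m, A \ {k | k ≤ m} ∈ K}) := by
  refine ⟨fun m => fm m ⁻¹' (chi '' K), fun m => hK.preimage (continuous_fm m), ?_⟩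
  rw [image_chi, image_chi]
  ext x
  simp only [mem_preimage, mem_iUnion, mem_setOf_eq]
  constructor
  · rintro ⟨m, hm⟩
    exact ⟨m, by rwa [psi_fm]⟩
  · rintro ⟨m, hm⟩
    rw [psi_fm] at hm
    exact ⟨m, hm⟩

end FarahAux

open FarahAux

/-- Hrušák–Meza-Alcántara: TFAE for an ideal `I` on `ℕ`:
(i) `I` is Farah;
(ii) `I` is a countable intersection of hereditary `Fσ` families closed under finite changes;
(iii) `I` is a countable intersection of `Fσ` families closed under finite changes. -/
theorem farah_characterization (I : Set (Set ℕ)) (hI : IsIdeal I) (hfin : ContainsFin I) :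
    (IsFarah I ↔
      ∃ F : ℕ → Set (Set ℕ),
        (∀ n, Hereditary (F n) ∧ IsFsigma (chi '' F n) ∧ ClosedUnderFiniteChanges (F n)) ∧
        I = ⋂ n, F n) ∧
    ((∃ F : ℕ → Set (Set ℕ),
        (∀ n, Hereditary (F n) ∧ IsFsigma (chi '' F n) ∧ ClosedUnderFiniteChanges (F n)) ∧
        I = ⋂ n, F n) ↔
      ∃ F : ℕ → Set (Set ℕ),
        (∀ n, IsFsigma (chi '' F n) ∧ ClosedUnderFiniteChanges (F n)) ∧
        I = ⋂ n, F n) := by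
  obtain ⟨hempty, huniv, hunion, hdown⟩ := hI
  constructor
  · constructor
    · rintro ⟨K, hK, hIeq⟩
      refine ⟨fun n => {A | ∃ m, A \ {k | k ≤ m} ∈ K n}, fun n => ⟨?_, ?_, ?_⟩, ?_⟩
      · rintro A ⟨m, hm⟩ B hBA
        exact ⟨m, (hK n).1 _ hm _ (diff_subset_diff_left hBA)⟩
      · exact tail_Fsigma _ (hK n).2
      · rintro A ⟨m, hm⟩ G hG
        obtain ⟨m', hm'⟩ := hG.bddAbove
        refine ⟨max m m', ?_⟩
        have h1 : symmDiff A G \ {k | k ≤ max m m'} = A \ {k | k ≤ max m m'} := by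
          ext i
          simp only [symmDiff_def, Set.sup_eq_union, mem_union, mem_diff, mem_setOf_eq]
          constructor
          · rintro ⟨h, hle⟩
            refine ⟨?_, hle⟩
            rcases h with ⟨hA, -⟩ | ⟨hG', -⟩
            · exact hA
            · exact absurd (le_trans (hm' hG') (le_max_right m m')) hle
          · rintro ⟨hA, hle⟩
            have hiG : i ∉ G := fun hG' => hle (le_trans (hm' hG') (le_max_right m m'))
            exact ⟨Or.inl ⟨hA, hiG⟩, hle⟩
        rw [h1]
        refine (hK n).1 _ hm _ ?_
        intro i hi
        exact ⟨hi.1, fun h => hi.2 (le_trans h (le_max_left m m'))⟩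
      · rw [hIeq]
        ext A
        simp only [mem_setOf_eq, mem_iInter]
    · rintro ⟨F, hF, hIeq⟩
      have hIF : ∀ n, ∀ A : Set ℕ, A.Finite → A ∈ F n := by
        intro n A hA
        have h := hfin A hA
        rw [hIeq] at h
        exact mem_iInter.mp h n
      choose K hKher hKcl hKeq using fun n =>
        single_F_repr (F n) (hF n).1 (hF n).2.1 (hF n).2.2 (hIF n)
      refine ⟨K, fun n => ⟨hKher n, hKcl n⟩, ?_⟩
      rw [hIeq]
      ext A
      simp only [mem_iInter, mem_setOf_eq]
      refine forall_congr' fun n => ?_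
      rw [hKeq n]
      rfl
  · constructor
    · rintro ⟨F, hF, hIeq⟩
      exact ⟨F, fun n => ⟨(hF n).2.1, (hF n).2.2⟩, hIeq⟩
    · rintro ⟨F, hF, hIeq⟩
      refine ⟨fun n => {A : Set ℕ | ∀ B ⊆ A, B ∈ F n}, fun n => ⟨?_, ?_, ?_⟩, ?_⟩
      · intro A hA B hBA B' hB'
        exact hA B' (hB'.trans hBA)
      · exact hered_Fsigma (F n) (hF n).1 (hF n).2
      · intro A hA G hG B hB
        have h1 : B ∩ A ∈ F n := hA _ inter_subset_right
        have h2 : symmDiff (B ∩ A) (B \ A) = B := by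
          ext i
          simp only [symmDiff_def, Set.sup_eq_union, mem_union, mem_diff, mem_inter_iff]
          tauto
        have h3 : (B \ A).Finite := by
          refine hG.subset ?_
          intro i hi
          have hBi := hB hi.1
          simp only [symmDiff_def, Set.sup_eq_union, mem_union, mem_diff] at hBi
          rcases hBi with ⟨hA', -⟩ | ⟨hG', -⟩
          · exact absurd hA' hi.2
          · exact hG'
        rw [← h2]
        exact (hF n).2 _ h1 _ h3
      · apply Subset.antisymm
        · intro A hA
          rw [mem_iInter]
          intro n B hBA
          have hBI : B ∈ I := hdown B A hBA hA
          rw [hIeq] at hBI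
          exact mem_iInter.mp hBI n
        · intro A hA
          rw [hIeq, mem_iInter]
          intro n
          exact (mem_iInter.mp hA n) A subset_rfl
end

section
/- (Borodulin-Nadzieja–Farkas–Plebanek) An ideal I on ℕ is ℝ-representable if and only if it is summable; that is, there exists h : ℕ → ℝ such that the series Σₙ h(n) is not unconditionally convergent and I = {A ⊆ ℕ : Σ_{n∈A} h(n) is unconditionally convergent in ℝ} if and only if there exists f : ℕ → [0,∞) with Σₙ f(n) = ∞ such that I = {A ⊆ ℕ : Σ_{n∈A} f(n) < ∞}. -/
open Set Filter Topology

/-- Borodulin-Nadzieja–Farkas–Plebanek: an ideal `I` on `ℕ` is `ℝ`-representable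
(that is, `I = {A : Σ_{n∈A} h(n)` is unconditionally convergent`}` for some `h : ℕ → ℝ`
whose full series is not unconditionally convergent) if and only if `I` is summable
(that is, `I = {A : Σ_{n∈A} f(n) < ∞}` for some nonnegative `f` with divergent series).
Unconditional convergence of `Σ_{n∈A} h(n)` in `ℝ` is `Summable (fun n : A => h n)`:
convergence of the net of finite partial sums. -/
theorem R_representable_iff_summable (I : Set (Set ℕ)) (hI : IsIdeal I) :
    (∃ h : ℕ → ℝ, ¬ Summable h ∧ I = {A : Set ℕ | Summable fun n : ↥A => h ↑n}) ↔
    (∃ f : ℕ → ℝ, (∀ n, 0 ≤ f n) ∧ ¬ Summable f ∧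
      I = {A : Set ℕ | Summable fun n : ↥A => f ↑n}) := by
  constructor
  · rintro ⟨h, hns, hIeq⟩
    refine ⟨fun n => |h n|, fun n => abs_nonneg _, ?_, ?_⟩
    · rw [summable_abs_iff]; exact hns
    · rw [hIeq]
      ext A
      simp only [Set.mem_setOf_eq]
      exact (summable_abs_iff (f := fun n : ↥A => h ↑n)).symm
  · rintro ⟨f, _, hns, hIeq⟩
    exact ⟨f, hns, hIeq⟩
end

section
/- (Hrušák–Meza–et al.) Let I be a tall ideal on ℕ containing all finite sets. Then I admits a countable splitting family if and only if conv ≤_K I. -/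
open Set Filter Topology

def Tall (I : Set (Set ℕ)) : Prop :=
  ∀ A : Set ℕ, A.Infinite → ∃ B ⊆ A, B.Infinite ∧ B ∈ I

/-- Katětov order. -/
def KatetovLE {X Y : Type*} (I : Set (Set X)) (J : Set (Set Y)) : Prop :=
  ∃ f : Y → X, ∀ E ∈ I, f ⁻¹' E ∈ J

/-- The ideal `conv` on `ℚ ∩ [0,1]`: sets whose set of accumulation points in `ℝ`
is finite. -/
def convIdeal : Set (Set ↥(Set.Icc (0 : ℚ) 1)) :=
  {A : Set ↥(Set.Icc (0 : ℚ) 1) |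
    {x : ℝ | AccPt x (Filter.principal
      ((fun q : ↥(Set.Icc (0 : ℚ) 1) => ((q : ℚ) : ℝ)) '' A))}.Finite}

/-- `𝒳` is a countable splitting family for `I`. -/
def CountSplitting (I : Set (Set ℕ)) : Prop :=
  ∃ 𝒳 : Set (Set ℕ), 𝒳.Countable ∧ (∀ X ∈ 𝒳, X.Infinite) ∧
    ∀ Y : Set ℕ, Y ∉ I → ∃ X ∈ 𝒳, (X ∩ Y).Infinite ∧ (Y \ X).Infinite

/-!
Enumerate a countable splitting family as `e k` and code `n` by the point of the Cantor set whose
`k`-th digit records whether `n ∈ e k`. A set in `conv` is a finite union of sets with at most one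
accumulation point; along the preimage `Y` of such a set the codes converge, hence so does every
digit, so no `e k` splits `Y` and `Y ∈ I`. Conversely, if `f` witnesses `conv ≤_K I`, then `f[Y]`
has two accumulation points for every `Y ∈ I⁺`, and a rational `c` between them makes
`f⁻¹[0, c)` split `Y`.
-/

namespace IsIdeal

variable {X : Type*} {I : Set (Set X)}

theorem mono (hI : IsIdeal I) {A B : Set X} (hAB : A ⊆ B) (hB : B ∈ I) : A ∈ I :=
  hI.2.2.2 A B hAB hB

theorem biUnion_mem (hI : IsIdeal I) {ι : Type*} {s : Set ι} (hs : s.Finite) {t : ι → Set X}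
    (ht : ∀ i ∈ s, t i ∈ I) : ⋃ i ∈ s, t i ∈ I := by
  induction s, hs using Set.Finite.induction_on with
  | empty => simpa using hI.1
  | @insert i s _ _ ih =>
    rw [biUnion_insert]
    exact hI.2.2.1 _ _ (ht i (mem_insert i s)) (ih fun j hj => ht j (mem_insert_of_mem i hj))

end IsIdeal

theorem CountSplitting.exists_seq {I : Set (Set ℕ)} (h : CountSplitting I) :
    ∃ e : ℕ → Set ℕ, ∀ Y ∉ I, ∃ k, (e k ∩ Y).Infinite ∧ (Y \ e k).Infinite := by
  obtain ⟨𝒳, h𝒳, -, hsplit⟩ := h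
  obtain ⟨e, he⟩ := countable_iff_exists_subset_range.1 h𝒳
  refine ⟨e, fun Y hY => ?_⟩
  obtain ⟨X, hX, hsplitY⟩ := hsplit Y hY
  obtain ⟨k, rfl⟩ := he hX
  exact ⟨k, hsplitY⟩

noncomputable def ratIccToReal (q : Icc (0 : ℚ) 1) : ℝ := ((q : ℚ) : ℝ)

theorem mem_convIdeal_iff {A : Set (Icc (0 : ℚ) 1)} :
    A ∈ convIdeal ↔ (derivedSet (ratIccToReal '' A)).Finite := Iff.rfl

theorem mem_range_ratIccToReal {x : ℝ} (hx : x ∈ Icc 0 1) (hq : x ∈ range ((↑) : ℚ → ℝ)) :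
    x ∈ range ratIccToReal := by
  obtain ⟨q, rfl⟩ := hq
  exact ⟨⟨q, by exact_mod_cast hx.1, by exact_mod_cast hx.2⟩, rfl⟩

theorem AccPt.infinite_preimage_inter {α X : Type*} [TopologicalSpace X] [T1Space X]
    {u : α → X} {Y : Set α} {x : X} {U : Set X} (hx : AccPt x (𝓟 (u '' Y))) (hU : U ∈ 𝓝 x) :
    (Y ∩ u ⁻¹' U).Infinite := by
  refine Infinite.of_image u ?_
  rw [image_inter_preimage, inter_comm]
  exact Infinite.of_accPt (hx.nhds_inter hU)

theorem MapClusterPt.accPt_image {α X : Type*} [TopologicalSpace X] {u : α → X}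
    (hu : Function.Injective u) {Y : Set α} {x : X} (h : MapClusterPt x (cofinite ⊓ 𝓟 Y) u) :
    AccPt x (𝓟 (u '' Y)) := by
  have hmap : map u (cofinite ⊓ 𝓟 Y) ≤ 𝓟 {x}ᶜ ⊓ 𝓟 (u '' Y) := by
    refine map_inf_le.trans (inf_le_inf ?_ (map_principal ▸ le_rfl))
    exact hu.tendsto_cofinite.trans (le_principal_iff.2 (finite_singleton x).compl_mem_cofinite)
  exact accPt_iff_clusterPt.2 (ClusterPt.mono h hmap)

theorem exists_tendsto_of_derivedSet_subsingleton {α K X : Type*} [TopologicalSpace K]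
    [CompactSpace K] [TopologicalSpace X] {g : K → X} (hg : Continuous g)
    (hg_inj : Function.Injective g) {v : α → K} (hv : Function.Injective (g ∘ v)) {Y : Set α}
    (hY : Y.Infinite) (hacc : (derivedSet ((g ∘ v) '' Y)).Subsingleton) :
    ∃ d, Tendsto v (cofinite ⊓ 𝓟 Y) (𝓝 d) := by
  have : (cofinite ⊓ 𝓟 Y).NeBot := hY.cofinite_inf_principal_neBot
  obtain ⟨d, -, hd⟩ := isCompact_univ (f := map v (cofinite ⊓ 𝓟 Y)) (by simp)
  have hclusterPt_acc :
      ∀ d', MapClusterPt d' (cofinite ⊓ 𝓟 Y) v → g d' ∈ derivedSet ((g ∘ v) '' Y) :=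
    fun d' hd' => (hd'.continuousAt_comp hg.continuousAt).accPt_image hv
  exact ⟨d, tendsto_nhds_of_unique_mapClusterPt fun d' hd' =>
    hg_inj (hacc (hclusterPt_acc d' hd') (hclusterPt_acc d hd))⟩

theorem Set.Finite.exists_closedBall_inter_subset_singleton {X : Type*} [MetricSpace X]
    {F : Set X} (hF : F.Finite) (x : X) : ∃ ρ > 0, F ∩ Metric.closedBall x ρ ⊆ {x} := by
  have hnhds : (F \ {x})ᶜ ∈ 𝓝 x := hF.sdiff.isClosed.isOpen_compl.mem_nhds (by simp)
  obtain ⟨ρ, hρ, hball⟩ := Metric.nhds_basis_closedBall.mem_iff.1 hnhds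
  refine ⟨ρ, hρ, fun y ⟨hyF, hyx⟩ => ?_⟩
  by_contra hne
  exact hball hyx ⟨hyF, hne⟩

/-- Isolate each accumulation point `x` of `S` in a ball; the part of `S` outside these balls has
no accumulation point at all. -/
theorem exists_finite_cover_derivedSet_subsingleton {X : Type*} [MetricSpace X] {S : Set X}
    (hS : (derivedSet S).Finite) :
    ∃ 𝒞 : Set (Set X), 𝒞.Finite ∧ S ⊆ ⋃₀ 𝒞 ∧ ∀ C ∈ 𝒞, (derivedSet C).Subsingleton := by
  choose ρ hρ hsep using hS.exists_closedBall_inter_subset_singleton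
  set rest := S \ ⋃ x ∈ derivedSet S, Metric.ball x (ρ x)
  refine ⟨insert rest ((fun x => S ∩ Metric.closedBall x (ρ x)) '' derivedSet S),
    (hS.image _).insert rest, fun s hs => ?_, ?_⟩
  · by_cases hnear : s ∈ ⋃ x ∈ derivedSet S, Metric.ball x (ρ x)
    · obtain ⟨x, hx, hsx⟩ := mem_iUnion₂.1 hnear
      exact ⟨_, mem_insert_of_mem _ ⟨x, hx, rfl⟩, hs, Metric.ball_subset_closedBall hsx⟩
    · exact ⟨rest, mem_insert _ _, hs, hnear⟩
  rintro C (rfl | ⟨x, -, rfl⟩)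
  · suffices derivedSet rest = ∅ by simp [this]
    refine eq_empty_of_forall_notMem fun y hy => ?_
    have hyS : y ∈ derivedSet S := derivedSet_mono _ _ sdiff_subset hy
    have hempty : Metric.ball y (ρ y) ∩ rest = ∅ :=
      eq_empty_of_forall_notMem fun s ⟨hsy, hs⟩ => hs.2 (mem_biUnion hyS hsy)
    have := (mem_derivedSet.1 hy).nhds_inter (Metric.ball_mem_nhds y (hρ y))
    rw [hempty] at this
    exact Infinite.of_accPt this finite_empty
  · refine subsingleton_singleton.anti fun y hy => hsep x ⟨?_, ?_⟩
    · exact derivedSet_mono _ _ inter_subset_left hy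
    · exact Metric.isClosed_closedBall.closure_subset
        (derivedSet_subset_closure _ (derivedSet_mono _ _ inter_subset_right hy))

noncomputable def cantorPoint (d : ℕ → Bool) : ℝ := Real.ofDigits fun i => cond (d i) (2 : Fin 3) 0

theorem continuous_cantorPoint : Continuous cantorPoint :=
  Real.continuous_ofDigits.comp (by fun_prop)

theorem cantorPoint_injective : Function.Injective cantorPoint :=
  fun _ _ h => cantorSetEquivNatToBool.symm.injective (Subtype.ext h)

theorem cantorPoint_mem_Icc (d : ℕ → Bool) : cantorPoint d ∈ Icc 0 1 :=
  ⟨Real.ofDigits_nonneg _, Real.ofDigits_le_one _⟩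

theorem cantorPoint_mem_range_ratCast {d : ℕ → Bool} {N : ℕ} (hd : ∀ i ≥ N, d i = false) :
    cantorPoint d ∈ range ((↑) : ℚ → ℝ) := by
  have htail : (fun i => cond (d (i + N)) (2 : Fin 3) 0) = fun _ => 0 := by
    ext i
    simp [hd (i + N) (Nat.le_add_left N i)]
  have hzero : Real.ofDigits (fun _ => (0 : Fin 3)) = 0 := by
    simp [Real.ofDigits, Real.ofDigitsTerm]
  refine ⟨∑ i ∈ Finset.range N, cond (d i) (2 / 3 ^ (i + 1)) 0, ?_⟩
  rw [cantorPoint, Real.ofDigits_eq_sum_add_ofDigits _ N, htail, hzero, mul_zero, add_zero,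
    Rat.cast_sum]
  refine Finset.sum_congr rfl fun i _ => ?_
  cases hdi : d i <;> simp [hdi, Real.ofDigitsTerm, div_eq_mul_inv]

open Classical in
/-- Truncating at `n` makes the coded point rational; the marker digit `n` makes the coding
injective. -/
noncomputable def membershipDigits (e : ℕ → Set ℕ) (n : ℕ) : ℕ → Bool :=
  fun k => decide (k < n ∧ n ∈ e k ∨ k = n)

theorem membershipDigits_of_lt (e : ℕ → Set ℕ) {n k : ℕ} (hk : k < n) :
    membershipDigits e n k = true ↔ n ∈ e k := by
  simp [membershipDigits, hk, hk.ne]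

theorem membershipDigits_of_gt (e : ℕ → Set ℕ) {n k : ℕ} (hk : n < k) :
    membershipDigits e n k = false := by
  simp [membershipDigits, hk.not_gt, hk.ne']

theorem membershipDigits_injective (e : ℕ → Set ℕ) : Function.Injective (membershipDigits e) := by
  have hle : ∀ {m n}, membershipDigits e m = membershipDigits e n → m ≤ n := fun {m n} h => by
    have hm : membershipDigits e n m = true := by rw [← h]; simp [membershipDigits]
    simp only [membershipDigits, decide_eq_true_eq] at hm
    omega
  exact fun m n h => le_antisymm (hle h) (hle h.symm)

theorem exists_ratIccToReal_comp_eq (e : ℕ → Set ℕ) :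
    ∃ φ : ℕ → Icc (0 : ℚ) 1, ratIccToReal ∘ φ = cantorPoint ∘ membershipDigits e := by
  have hmem : ∀ n, ∃ q, ratIccToReal q = cantorPoint (membershipDigits e n) := fun n =>
    mem_range_ratIccToReal (cantorPoint_mem_Icc _)
      (cantorPoint_mem_range_ratCast fun _ hk => membershipDigits_of_gt e hk)
  choose φ hφ using hmem
  exact ⟨φ, funext hφ⟩

section Splitting

variable {I : Set (Set ℕ)} {e : ℕ → Set ℕ}

/-- Along `Y` the digits converge, so no `e k` splits `Y`. -/
theorem mem_of_derivedSet_subsingleton (hfin : ContainsFin I)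
    (hsplit : ∀ Y ∉ I, ∃ k, (e k ∩ Y).Infinite ∧ (Y \ e k).Infinite) {Y : Set ℕ}
    (hacc : (derivedSet ((cantorPoint ∘ membershipDigits e) '' Y)).Subsingleton) : Y ∈ I := by
  by_contra hYI
  obtain ⟨d, hd⟩ := exists_tendsto_of_derivedSet_subsingleton continuous_cantorPoint
    cantorPoint_injective (cantorPoint_injective.comp (membershipDigits_injective e))
    (fun hY => hYI (hfin Y hY)) hacc
  obtain ⟨k, hin, hout⟩ := hsplit Y hYI
  have hstable : ∀ᶠ n in cofinite ⊓ 𝓟 Y, (n ∈ e k ↔ d k = true) := by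
    have hdigit := tendsto_pure.1 (nhds_discrete Bool ▸ tendsto_pi_nhds.1 hd k)
    have hlarge : ∀ᶠ n in cofinite ⊓ 𝓟 Y, k < n :=
      inf_le_left (a := cofinite) (Nat.cofinite_eq_atTop ▸ eventually_gt_atTop k)
    filter_upwards [hdigit, hlarge] with n hn hkn
    rw [← membershipDigits_of_lt e hkn, hn]
  rw [eventually_inf_principal, eventually_cofinite] at hstable
  cases hdk : d k
  · exact hin (hstable.subset fun n hn => by simp [hdk, hn.1, hn.2])
  · exact hout (hstable.subset fun n hn => by simp [hdk, hn.1, hn.2])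

theorem katetovLE_of_countSplitting (hI : IsIdeal I) (hfin : ContainsFin I)
    (h : CountSplitting I) : KatetovLE convIdeal I := by
  obtain ⟨e, hsplit⟩ := h.exists_seq
  obtain ⟨φ, hφ⟩ := exists_ratIccToReal_comp_eq e
  refine ⟨φ, fun A hA => ?_⟩
  obtain ⟨𝒞, h𝒞, hcover, hacc⟩ :=
    exists_finite_cover_derivedSet_subsingleton (mem_convIdeal_iff.1 hA)
  have hsub : φ ⁻¹' A ⊆ ⋃ C ∈ 𝒞, φ ⁻¹' (A ∩ ratIccToReal ⁻¹' C) := fun n hn => by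
    obtain ⟨C, hC, hnC⟩ := hcover (mem_image_of_mem ratIccToReal hn)
    exact mem_biUnion hC ⟨hn, hnC⟩
  refine hI.mono hsub (hI.biUnion_mem h𝒞 fun C hC =>
    mem_of_derivedSet_subsingleton hfin hsplit ?_)
  refine (hacc C hC).anti (derivedSet_mono _ _ ?_)
  rw [← hφ]
  rintro _ ⟨n, ⟨-, hn⟩, rfl⟩
  exact hn

theorem countSplitting_of_katetovLE (hI : IsIdeal I) (h : KatetovLE convIdeal I) :
    CountSplitting I := by
  obtain ⟨φ, hφ⟩ := h
  set cut : ℚ → Set ℕ := fun c => φ ⁻¹' {q | (q : ℚ) < c}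
  refine ⟨range cut ∩ {X | X.Infinite}, (countable_range cut).mono inter_subset_left,
    fun X hX => hX.2, fun Y hY => ?_⟩
  have hacc : (derivedSet ((ratIccToReal ∘ φ) '' Y)).Infinite := by
    rw [image_comp]
    exact fun hfin => hY (hI.mono (subset_preimage_image φ Y) (hφ _ (mem_convIdeal_iff.2 hfin)))
  obtain ⟨x, hx, y, hy, hxy⟩ := hacc.nontrivial.exists_lt
  obtain ⟨c, hxc, hcy⟩ := exists_rat_btwn hxy
  have hlow : (cut c ∩ Y).Infinite := by
    refine (hx.infinite_preimage_inter (Iio_mem_nhds hxc)).mono ?_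
    rintro n ⟨hnY, hn : ((φ n : ℚ) : ℝ) < c⟩
    exact ⟨(by exact_mod_cast hn : (φ n : ℚ) < c), hnY⟩
  have hhigh : (Y \ cut c).Infinite := by
    refine (hy.infinite_preimage_inter (Ioi_mem_nhds hcy)).mono ?_
    rintro n ⟨hnY, hn : (c : ℝ) < (φ n : ℚ)⟩
    exact ⟨hnY, fun hlt : (φ n : ℚ) < c => lt_asymm hn (by exact_mod_cast hlt)⟩
  exact ⟨cut c, ⟨mem_range_self c, hlow.mono inter_subset_left⟩, hlow, hhigh⟩

end Splitting

theorem splitting_iff_conv_katetov_general (I : Set (Set ℕ)) (hI : IsIdeal I)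
    (hfin : ContainsFin I) :
    CountSplitting I ↔ KatetovLE convIdeal I :=
  ⟨katetovLE_of_countSplitting hI hfin, countSplitting_of_katetovLE hI⟩

/-- A tall ideal on `ℕ` admits a countable splitting family iff `conv ≤_K I`. -/
theorem splitting_iff_conv_katetov (I : Set (Set ℕ)) (hI : IsIdeal I)
    (hfin : ContainsFin I) (htall : Tall I) :
    CountSplitting I ↔ KatetovLE convIdeal I :=
  splitting_iff_conv_katetov_general I hI hfin
end

section
/- (Filipów–Mrożek–Recław–Szuca) Let I be an ideal on ℕ containing all finite sets. The following are equivalent: (i) the restriction I↾A is FinBW for every A ∉ I; (ii) I is wp⁺, i.e., for every scheme {A_s : s ∈ 2^{<ω}} with A_∅ ∈ I⁺ there are B ∈ I⁺ and α ∈ 2^ℕ such that B ⊆* A_{α↾n} for all n. -/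
open Set Filter Topology

/-- `I` (an ideal on a countable set `X`) is FinBW: every bounded real sequence
indexed by `X` has a convergent subsequence indexed by an `I`-positive set
(convergence along the cofinite filter of the index set). -/
def FinBW {X : Type*} (I : Set (Set X)) : Prop :=
  ∀ x : X → ℝ, (∃ M : ℝ, ∀ n, |x n| ≤ M) →
    ∃ A : Set X, A ∉ I ∧ ∃ l : ℝ, Tendsto (fun n : ↥A => x ↑n) cofinite (nhds l)

/-- Restriction `I↾A` as an ideal on `↥A`. -/
def restrictIdeal {X : Type*} (I : Set (Set X)) (A : Set X) : Set (Set ↥A) :=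
  {B : Set ↥A | ((↑) '' B : Set X) ∈ I}

/-- A scheme: a family indexed by finite binary sequences with
`A_s = A_{s⌢0} ∪ A_{s⌢1}` disjointly. -/
def IsScheme (A : List Bool → Set ℕ) : Prop :=
  ∀ s : List Bool,
    A s = A (s ++ [false]) ∪ A (s ++ [true]) ∧ A (s ++ [false]) ∩ A (s ++ [true]) = ∅

/-- `I` is wp⁺. -/
def WPplus (I : Set (Set ℕ)) : Prop :=
  ∀ A : List Bool → Set ℕ, IsScheme A → A [] ∉ I →
    ∃ B : Set ℕ, B ∉ I ∧ ∃ α : ℕ → Bool,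
      ∀ n : ℕ, (B \ A (List.ofFn fun i : Fin n => α ↑i)).Finite

/-!
Both directions go through the Cantor space `ℕ → Bool`. If every `I↾A` is FinBW and `T` is a
scheme, every `n ∈ T []` follows a branch of `T`; coding branches by points of the Cantor set
`C ⊆ ℝ` and applying FinBW gives an `I`-positive `B` on which the codes converge. As `C` is closed
and homeomorphic to `ℕ → Bool`, the branches of the points of `B` converge to some `α`, i.e. almost
all of them begin with `α↾n`. Conversely, a bounded sequence `x` factors as `g ∘ c` with
`g : (ℕ → Bool) → ℝ` continuous (binary expansions); the cylinders of `c` form a scheme, wp⁺ makes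
`c` converge to some `α` along an `I`-positive set, and there `x` converges to `g α`.
-/

/-- `initSeg α n` is `α↾n`. -/
def initSeg (α : ℕ → Bool) (n : ℕ) : List Bool := List.ofFn fun i : Fin n => α i

@[simp]
lemma length_initSeg (α : ℕ → Bool) (n : ℕ) : (initSeg α n).length = n :=
  List.length_ofFn

@[simp]
lemma initSeg_zero (α : ℕ → Bool) : initSeg α 0 = [] := rfl

lemma initSeg_succ (α : ℕ → Bool) (n : ℕ) : initSeg α (n + 1) = initSeg α n ++ [α n] := by
  rw [initSeg, List.ofFn_succ', List.concat_eq_append]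
  rfl

lemma initSeg_eq_initSeg_iff {α β : ℕ → Bool} {n : ℕ} :
    initSeg α n = initSeg β n ↔ ∀ k < n, α k = β k := by
  simp [initSeg, List.ofFn_inj, funext_iff, Fin.forall_iff]

lemma tendsto_nhds_iff_eventually_initSeg_eq {ι : Type*} {l : Filter ι} {u : ι → ℕ → Bool}
    {β : ℕ → Bool} : Tendsto u l (𝓝 β) ↔ ∀ n, ∀ᶠ i in l, initSeg (u i) n = initSeg β n := by
  simp only [tendsto_pi_nhds, nhds_discrete, tendsto_pure, initSeg_eq_initSeg_iff]
  refine ⟨fun h n => ?_, fun h k => ?_⟩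
  · exact (eventually_all_finite (finite_lt_nat n)).mpr fun k _ => h k
  · exact (h (k + 1)).mono fun i hi => hi k k.lt_succ_self

lemma Topology.IsClosedEmbedding.exists_tendsto_of_tendsto_comp {K Y ι : Type*}
    [TopologicalSpace K] [TopologicalSpace Y] [Nonempty K] {e : K → Y}
    (he : IsClosedEmbedding e) {l : Filter ι} {u : ι → K} {y : Y}
    (h : Tendsto (e ∘ u) l (𝓝 y)) : ∃ β, Tendsto u l (𝓝 β) := by
  rcases l.eq_or_neBot with rfl | _
  · exact ⟨Classical.arbitrary K, tendsto_bot⟩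
  obtain ⟨β, rfl⟩ : y ∈ range e :=
    he.isClosed_range.mem_of_tendsto h (Eventually.of_forall fun _ => mem_range_self _)
  exact ⟨β, he.tendsto_nhds_iff.mpr h⟩

lemma exists_isClosedEmbedding_cantor_unitInterval :
    ∃ e : (ℕ → Bool) → ℝ, IsClosedEmbedding e ∧ ∀ β, e β ∈ Icc 0 1 :=
  ⟨(↑) ∘ cantorSetHomeomorphNatToBool.symm,
    isClosed_cantorSet.isClosedEmbedding_subtypeVal.comp
      cantorSetHomeomorphNatToBool.symm.isClosedEmbedding,
    fun β => cantorSet_subset_unitInterval (cantorSetHomeomorphNatToBool.symm β).2⟩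

lemma exists_continuous_cantor_Icc_subset_range (a b : ℝ) :
    ∃ g : (ℕ → Bool) → ℝ, Continuous g ∧ Icc a b ⊆ range g := by
  refine ⟨fun β => a + (b - a) * Real.ofDigits (finTwoEquiv.symm ∘ β),
    continuous_const.add (continuous_const.mul (Real.continuous_ofDigits.comp
      (continuous_pi fun k => continuous_of_discreteTopology.comp (continuous_apply k)))), ?_⟩
  rintro t ⟨hat, htb⟩
  obtain ⟨d, -, hd⟩ := Real.ofDigits_SurjOn one_lt_two
    (⟨div_nonneg (sub_nonneg.2 hat) (sub_nonneg.2 (hat.trans htb)),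
      div_le_one_of_le₀ (by linarith) (sub_nonneg.2 (hat.trans htb))⟩ :
      (t - a) / (b - a) ∈ Icc 0 1)
  refine ⟨finTwoEquiv ∘ d, ?_⟩
  simp only [← Function.comp_assoc, Equiv.symm_comp_self, Function.id_comp, hd]
  rcases (hat.trans htb).eq_or_lt with hab | hab
  · simp [← hab, le_antisymm htb (hab ▸ hat)]
  · rw [mul_div_cancel₀ _ (sub_pos.2 hab).ne']
    ring

-- `List.ofFn` rather than `initSeg`, so that the recursion is visibly well founded.
open Classical in
noncomputable def schemeBranch (T : List Bool → Set ℕ) (n k : ℕ) : Bool :=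
  decide (n ∈ T ((List.ofFn fun i : Fin k => schemeBranch T n i) ++ [true]))

open Classical in
lemma schemeBranch_eq_true_iff {T : List Bool → Set ℕ} {n k : ℕ} :
    schemeBranch T n k = true ↔ n ∈ T (initSeg (schemeBranch T n) k ++ [true]) := by
  rw [schemeBranch]
  exact decide_eq_true_iff

lemma mem_initSeg_schemeBranch {T : List Bool → Set ℕ} (hT : IsScheme T) {n : ℕ}
    (hn : n ∈ T []) (k : ℕ) : n ∈ T (initSeg (schemeBranch T n) k) := by
  induction k with
  | zero => exact hn
  | succ k ih =>
    rw [initSeg_succ]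
    cases hb : schemeBranch T n k
    · exact ((hT _).1 ▸ ih).resolve_right fun h => by simp [schemeBranch_eq_true_iff.mpr h] at hb
    · exact schemeBranch_eq_true_iff.mp hb

def codeScheme (A : Set ℕ) (c : A → ℕ → Bool) (s : List Bool) : Set ℕ :=
  Subtype.val '' {m | initSeg (c m) s.length = s}

section codeScheme

variable {A : Set ℕ} (c : A → ℕ → Bool)

lemma codeScheme_nil : codeScheme A c [] = A := by
  simp [codeScheme]

lemma coe_mem_codeScheme_initSeg_iff {m : A} {α : ℕ → Bool} {n : ℕ} :
    ↑m ∈ codeScheme A c (initSeg α n) ↔ initSeg (c m) n = initSeg α n := by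
  simp [codeScheme, Subtype.val_injective.mem_set_image]

lemma isScheme_codeScheme : IsScheme (codeScheme A c) := by
  intro s
  simp only [codeScheme, ← image_union, ← image_inter Subtype.val_injective,
    List.length_append, List.length_singleton, initSeg_succ, List.append_singleton_inj]
  constructor
  · congr 1
    ext m
    cases h : c m s.length <;> simp [h]
  · refine image_eq_empty.mpr (eq_empty_of_forall_notMem fun m hm => ?_)
    exact Bool.false_ne_true (hm.1.2.symm.trans hm.2.2)

end codeScheme

lemma IsIdeal.inter_notMem_of_diff_finite {X : Type*} {I : Set (Set X)} (hI : IsIdeal I)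
    (hfin : ContainsFin I) {A B : Set X} (hB : B ∉ I) (hBA : (B \ A).Finite) : A ∩ B ∉ I :=
  fun h => hB <| hI.2.2.2 _ _ (fun n hn => (em (n ∈ A)).imp (⟨·, hn⟩) (⟨hn, ·⟩))
    (hI.2.2.1 _ _ h (hfin _ hBA))

theorem wpplus_of_forall_finBW_restrictIdeal {I : Set (Set ℕ)}
    (h : ∀ A, A ∉ I → FinBW (restrictIdeal I A)) : WPplus I := by
  intro T hT hT0
  obtain ⟨e, he, he01⟩ := exists_isClosedEmbedding_cantor_unitInterval
  obtain ⟨A', hA', l, hl⟩ := h _ hT0 (fun m => e (schemeBranch T m))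
    ⟨1, fun m => abs_le.mpr ⟨by linarith [(he01 (schemeBranch T m)).1], (he01 _).2⟩⟩
  obtain ⟨α, hα⟩ := he.exists_tendsto_of_tendsto_comp hl
  refine ⟨Subtype.val '' A', hA', α, fun n => ?_⟩
  have hbad := eventually_cofinite.mp (tendsto_nhds_iff_eventually_initSeg_eq.mp hα n)
  refine (hbad.image fun m : A' => (m : ℕ)).subset ?_
  rintro _ ⟨⟨m, hm, rfl⟩, hmT⟩
  refine ⟨⟨m, hm⟩, fun h => hmT ?_, rfl⟩
  change ↑m ∈ T (initSeg α n)
  exact h ▸ mem_initSeg_schemeBranch hT m.2 n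

theorem finBW_restrictIdeal_of_wpplus {I : Set (Set ℕ)} (hI : IsIdeal I) (hfin : ContainsFin I)
    (h : WPplus I) {A : Set ℕ} (hA : A ∉ I) : FinBW (restrictIdeal I A) := by
  rintro x ⟨M, hM⟩
  obtain ⟨g, hg, hgM⟩ := exists_continuous_cantor_Icc_subset_range (-M) M
  choose c hc using fun m => hgM (abs_le.mp (hM m))
  obtain ⟨B, hB, α, hα⟩ := h (codeScheme A c) (isScheme_codeScheme c) (by rwa [codeScheme_nil])
  refine ⟨Subtype.val ⁻¹' B, ?_, g α, ?_⟩
  · change Subtype.val '' (Subtype.val ⁻¹' B) ∉ I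
    rw [Subtype.image_preimage_coe]
    exact hI.inter_notMem_of_diff_finite hfin hB (by simpa [codeScheme_nil] using hα 0)
  · simp only [← hc]
    refine (hg.tendsto α).comp (tendsto_nhds_iff_eventually_initSeg_eq.mpr fun n => ?_)
    filter_upwards [(Subtype.val_injective.comp Subtype.val_injective).tendsto_cofinite.eventually
      (hα n).eventually_cofinite_notMem] with m hm
    by_contra hne
    exact hm ⟨m.2, (coe_mem_codeScheme_initSeg_iff c).not.mpr hne⟩

/-- Filipów–Mrożek–Recław–Szuca: `I↾A` is FinBW for every `I`-positive `A`
iff `I` is wp⁺. -/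
theorem hereditarily_finbw_iff_wpplus (I : Set (Set ℕ)) (hI : IsIdeal I)
    (hfin : ContainsFin I) :
    (∀ A : Set ℕ, A ∉ I → FinBW (restrictIdeal I A)) ↔ WPplus I :=
  ⟨wpplus_of_forall_finBW_restrictIdeal, fun h _ hA => finBW_restrictIdeal_of_wpplus hI hfin h hA⟩
end

section
/- Let I be an ideal on ℕ containing all finite sets. Then I is Ramsey (I⁺ → (I⁺)²₂) if and only if I is both q⁺ and wp⁺. -/
open Set Filter Topology

/-- `I` is Ramsey (`I⁺ → (I⁺)²₂`): for every (symmetric) 2-coloring of pairs and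
every `I`-positive `X` there is a homogeneous `I`-positive `Y ⊆ X`. -/
def RamseyIdeal (I : Set (Set ℕ)) : Prop :=
  ∀ c : ℕ → ℕ → Bool, (∀ x y, c x y = c y x) →
    ∀ X : Set ℕ, X ∉ I → ∃ Y : Set ℕ, Y ∉ I ∧ Y ⊆ X ∧
      ∃ b : Bool, ∀ x ∈ Y, ∀ y ∈ Y, x ≠ y → c x y = b

/-- `I` is q⁺: every partition of an `I`-positive set into finite pieces admits
an `I`-positive partial selector. -/
def Qplus (I : Set (Set ℕ)) : Prop :=
  ∀ A : Set ℕ, A ∉ I → ∀ F : ℕ → Set ℕ, (∀ n, (F n).Finite) →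
    (⋃ n, F n) = A → (∀ m n, m ≠ n → F m ∩ F n = ∅) →
    ∃ S : Set ℕ, S ∉ I ∧ S ⊆ A ∧ ∀ n, (S ∩ F n).Subsingleton

section AuxiliaryProofs

open scoped Classical


lemma pos_union {I : Set (Set ℕ)} (hI : IsIdeal I) {A B : Set ℕ} (h : A ∪ B ∉ I) :
    A ∉ I ∨ B ∉ I := by
  by_contra hc
  push_neg at hc
  exact h (hI.2.2.1 _ _ hc.1 hc.2)

lemma pos_subset {I : Set (Set ℕ)} (hI : IsIdeal I) {A B : Set ℕ} (h : A ⊆ B) (hA : A ∉ I) :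
    B ∉ I := fun hB => hA (hI.2.2.2 _ _ h hB)

lemma pos_infinite {I : Set (Set ℕ)} (hfin : ContainsFin I) {B : Set ℕ} (hB : B ∉ I) :
    B.Infinite := fun h => hB (hfin B h)

lemma pos_inter_of_diff_finite {I : Set (Set ℕ)} (hI : IsIdeal I) (hfin : ContainsFin I)
    {B C : Set ℕ} (hB : B ∉ I) (h : (B \ C).Finite) : B ∩ C ∉ I := by
  intro hmem
  apply hB
  apply hI.2.2.2 B ((B ∩ C) ∪ (B \ C))
  · intro x hx
    by_cases hxC : x ∈ C
    · exact Or.inl ⟨hx, hxC⟩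
    · exact Or.inr ⟨hx, hxC⟩
  · exact hI.2.2.1 _ _ hmem (hfin _ h)

lemma ramsey_to_qplus {I : Set (Set ℕ)} (hI : IsIdeal I) (hfin : ContainsFin I)
    (hR : RamseyIdeal I) : Qplus I := by
  intro A hA F hFfin hFun hFdis
  classical
  set c : ℕ → ℕ → Bool := fun x y => decide (∃ n, x ∈ F n ∧ y ∈ F n) with hc
  have hsym : ∀ x y, c x y = c y x := by
    intro x y
    simp only [hc]
    exact decide_eq_decide.mpr ⟨fun ⟨n, h1, h2⟩ => ⟨n, h2, h1⟩, fun ⟨n, h1, h2⟩ => ⟨n, h2, h1⟩⟩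
  obtain ⟨Y, hY, hYsub, b, hhom⟩ := hR c hsym A hA
  cases b with
  | true =>
    exfalso
    have hYne : Y.Nonempty := by
      rcases Set.eq_empty_or_nonempty Y with h | h
      · exact absurd (h ▸ hI.1) hY
      · exact h
    obtain ⟨x₀, hx₀⟩ := hYne
    have hx₀A : x₀ ∈ (⋃ n, F n) := hFun ▸ hYsub hx₀
    obtain ⟨m, hm⟩ := Set.mem_iUnion.mp hx₀A
    apply hY
    apply hI.2.2.2 Y (F m) ?_ (hfin _ (hFfin m))
    intro y hy
    by_cases hxy : y = x₀
    · exact hxy ▸ hm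
    · have := hhom x₀ hx₀ y hy (fun h => hxy h.symm)
      have hex : ∃ n, x₀ ∈ F n ∧ y ∈ F n := of_decide_eq_true this
      obtain ⟨n, hn1, hn2⟩ := hex
      have : n = m := by
        by_contra hnm
        have := hFdis n m hnm
        exact absurd (this ▸ (Set.mem_inter hn1 hm)) (Set.notMem_empty x₀)
      exact this ▸ hn2
  | false =>
    refine ⟨Y, hY, hYsub, fun n x hx y hy => ?_⟩
    by_contra hne
    have h1 := hhom x hx.1 y hy.1 hne
    have h2 : c x y = true := decide_eq_true ⟨n, hx.2, hy.2⟩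
    rw [h1] at h2
    exact Bool.false_ne_true h2


noncomputable def nodeOf (A : List Bool → Set ℕ) (x : ℕ) : ℕ → List Bool
  | 0 => []
  | n+1 => nodeOf A x n ++ [decide (x ∈ A (nodeOf A x n ++ [true]))]

noncomputable def bitOf (A : List Bool → Set ℕ) (x n : ℕ) : Bool :=
  decide (x ∈ A (nodeOf A x n ++ [true]))

lemma nodeOf_succ (A : List Bool → Set ℕ) (x n : ℕ) :
    nodeOf A x (n+1) = nodeOf A x n ++ [bitOf A x n] := rfl

lemma mem_nodeOf {A : List Bool → Set ℕ} (hA : IsScheme A) {x : ℕ} (hx : x ∈ A []) :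
    ∀ n, x ∈ A (nodeOf A x n)
  | 0 => hx
  | n+1 => by
    have ih := mem_nodeOf hA hx n
    rw [nodeOf_succ]
    by_cases hb : x ∈ A (nodeOf A x n ++ [true])
    · have hbit : bitOf A x n = true := decide_eq_true hb
      rw [hbit]; exact hb
    · have hbit : bitOf A x n = false := decide_eq_false hb
      rw [hbit]
      have hcup := (hA (nodeOf A x n)).1
      rw [hcup] at ih
      rcases ih with h | h
      · exact h
      · exact absurd h hb

lemma nodeOf_eq_ofFn (A : List Bool → Set ℕ) (x : ℕ) :
    ∀ n, nodeOf A x n = List.ofFn (fun i : Fin n => bitOf A x i)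
  | 0 => rfl
  | n+1 => by
    rw [nodeOf_succ, nodeOf_eq_ofFn A x n, List.ofFn_succ']
    simp [List.concat_eq_append]

noncomputable def colOf (A : List Bool → Set ℕ) (x y : ℕ) : Bool :=
  if h : ∃ m, bitOf A x m ≠ bitOf A y m then bitOf A (min x y) (Nat.find h) else true

lemma colOf_symm (A : List Bool → Set ℕ) (x y : ℕ) : colOf A x y = colOf A y x := by
  unfold colOf
  by_cases h : ∃ m, bitOf A x m ≠ bitOf A y m
  · have h' : ∃ m, bitOf A y m ≠ bitOf A x m := ⟨h.choose, (h.choose_spec).symm⟩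
    rw [dif_pos h, dif_pos h']
    have hfind : Nat.find h = Nat.find h' :=
      le_antisymm (Nat.find_le (Nat.find_spec h').symm) (Nat.find_le (Nat.find_spec h).symm)
    rw [hfind, min_comm]
  · have h' : ¬ ∃ m, bitOf A y m ≠ bitOf A x m := fun ⟨m, hm⟩ => h ⟨m, hm.symm⟩
    rw [dif_neg h, dif_neg h']

lemma ramsey_to_wpplus {I : Set (Set ℕ)} (hI : IsIdeal I) (hfin : ContainsFin I)
    (hR : RamseyIdeal I) : WPplus I := by
  intro A hA hA0
  obtain ⟨Y, hY, hYsub, b, hhom⟩ := hR (colOf A) (colOf_symm A) (A []) hA0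
  have hYinf : Y.Infinite := pos_infinite hfin hY
  -- first-difference bits
  have hfd : ∀ x ∈ Y, ∀ y ∈ Y, x < y → ∀ m, (∀ k < m, bitOf A x k = bitOf A y k) →
      bitOf A x m ≠ bitOf A y m → bitOf A x m = b ∧ bitOf A y m = !b := by
    intro x hx y hy hxy m hag hne
    have hex : ∃ k, bitOf A x k ≠ bitOf A y k := ⟨m, hne⟩
    have hfind : Nat.find hex = m := by
      rw [Nat.find_eq_iff]
      exact ⟨hne, fun k hk => not_not_intro (hag k hk)⟩
    have hcol : colOf A x y = b := hhom x hx y hy (ne_of_lt hxy)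
    have heq : colOf A x y = bitOf A x m := by
      rw [colOf, dif_pos hex, hfind, min_eq_left hxy.le]
    rw [heq] at hcol
    refine ⟨hcol, ?_⟩
    rw [hcol] at hne
    by_contra hne2
    rcases Bool.eq_false_or_eq_true (bitOf A y m) with h | h <;>
      rcases Bool.eq_false_or_eq_true b with hb2 | hb2 <;>
        rw [h, hb2] at hne hne2 <;> simp at hne hne2
  -- the sets of "early splitters" are finite
  have hSfin : ∀ n, {x ∈ Y | ∃ y ∈ Y, x < y ∧ ∃ m < n, bitOf A x m ≠ bitOf A y m}.Finite := by
    intro n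
    induction n with
    | zero =>
      convert Set.finite_empty using 2
      ext x
      simp
    | succ n ih =>
      by_contra hinf
      have hC : ({x ∈ Y | ∃ y ∈ Y, x < y ∧ ∃ m < n + 1, bitOf A x m ≠ bitOf A y m} \
          {x ∈ Y | ∃ y ∈ Y, x < y ∧ ∃ m < n, bitOf A x m ≠ bitOf A y m}).Infinite :=
        Set.Infinite.diff (fun h => hinf h) ih
      have hcrit : ∀ x ∈ ({x ∈ Y | ∃ y ∈ Y, x < y ∧ ∃ m < n + 1, bitOf A x m ≠ bitOf A y m} \
          {x ∈ Y | ∃ y ∈ Y, x < y ∧ ∃ m < n, bitOf A x m ≠ bitOf A y m}),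
          x ∈ Y ∧ (∀ z ∈ Y, x < z → ∀ k < n, bitOf A x k = bitOf A z k) ∧
          ∃ y ∈ Y, x < y ∧ (∀ k < n, bitOf A x k = bitOf A y k) ∧
            bitOf A x n ≠ bitOf A y n := by
        rintro x ⟨⟨hxY, y, hyY, hxy, m, hm, hne⟩, hnot⟩
        simp only [Set.mem_setOf_eq] at hnot
        have hforall : ∀ z ∈ Y, x < z → ∀ k < n, bitOf A x k = bitOf A z k := by
          intro z hz hxz k hk
          by_contra hne'
          exact hnot ⟨hxY, z, hz, hxz, k, hk, hne'⟩
        have hmn : m = n := by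
          rcases Nat.lt_succ_iff_lt_or_eq.mp hm with h | h
          · exact absurd (hforall y hyY hxy m h) hne
          · exact h
        exact ⟨hxY, hforall, y, hyY, hxy, hforall y hyY hxy, hmn ▸ hne⟩
      obtain ⟨x₁, hx₁⟩ := hC.nonempty
      obtain ⟨hx₁Y, hcrit₁, y₁, hy₁Y, hxy₁, hag₁, hne₁⟩ := hcrit x₁ hx₁
      obtain ⟨x₂, hx₂C, hx₂gt⟩ := hC.exists_gt y₁
      obtain ⟨hx₂Y, hcrit₂, y₂, hy₂Y, hxy₂, hag₂, hne₂⟩ := hcrit x₂ hx₂C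
      have hx₁x₂ : x₁ < x₂ := lt_trans hxy₁ hx₂gt
      have hagx₁x₂ : ∀ k < n, bitOf A x₁ k = bitOf A x₂ k := hcrit₁ x₂ hx₂Y hx₁x₂
      have hagy₁x₂ : ∀ k < n, bitOf A y₁ k = bitOf A x₂ k :=
        fun k hk => (hag₁ k hk).symm.trans (hagx₁x₂ k hk)
      obtain ⟨hb₁, hb₁'⟩ := hfd x₁ hx₁Y y₁ hy₁Y hxy₁ n hag₁ hne₁
      obtain ⟨hb₂, hb₂'⟩ := hfd x₂ hx₂Y y₂ hy₂Y hxy₂ n hag₂ hne₂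
      by_cases hcase : bitOf A y₁ n = bitOf A x₂ n
      · rw [hb₁', hb₂] at hcase
        exact absurd hcase (by cases b <;> simp)
      · obtain ⟨hb₃, _⟩ := hfd y₁ hy₁Y x₂ hx₂Y hx₂gt n hagy₁x₂ hcase
        rw [hb₁'] at hb₃
        exact absurd hb₃ (by cases b <;> simp)
  -- choose witnesses and build the branch
  have hw : ∀ n : ℕ, ∃ w, w ∈ Y \ {x ∈ Y | ∃ y ∈ Y, x < y ∧ ∃ m < n + 1, bitOf A x m ≠ bitOf A y m} :=
    fun n => (hYinf.diff (hSfin (n+1))).nonempty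
  choose w hw using hw
  refine ⟨Y, hY, fun n => bitOf A (w n) n, ?_⟩
  intro n
  have hγ : ∀ m, ∀ x ∈ Y, w m < x → bitOf A x m = bitOf A (w m) m := by
    intro m x hx hlt
    have hnot := (hw m).2
    simp only [Set.mem_setOf_eq] at hnot
    by_contra hne
    exact hnot ⟨(hw m).1, x, hx, hlt, m, m.lt_succ_self, fun h => hne h.symm⟩
  have hsub : Y \ A (List.ofFn fun i : Fin n => bitOf A (w ↑i) ↑i) ⊆
      Set.Iic (Finset.sup (Finset.range n) w) := by
    intro x hx
    simp only [Set.mem_Iic]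
    by_contra hgt
    push_neg at hgt
    have hxbig : ∀ m < n, w m < x :=
      fun m hm => lt_of_le_of_lt (Finset.le_sup (Finset.mem_range.mpr hm)) hgt
    have hnode : nodeOf A x n = List.ofFn fun i : Fin n => bitOf A (w ↑i) ↑i := by
      rw [nodeOf_eq_ofFn]
      exact congrArg List.ofFn (funext fun i => hγ i x hx.1 (hxbig i i.2))
    exact hx.2 (hnode ▸ mem_nodeOf hA (hYsub hx.1) n)
  exact (Set.finite_Iic _).subset hsub

def schemeOf (X : Set ℕ) (c : ℕ → ℕ → Bool) (s : List Bool) : Set ℕ :=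
  {z | z ∈ X ∧ ∀ i < s.length, s.getD i false = (decide (i < z) && c i z)}

lemma mem_schemeOf_append {X : Set ℕ} {c : ℕ → ℕ → Bool} {s : List Bool} {b : Bool} {z : ℕ} :
    z ∈ schemeOf X c (s ++ [b]) ↔
      z ∈ schemeOf X c s ∧ b = (decide (s.length < z) && c s.length z) := by
  simp only [schemeOf, Set.mem_setOf_eq, List.length_append, List.length_singleton]
  constructor
  · rintro ⟨hX, h⟩
    refine ⟨⟨hX, fun i hi => ?_⟩, ?_⟩
    · have h' := h i (by omega)
      rwa [List.getD_append _ _ _ _ hi] at h'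
    · have h' := h s.length (by omega)
      rwa [List.getD_append_right _ _ _ _ (le_refl _), Nat.sub_self] at h'
  · rintro ⟨⟨hX, h⟩, hb⟩
    refine ⟨hX, fun i hi => ?_⟩
    rcases Nat.lt_or_ge i s.length with h' | h'
    · rw [List.getD_append _ _ _ _ h']
      exact h i h'
    · have hi' : i = s.length := by omega
      subst hi'
      rw [List.getD_append_right _ _ _ _ (le_refl _), Nat.sub_self]
      exact hb

lemma schemeOf_nil (X : Set ℕ) (c : ℕ → ℕ → Bool) : schemeOf X c [] = X := by
  ext z; simp [schemeOf]

lemma isScheme_schemeOf (X : Set ℕ) (c : ℕ → ℕ → Bool) : IsScheme (schemeOf X c) := by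
  intro s
  refine ⟨?_, ?_⟩
  · ext z
    constructor
    · intro hz
      rcases hbb : (decide (s.length < z) && c s.length z) with _ | _
      · exact Or.inl (mem_schemeOf_append.mpr ⟨hz, hbb.symm⟩)
      · exact Or.inr (mem_schemeOf_append.mpr ⟨hz, hbb.symm⟩)
    · rintro (h | h) <;> exact (mem_schemeOf_append.mp h).1
  · apply Set.eq_empty_iff_forall_notMem.mpr
    rintro z ⟨h0, h1⟩
    have e0 := (mem_schemeOf_append.mp h0).2
    have e1 := (mem_schemeOf_append.mp h1).2
    rw [← e0] at e1
    exact Bool.false_ne_true (e1.symm)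

lemma schemeOf_color {X : Set ℕ} {c : ℕ → ℕ → Bool} {z x : ℕ} {α : ℕ → Bool}
    (hz : z ∈ schemeOf X c (List.ofFn fun i : Fin (x+1) => α i)) (hxz : x < z) :
    c x z = α x := by
  have hlen : (List.ofFn fun i : Fin (x+1) => α i).length = x + 1 := by simp
  have h := hz.2 x (by omega)
  rw [List.getD_eq_getElem _ _ (by omega), List.getElem_ofFn] at h
  simp only [decide_eq_true hxz, Bool.true_and] at h
  exact h.symm

lemma qplus_wpplus_to_ramsey {I : Set (Set ℕ)} (hI : IsIdeal I) (hfin : ContainsFin I)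
    (hq : Qplus I) (hw : WPplus I) : RamseyIdeal I := by
  intro c hsym X hX
  classical
  -- apply wp⁺ to the coloring scheme
  have hX' : schemeOf X c [] ∉ I := by rwa [schemeOf_nil]
  obtain ⟨B₀, hB₀, α, hB₀fin⟩ := hw (schemeOf X c) (isScheme_schemeOf X c) hX'
  set B : Set ℕ := B₀ ∩ X with hBdef
  have hB0X : (B₀ \ X).Finite := by
    have h := hB₀fin 0
    rwa [show (List.ofFn fun i : Fin 0 => α ↑i) = [] from rfl, schemeOf_nil] at h
  have hBpos : B ∉ I := pos_inter_of_diff_finite hI hfin hB₀ hB0X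
  -- exception sets and the bound function f
  have hEfin : ∀ x : ℕ, (B \ schemeOf X c (List.ofFn fun i : Fin (x+1) => α ↑i)).Finite :=
    fun x => (hB₀fin (x+1)).subset (Set.diff_subset_diff_left Set.inter_subset_left)
  set f : ℕ → ℕ :=
    fun x => x + 1 + sSup (B \ schemeOf X c (List.ofFn fun i : Fin (x+1) => α ↑i)) with hfdef
  have hcolf : ∀ x, ∀ y ∈ B, f x ≤ y → c x y = α x := by
    intro x y hyB hfy
    have hxy : x < y := by
      have : x + 1 ≤ f x := by simp [hfdef]
      omega
    have hyE : y ∉ B \ schemeOf X c (List.ofFn fun i : Fin (x+1) => α ↑i) := by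
      intro hyE
      have hle : y ≤ sSup (B \ schemeOf X c (List.ofFn fun i : Fin (x+1) => α ↑i)) :=
        le_csSup (hEfin x).bddAbove hyE
      simp only [hfdef] at hfy
      omega
    have hy : y ∈ schemeOf X c (List.ofFn fun i : Fin (x+1) => α ↑i) := by
      by_contra h
      exact hyE ⟨hyB, h⟩
    exact schemeOf_color hy hxy
  -- split B by the branch value
  have hBsplit : {x ∈ B | α x = true} ∪ {x ∈ B | α x = false} = B := by
    ext x
    constructor
    · rintro (h | h) <;> exact h.1
    · intro h
      rcases Bool.eq_false_or_eq_true (α x) with ha | ha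
      · exact Or.inl ⟨h, ha⟩
      · exact Or.inr ⟨h, ha⟩

  have hBb : ∃ bsel : Bool, {x ∈ B | α x = bsel} ∉ I := by
    rcases pos_union hI (hBsplit ▸ hBpos) with h | h
    · exact ⟨true, h⟩
    · exact ⟨false, h⟩
  obtain ⟨bsel, hBbpos⟩ := hBb
  set Bb : Set ℕ := {x ∈ B | α x = bsel} with hBbdef
  -- interval structure
  set M : ℕ → ℕ := fun m => Finset.sup (Finset.range (m+1)) f with hMdef
  set nseq : ℕ → ℕ := fun k => Nat.rec 0 (fun _ nk => nk + 1 + M nk) k with hnseqdef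
  have hnseq_succ : ∀ k, nseq (k+1) = nseq k + 1 + M (nseq k) := fun k => rfl
  have hmono : StrictMono nseq := strictMono_nat_of_lt_succ (fun k => by rw [hnseq_succ]; omega)
  have hex : ∀ x : ℕ, ∃ j, x < nseq (j+1) := by
    intro x
    refine ⟨x, ?_⟩
    have h1 : x + 1 ≤ nseq (x+1) := hmono.le_apply
    omega
  set idx : ℕ → ℕ := fun x => Nat.find (hex x) with hidxdef
  have hidx₂ : ∀ x, x < nseq (idx x + 1) := fun x => Nat.find_spec (hex x)
  have hidx₁ : ∀ x, nseq (idx x) ≤ x := by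
    intro x
    rcases Nat.eq_zero_or_pos (idx x) with h | h
    · rw [h]
      exact Nat.zero_le x
    · have hmin := Nat.find_min (hex x) (show idx x - 1 < idx x by omega)
      have h' : idx x - 1 + 1 = idx x := by omega
      rw [h'] at hmin
      omega
  -- q⁺ application
  set F : ℕ → Set ℕ := fun k => Bb ∩ Set.Ico (nseq k) (nseq (k+1)) with hFdef
  have hFfin : ∀ k, (F k).Finite := fun k => (Set.finite_Ico _ _).subset Set.inter_subset_right
  have hFun : (⋃ k, F k) = Bb := by
    ext x
    simp only [Set.mem_iUnion, hFdef, Set.mem_inter_iff, Set.mem_Ico]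
    constructor
    · rintro ⟨k, hk⟩
      exact hk.1
    · intro hx
      exact ⟨idx x, hx, hidx₁ x, hidx₂ x⟩
  have hFdis : ∀ m k, m ≠ k → F m ∩ F k = ∅ := by
    intro m k hmk
    apply Set.eq_empty_iff_forall_notMem.mpr
    rintro x ⟨⟨_, hm1, hm2⟩, ⟨_, hk1, hk2⟩⟩
    rcases Nat.lt_or_ge m k with h | h
    · have := hmono.monotone (show m + 1 ≤ k by omega)
      omega
    · have hkm : k < m := by omega
      have := hmono.monotone (show k + 1 ≤ m by omega)
      omega
  obtain ⟨S, hSpos, hSsub, hsel⟩ := hq Bb hBbpos F hFfin hFun hFdis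
  -- parity split
  have hSsplit : {x ∈ S | idx x % 2 = 0} ∪ {x ∈ S | idx x % 2 = 1} = S := by
    ext x
    constructor
    · rintro (h | h) <;> exact h.1
    · intro h
      rcases Nat.mod_two_eq_zero_or_one (idx x) with ha | ha
      · exact Or.inl ⟨h, ha⟩
      · exact Or.inr ⟨h, ha⟩
  have hD : ∃ p : ℕ, {x ∈ S | idx x % 2 = p} ∉ I := by
    rcases pos_union hI (hSsplit ▸ hSpos) with h | h
    · exact ⟨0, h⟩
    · exact ⟨1, h⟩
  obtain ⟨p, hDpos⟩ := hD
  set D : Set ℕ := {x ∈ S | idx x % 2 = p} with hDdef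
  have hDS : D ⊆ S := fun x hx => hx.1
  have hDB : D ⊆ B := fun x hx => (hSsub (hDS hx)).1
  have hDX : D ⊆ X := fun x hx => (hDB hx).2
  -- homogeneity
  have key : ∀ x ∈ D, ∀ y ∈ D, x < y → c x y = bsel := by
    intro x hx y hy hxy
    have hxS := hDS hx
    have hyS := hDS hy
    have hxBb : x ∈ Bb := hSsub hxS
    have hyBb : y ∈ Bb := hSsub hyS
    have hidxne : idx x ≠ idx y := by
      intro he
      have h1 : x ∈ S ∩ F (idx x) := ⟨hxS, hxBb, hidx₁ x, hidx₂ x⟩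
      have h2 : y ∈ S ∩ F (idx x) := ⟨hyS, hyBb, by rw [he]; exact hidx₁ y, by rw [he]; exact hidx₂ y⟩
      exact absurd (hsel (idx x) h1 h2) (ne_of_lt hxy)
    have hlt : idx x < idx y := by
      rcases Nat.lt_or_ge (idx x) (idx y) with h | h
      · exact h
      · exfalso
        have hyx : idx y < idx x := by omega
        have hm := hmono.monotone (show idx y + 1 ≤ idx x by omega)
        have := hidx₂ y
        have := hidx₁ x
        omega
    have hgap : idx x + 2 ≤ idx y := by
      have hpx : idx x % 2 = p := hx.2
      have hpy : idx y % 2 = p := hy.2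
      omega
    have hfx : f x ≤ y := by
      have hxle : x < nseq (idx x + 1) := hidx₂ x
      have hfM : f x ≤ M (nseq (idx x + 1)) :=
        Finset.le_sup (Finset.mem_range.mpr (by omega))
      have hstep : nseq (idx x + 2) = nseq (idx x + 1) + 1 + M (nseq (idx x + 1)) :=
        hnseq_succ (idx x + 1)
      have hy2 : nseq (idx x + 2) ≤ nseq (idx y) := hmono.monotone hgap
      have := hidx₁ y
      omega
    have := hcolf x y (hDB hy) hfx
    rw [this]
    exact hxBb.2
  refine ⟨D, hDpos, hDX, bsel, ?_⟩
  intro x hx y hy hne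
  rcases lt_trichotomy x y with h | h | h
  · exact key x hx y hy h
  · exact absurd h hne
  · rw [hsym x y]
    exact key y hy x hx h

end AuxiliaryProofs

/-- An ideal is Ramsey iff it is both q⁺ and wp⁺. -/
theorem ramsey_iff_qplus_and_wpplus (I : Set (Set ℕ)) (hI : IsIdeal I)
    (hfin : ContainsFin I) :
    RamseyIdeal I ↔ Qplus I ∧ WPplus I := by
  constructor
  · intro hR
    exact ⟨ramsey_to_qplus hI hfin hR, ramsey_to_wpplus hI hfin hR⟩
  · rintro ⟨hq, hw⟩
    exact qplus_wpplus_to_ramsey hI hfin hq hw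
end

section
/- (Filipów–Mrożek–Recław–Szuca) Every ideal on ℕ (containing all finite sets) that can be extended to an Fσ ideal satisfies FinBW: if I ⊆ J for some ideal J which is an Fσ subset of 2^ℕ, then for every bounded sequence (xₙ) of real numbers there is A ∈ I⁺ such that (xₙ)_{n∈A} converges. -/
open Set Filter Topology

lemma chi_eq_true_iff (A : Set ℕ) (n : ℕ) : chi A n = true ↔ n ∈ A := by
  unfold chi
  exact @decide_eq_true_iff (n ∈ A) (Classical.propDecidable _)

lemma chi_congr {A C : Set ℕ} {n : ℕ} (h : n ∈ A ↔ n ∈ C) : chi A n = chi C n := by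
  unfold chi
  exact decide_eq_decide.mpr h

lemma exists_cylinder_avoid {F : Set (ℕ → Bool)} (hF : IsClosed F) {c : ℕ → Bool} (hc : c ∉ F) :
    ∃ m : ℕ, ∀ y ∈ F, ∃ n, n < m ∧ y n ≠ c n := by
  by_contra h
  push_neg at h
  choose y hyF hyc using h
  apply hc
  have hlim : Tendsto y atTop (nhds c) := by
    rw [tendsto_pi_nhds]
    intro n
    have hev : ∀ᶠ m in atTop, c n = y m n := by
      filter_upwards [eventually_ge_atTop (n + 1)] with m hm
      exact (hyc m n (by omega)).symm
    exact tendsto_const_nhds.congr' hev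
  exact hF.mem_of_tendsto hlim (Eventually.of_forall hyF)

lemma step_lemma (J : Set (Set ℕ)) (hJ : IsIdeal J) (hfinJ : ∀ A : Set ℕ, A.Finite → A ∈ J)
    (F : Set (ℕ → Bool)) (hFcl : IsClosed F) (hFsub : F ⊆ chi '' J)
    (B : Set ℕ) (hB : B ∉ J) (s : Set ℕ) (m : ℕ) :
    ∃ m', m < m' ∧ ∀ A : Set ℕ,
      (∀ n, n < m' → (n ∈ A ↔ n ∈ s ∪ (B ∩ Set.Ico m m'))) → chi A ∉ F := by
  by_cases hsJ : s ∈ J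
  case neg =>
    -- We can still prove it: c = chi (s ∪ (B ∩ Ici m)) ∉ F needs s ∪ ... ∉ J, which holds
    -- since s ∉ J and s ⊆ the union.
    set c := chi (s ∪ (B ∩ Set.Ici m)) with hc
    have hcF : c ∉ F := by
      intro hmem
      obtain ⟨C, hCJ, hCc⟩ := hFsub hmem
      have hCe : C = s ∪ (B ∩ Set.Ici m) := chi_injective hCc
      exact hsJ (hJ.2.2.2 s C (by rw [hCe]; exact Set.subset_union_left) hCJ)
    obtain ⟨m0, hm0⟩ := exists_cylinder_avoid hFcl hcF
    refine ⟨max (m + 1) m0, lt_of_lt_of_le (Nat.lt_succ_self m) (le_max_left _ _), ?_⟩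
    intro A hA hAF
    obtain ⟨n, hn, hne⟩ := hm0 (chi A) hAF
    apply hne
    have h1 : n ∈ A ↔ n ∈ s ∪ (B ∩ Set.Ico m (max (m + 1) m0)) :=
      hA n (lt_of_lt_of_le hn (le_max_right _ _))
    have h2 : n ∈ A ↔ n ∈ s ∪ (B ∩ Set.Ici m) := by
      rw [h1]
      constructor
      · rintro (h | ⟨hB', hm', _⟩)
        · exact Or.inl h
        · exact Or.inr ⟨hB', hm'⟩
      · rintro (h | ⟨hB', hm'⟩)
        · exact Or.inl h
        · exact Or.inr ⟨hB', hm', lt_of_lt_of_le hn (le_max_right _ _)⟩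
    exact chi_congr h2
  case pos =>
    set c := chi (s ∪ (B ∩ Set.Ici m)) with hc
    have hcF : c ∉ F := by
      intro hmem
      obtain ⟨C, hCJ, hCc⟩ := hFsub hmem
      have hCe : C = s ∪ (B ∩ Set.Ici m) := chi_injective hCc
      rw [hCe] at hCJ
      apply hB
      have hfin : (B ∩ Set.Iio m) ∈ J :=
        hfinJ _ (Set.Finite.subset (Set.finite_Iio m) Set.inter_subset_right)
      have hU : (B ∩ Set.Iio m) ∪ (s ∪ (B ∩ Set.Ici m)) ∈ J := hJ.2.2.1 _ _ hfin hCJ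
      refine hJ.2.2.2 B _ ?_ hU
      intro n hn
      by_cases hnm : n < m
      · exact Or.inl ⟨hn, hnm⟩
      · exact Or.inr (Or.inr ⟨hn, le_of_not_gt hnm⟩)
    obtain ⟨m0, hm0⟩ := exists_cylinder_avoid hFcl hcF
    refine ⟨max (m + 1) m0, lt_of_lt_of_le (Nat.lt_succ_self m) (le_max_left _ _), ?_⟩
    intro A hA hAF
    obtain ⟨n, hn, hne⟩ := hm0 (chi A) hAF
    apply hne
    have h1 : n ∈ A ↔ n ∈ s ∪ (B ∩ Set.Ico m (max (m + 1) m0)) :=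
      hA n (lt_of_lt_of_le hn (le_max_right _ _))
    have h2 : n ∈ A ↔ n ∈ s ∪ (B ∩ Set.Ici m) := by
      rw [h1]
      constructor
      · rintro (h | ⟨hB', hm', _⟩)
        · exact Or.inl h
        · exact Or.inr ⟨hB', hm'⟩
      · rintro (h | ⟨hB', hm'⟩)
        · exact Or.inl h
        · exact Or.inr ⟨hB', hm', lt_of_lt_of_le hn (le_max_right _ _)⟩
    exact chi_congr h2

/-- Filipów–Mrożek–Recław–Szuca: if an ideal `I` on `ℕ` extends to an `Fσ`
ideal `J`, then `I` is FinBW: every bounded real sequence has a subsequence,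
indexed by an `I`-positive set, that converges. -/
theorem extendable_to_fsigma_finbw (I J : Set (Set ℕ)) (hI : IsIdeal I)
    (hfinI : ContainsFin I) (hJ : IsIdeal J) (hIJ : I ⊆ J)
    (hFsigma : IsFsigma (chi '' J))
    (x : ℕ → ℝ) (hbdd : ∃ M : ℝ, ∀ n, |x n| ≤ M) :
    ∃ A : Set ℕ, A ∉ I ∧ ∃ l : ℝ, Tendsto (fun n : ↥A => x ↑n) cofinite (nhds l) := by
  classical
  obtain ⟨M, hM⟩ := hbdd
  obtain ⟨F, hFcl, hFeq⟩ := hFsigma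
  have hFsub : ∀ k, F k ⊆ chi '' J := fun k => hFeq ▸ Set.subset_iUnion F k
  have hfinJ : ∀ A : Set ℕ, A.Finite → A ∈ J := fun A hA => hIJ (hfinI A hA)
  -- find a point all whose neighborhoods have J-positive preimage
  have hT : ∃ t : ℝ, ∀ ε : ℝ, 0 < ε → {n | |x n - t| < ε} ∉ J := by
    by_contra h
    push_neg at h
    choose ε hε hmem using h
    have hcomp : IsCompact (Set.Icc (-M) M) := isCompact_Icc
    obtain ⟨T, -, hTcov⟩ := hcomp.elim_nhds_subcover (fun t => Metric.ball t (ε t))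
      (fun t _ => Metric.ball_mem_nhds t (hε t))
    have hUnion : ∀ T : Finset ℝ, (⋃ t ∈ T, {n : ℕ | |x n - t| < ε t}) ∈ J := by
      intro T
      induction T using Finset.induction with
      | empty => simpa using hJ.1
      | @insert t T htT ih =>
        rw [Finset.set_biUnion_insert]
        exact hJ.2.2.1 _ _ (hmem t) ih
    apply hJ.2.1
    refine hJ.2.2.2 Set.univ _ ?_ (hUnion T)
    intro n _
    have hx : x n ∈ Set.Icc (-M) M := abs_le.mp (hM n)
    obtain ⟨t, htT, hxt⟩ := Set.mem_iUnion₂.mp (hTcov hx)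
    refine Set.mem_iUnion₂.mpr ⟨t, htT, ?_⟩
    simpa [Metric.mem_ball, Real.dist_eq] using hxt
  obtain ⟨t, ht⟩ := hT
  set B : ℕ → Set ℕ := fun k => {n | |x n - t| < 1 / ((k : ℝ) + 1)} with hBdef
  have hB : ∀ k, B k ∉ J := fun k => ht _ (by positivity)
  have hBanti : ∀ j k : ℕ, k ≤ j → B j ⊆ B k := by
    intro j k hkj n hn
    have h1 : (1 : ℝ) / ((j : ℝ) + 1) ≤ 1 / ((k : ℝ) + 1) := by
      apply one_div_le_one_div_of_le
      · positivity
      · exact_mod_cast by omega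
    exact lt_of_lt_of_le hn h1
  have key : ∀ (k : ℕ) (s : Finset ℕ) (m : ℕ), ∃ m', m < m' ∧ ∀ A : Set ℕ,
      (∀ n, n < m' → (n ∈ A ↔ n ∈ (↑s : Set ℕ) ∪ (B k ∩ Set.Ico m m'))) → chi A ∉ F k :=
    fun k s m => step_lemma J hJ hfinJ (F k) (hFcl k) (hFsub k) (B k) (hB k) (↑s) m
  choose f hf1 hf2 using key
  set p : ℕ → ℕ × Finset ℕ := fun k => Nat.rec ((0 : ℕ), (∅ : Finset ℕ))
    (fun k q => (f k q.2 q.1,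
      q.2 ∪ (Finset.Ico q.1 (f k q.2 q.1)).filter (fun n => n ∈ B k))) k with hp
  set mm : ℕ → ℕ := fun k => (p k).1 with hmm
  have hps : ∀ k, p (k + 1) = (f k (p k).2 (p k).1,
      (p k).2 ∪ (Finset.Ico (p k).1 (f k (p k).2 (p k).1)).filter (fun n => n ∈ B k)) :=
    fun k => rfl
  have hmlt : ∀ k, mm k < mm (k + 1) := fun k => hf1 k (p k).2 (mm k)
  have hmono : StrictMono mm := strictMono_nat_of_lt_succ hmlt
  set D : ℕ → Set ℕ := fun j => B j ∩ Set.Ico (mm j) (mm (j + 1)) with hD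
  set A : Set ℕ := ⋃ j, D j with hA
  have hsk : ∀ k, ((p k).2 : Set ℕ) = ⋃ j ∈ Finset.range k, D j := by
    intro k
    induction k with
    | zero => simp [hp]
    | succ k ih =>
      have hps' : (p (k + 1)).2
          = (p k).2 ∪ (Finset.Ico (mm k) (mm (k + 1))).filter (fun n => n ∈ B k) := rfl
      have hco : ((((Finset.Ico (mm k) (mm (k + 1))).filter (fun n => n ∈ B k)) : Finset ℕ) : Set ℕ)
          = D k := by
        ext n
        simp only [Finset.coe_filter, Finset.mem_Ico, Set.mem_setOf_eq]
        constructor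
        · intro hn; exact ⟨hn.2, hn.1⟩
        · intro hn; exact ⟨hn.2, hn.1⟩
      rw [hps', Finset.coe_union, ih, hco, Finset.range_add_one, Finset.set_biUnion_insert,
        Set.union_comm (D k)]
  have hAk : ∀ k, chi A ∉ F k := by
    intro k
    apply hf2 k (p k).2 (mm k)
    intro n hn
    have hrhs : (↑(p k).2 : Set ℕ) ∪ (B k ∩ Set.Ico (mm k) (f k (p k).2 (mm k)))
        = ⋃ j ∈ Finset.range (k + 1), D j := by
      rw [hsk k, Finset.range_add_one, Finset.set_biUnion_insert]
      show _ ∪ D k = D k ∪ _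
      exact Set.union_comm _ (D k)
    rw [hrhs]
    constructor
    · intro hnA
      obtain ⟨j, hj⟩ := Set.mem_iUnion.mp hnA
      refine Set.mem_iUnion₂.mpr ⟨j, ?_, hj⟩
      rw [Finset.mem_range]
      by_contra hjk
      push_neg at hjk
      have h1 : mm (k + 1) ≤ mm j := hmono.monotone hjk
      have h2 : mm j ≤ n := hj.2.1
      have hn' : n < mm (k + 1) := hn
      omega
    · intro hnU
      obtain ⟨j, _, hj⟩ := Set.mem_iUnion₂.mp hnU
      exact Set.mem_iUnion.mpr ⟨j, hj⟩
  have hAJ : A ∉ J := by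
    intro hAJ
    have : chi A ∈ ⋃ k, F k := hFeq ▸ Set.mem_image_of_mem chi hAJ
    obtain ⟨k, hk⟩ := Set.mem_iUnion.mp this
    exact hAk k hk
  refine ⟨A, fun h => hAJ (hIJ h), t, ?_⟩
  rw [Metric.tendsto_nhds]
  intro ε hε
  rw [Filter.eventually_cofinite]
  obtain ⟨k, hk⟩ := exists_nat_one_div_lt hε
  have hfin : ({a : ↥A | (a : ℕ) < mm k}).Finite :=
    (Set.finite_Iio (mm k)).preimage Subtype.val_injective.injOn
  apply hfin.subset
  intro a ha
  simp only [Set.mem_setOf_eq] at ha ⊢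
  by_contra hcon
  push_neg at hcon
  apply ha
  obtain ⟨j, hj⟩ := Set.mem_iUnion.mp a.2
  have hjk : k ≤ j := by
    by_contra hjk
    push_neg at hjk
    have h1 : mm (j + 1) ≤ mm k := hmono.monotone hjk
    have h2 : mm j ≤ (a : ℕ) := hj.2.1
    have h3 : (a : ℕ) < mm (j + 1) := hj.2.2
    omega
  have hball : (a : ℕ) ∈ B k := hBanti j k hjk hj.1
  have : |x (a : ℕ) - t| < 1 / ((k : ℝ) + 1) := hball
  rw [Real.dist_eq]
  calc |x (a : ℕ) - t| < 1 / ((k : ℝ) + 1) := this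
    _ < ε := hk
end

section
/- (Filipów–Szuca) Let I be an ideal on ℕ containing all finite sets. The following are equivalent: (i) I has property R: for every conditionally convergent series Σₙ aₙ of real numbers and every r ∈ ℝ ∪ {+∞, −∞} there is a permutation π of ℕ such that the partial sums of Σₙ a_{π(n)} converge to r and {n : π(n) ≠ n} ∈ I; (ii) there is no summable ideal J with I ⊆ J; (iii) I has property W: for every conditionally convergent series Σₙ aₙ of real numbers there exists A ∈ I such that the series Σ_{n∈A} aₙ is conditionally convergent. -/
open Set Filter Topology

/-- A series `Σ aₙ` is conditionally convergent: its partial sums converge in `ℝ`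
but it is not absolutely convergent. -/
def CondConv (a : ℕ → ℝ) : Prop :=
  (∃ l : ℝ, Tendsto (fun N => ∑ n ∈ Finset.range N, a n) atTop (nhds l)) ∧
    ¬ Summable (fun n => |a n|)

/-- Property `R`: every conditionally convergent series can be rearranged, by a
permutation moving only a set of indices in `I`, to converge to any prescribed
`r ∈ ℝ ∪ {+∞, -∞}` (encoded in `EReal`). -/
def PropertyR (I : Set (Set ℕ)) : Prop :=
  ∀ a : ℕ → ℝ, CondConv a → ∀ r : EReal,
    ∃ π : Equiv.Perm ℕ,
      Tendsto (fun N => ((∑ n ∈ Finset.range N, a (π n) : ℝ) : EReal)) atTop (nhds r) ∧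
      {n : ℕ | π n ≠ n} ∈ I

/-- Property `W`: for every conditionally convergent series there is `A ∈ I`
such that the subseries `Σ_{n∈A} aₙ` is conditionally convergent. -/
def PropertyW (I : Set (Set ℕ)) : Prop :=
  ∀ a : ℕ → ℝ, CondConv a → ∃ A ∈ I, CondConv (A.indicator a)

/-- `I` extends to a summable ideal. -/
def ExtendsToSummable (I : Set (Set ℕ)) : Prop :=
  ∃ f : ℕ → ℝ, (∀ n, 0 ≤ f n) ∧ ¬ Summable f ∧
    I ⊆ {A : Set ℕ | Summable fun n : ↥A => f ↑n}

/-!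
The three properties form a cycle of implications.

`W → R`: if `Σ_{n ∈ A} aₙ` converges conditionally for some `A ∈ I`, Riemann's rearrangement
theorem for this subseries gives a permutation of `A` realizing any `r`, while the terms outside
`A` stay in place and converge.

`R → ¬ ExtendsToSummable`: if `I ⊆ {A | Σ_{n ∈ A} fₙ < ∞}`, some conditionally convergent series
has `|aₙ| ≤ fₙ`: the terms `hₙ = min(fₙ, 1) / (1 + Σ_{k<n} min(fₖ, 1))` still have a divergent
sum but tend to `0`, and the zigzag below attaches signs to them. A permutation moving only a set
in `I` only moves a summable part of this series, so it cannot send it to `+∞`.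

`¬ ExtendsToSummable → W`: the positive and the negative part of `a` are not summable on some
`A₁, A₂ ∈ I`. Inside `A₁ ∪ A₂` a subseries is selected in a zigzag: climb with positive terms above
`1 / (k + 1)`, descend with negative terms to `0`, and increase `k`.

The zigzag and the greedy merge in Riemann's theorem converge for the same reason: a sequence that
moves up only when small and down only when positive, with vanishing steps, tends to `0`.
-/

lemma Nat.frequently_and_not_succ {P : ℕ → Prop} (h : ∃ᶠ n in atTop, P n)
    (h' : ∃ᶠ n in atTop, ¬ P n) : ∃ᶠ n in atTop, P n ∧ ¬ P (n + 1) := by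
  rw [frequently_atTop] at *
  intro N
  obtain ⟨a, haN, ha⟩ := h N
  obtain ⟨b, hab, hb⟩ := h' a
  induction b, hab using Nat.le_induction with
  | base => exact absurd ha hb
  | succ b hab ih => by_cases hPb : P b <;> grind

lemma tendsto_zero_of_moves_toward_zero {D θ : ℕ → ℝ}
    (hstep : Tendsto (fun n => D (n + 1) - D n) atTop (𝓝 0)) (hθ : Tendsto θ atTop (𝓝 0))
    (hmove : ∀ n, (D n ≤ θ n ∧ D n ≤ D (n + 1)) ∨ (0 < D n ∧ D (n + 1) ≤ D n))
    (hneg : ∃ᶠ n in atTop, D n ≤ 0) (hpos : ∃ᶠ n in atTop, 0 < D n) :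
    Tendsto D atTop (𝓝 0) := by
  rw [Metric.tendsto_atTop]
  intro ε hε
  have hsmall : ∀ᶠ n in atTop, |D (n + 1) - D n| < ε / 3 ∧ θ n < ε / 3 := by
    refine (hstep.abs.eventually (gt_mem_nhds ?_)).and (hθ.eventually (gt_mem_nhds ?_)) <;>
      simp [hε]
  obtain ⟨N, hN⟩ := eventually_atTop.1 hsmall
  obtain ⟨m, hmN, hm, hm'⟩ :=
    frequently_atTop.1 (Nat.frequently_and_not_succ hneg (by simpa using hpos)) N
  -- after an upward crossing of `0` beyond `N`, the band `|D| ≤ 2ε/3` is never left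
  have hbound : ∀ n, m + 1 ≤ n → |D n| ≤ 2 * (ε / 3) := by
    intro n hn
    induction n, hn using Nat.le_induction with
    | base =>
      have := (abs_lt.1 (hN m hmN).1).2
      rw [abs_le]; constructor <;> linarith
    | succ n hn ih =>
      have hnN := hN n (by omega)
      have := abs_lt.1 hnN.1
      rw [abs_le] at ih ⊢
      rcases hmove n with h | h <;> constructor <;> linarith
  refine ⟨m + 1, fun n hn => ?_⟩
  rw [Real.dist_eq, sub_zero]
  linarith [hbound n hn]

lemma tendsto_sum_range_atTop_of_eventuallyEq {f g : ℕ → ℝ} (hfg : f =ᶠ[atTop] g)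
    (hf : Tendsto (fun n => ∑ i ∈ Finset.range n, f i) atTop atTop) :
    Tendsto (fun n => ∑ i ∈ Finset.range n, g i) atTop atTop := by
  have hdiff : Summable (g - f) := by
    refine (summable_zero (α := ℝ)).congr_cofinite ?_
    rw [Nat.cofinite_eq_atTop]
    filter_upwards [hfg] with n hn
    simp [hn]
  refine (hdiff.hasSum.tendsto_sum_nat.add_atTop hf).congr fun n => ?_
  simp [Finset.sum_sub_distrib]

lemma Nat.tendsto_count_atTop {P : ℕ → Prop} [DecidablePred P] (hP : {n | P n}.Infinite) :
    Tendsto (Nat.count P) atTop atTop := by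
  refine tendsto_atTop_atTop_of_monotone (Nat.count_monotone P) fun b => ⟨Nat.nth P b + 1, ?_⟩
  rw [Nat.count_succ, Nat.count_nth_of_infinite hP, if_pos (Nat.nth_mem_of_infinite hP b)]
  omega

lemma Nat.count_eq_of_forall_not {P : ℕ → Prop} [DecidablePred P] {m₀ : ℕ}
    (hP : ∀ m, m₀ ≤ m → ¬ P m) {m : ℕ} (hm : m₀ ≤ m) : Nat.count P m = Nat.count P m₀ := by
  induction m, hm using Nat.le_induction with
  | base => rfl
  | succ m hm ih => rw [Nat.count_succ, if_neg (hP m hm), ih, add_zero]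

lemma summable_comp_nth_iff {α : Type*} [AddCommMonoid α] [TopologicalSpace α] {f : ℕ → α}
    {P : ℕ → Prop} [DecidablePred P] (hP : {n | P n}.Infinite) (hf : ∀ n, ¬ P n → f n = 0) :
    Summable (f ∘ Nat.nth P) ↔ Summable f :=
  (Nat.nth_strictMono hP).injective.summable_iff fun n hn =>
    hf n (by rwa [Nat.range_nth_of_infinite hP] at hn)

namespace CondConv

variable {a : ℕ → ℝ}

lemma tendsto_zero (h : CondConv a) : Tendsto a atTop (𝓝 0) := by
  obtain ⟨l, hl⟩ := h.1
  simpa [Finset.sum_range_succ] using (hl.comp (tendsto_add_atTop_nat 1)).sub hl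

lemma neg (h : CondConv a) : CondConv fun n => -a n := by
  obtain ⟨⟨l, hl⟩, hs⟩ := h
  exact ⟨⟨-l, by simpa using hl.neg⟩, by simpa using hs⟩

lemma not_summable_posPart (h : CondConv a) : ¬ Summable fun n => (a n)⁺ := by
  intro hpos
  obtain ⟨l, hl⟩ := h.1
  have hneg : Summable fun n => (a n)⁻ := by
    refine (summable_iff_not_tendsto_nat_atTop_of_nonneg fun n => negPart_nonneg _).2
      fun htop => not_tendsto_atTop_of_tendsto_nhds (hpos.hasSum.tendsto_sum_nat.sub hl) ?_
    refine htop.congr fun N => ?_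
    rw [← Finset.sum_sub_distrib]
    exact Finset.sum_congr rfl fun n _ => by linarith [posPart_sub_negPart (a n)]
  exact h.2 (by simpa only [posPart_add_negPart] using hpos.add hneg)

lemma not_summable_negPart (h : CondConv a) : ¬ Summable fun n => (a n)⁻ := by
  simpa using h.neg.not_summable_posPart

lemma infinite_setOf_nonneg (h : CondConv a) : {n | 0 ≤ a n}.Infinite := fun hfin =>
  h.not_summable_posPart <| summable_of_hasFiniteSupport <| hfin.subset fun _ hn =>
    not_lt.1 fun hlt => hn (posPart_eq_zero.2 hlt.le)

lemma infinite_setOf_neg (h : CondConv a) : {n | ¬ 0 ≤ a n}.Infinite := fun hfin =>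
  h.not_summable_negPart <| summable_of_hasFiniteSupport <| hfin.subset fun _ hn hle =>
    hn (negPart_eq_zero.2 hle)

lemma infinite_of_indicator {A : Set ℕ} (h : CondConv (A.indicator a)) : A.Infinite :=
  fun hA => h.2 <| summable_of_hasFiniteSupport <| hA.subset fun _ hn =>
    not_not.1 fun hnA => hn (by simp [Set.indicator_of_notMem hnA])

lemma not_summable_comp_nth_nonneg (h : CondConv a) :
    ¬ Summable (a ∘ Nat.nth fun n => 0 ≤ a n) := fun hs => h.not_summable_posPart <|
  (summable_comp_nth_iff h.infinite_setOf_nonneg fun _ hn => posPart_eq_zero.2 (not_le.1 hn).le).1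
    (hs.congr fun i => (posPart_eq_self.2 (Nat.nth_mem_of_infinite h.infinite_setOf_nonneg i)).symm)

lemma not_summable_comp_nth_neg (h : CondConv a) :
    ¬ Summable (a ∘ Nat.nth fun n => ¬ 0 ≤ a n) := fun hs => h.not_summable_negPart <|
  (summable_comp_nth_iff h.infinite_setOf_neg fun _ hn => negPart_eq_zero.2 (not_not.1 hn)).1
    (hs.neg.congr fun j => (negPart_eq_neg.2
      (not_le.1 (Nat.nth_mem_of_infinite h.infinite_setOf_neg j)).le).symm)

end CondConv

structure Zigzag where
  round : ℕ
  climbing : Bool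
  sum : ℝ

namespace Zigzag

/-- The thresholds `1 / (round + 1)` tend to `0`, which makes the sums converge, but their sum
diverges, which keeps the series of chosen terms from converging absolutely. -/
noncomputable def step (x y : ℝ) (st : Zigzag) : Zigzag :=
  if st.climbing then ⟨st.round, decide (st.sum + x ≤ 1 / (st.round + 1)), st.sum + x⟩
  else if st.sum + y ≤ 0 then ⟨st.round + 1, true, st.sum + y⟩ else ⟨st.round, false, st.sum + y⟩

noncomputable def run (x y : ℕ → ℝ) : ℕ → Zigzag
  | 0 => ⟨0, true, 0⟩
  | n + 1 => (run x y n).step (x n) (y n)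

noncomputable def term (x y : ℕ → ℝ) (n : ℕ) : ℝ :=
  if (run x y n).climbing then x n else y n

variable {x y : ℕ → ℝ}

lemma run_succ_sum (n : ℕ) : (run x y (n + 1)).sum = (run x y n).sum + term x y n := by
  simp only [run, step, term]
  split_ifs <;> rfl

lemma run_sum (n : ℕ) : (run x y n).sum = ∑ m ∈ Finset.range n, term x y m := by
  induction n with
  | zero => rfl
  | succ n ih => rw [run_succ_sum, ih, Finset.sum_range_succ]

lemma run_succ_of_climbing {n : ℕ} (h : (run x y n).climbing) :
    (run x y (n + 1)).round = (run x y n).round ∧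
      ((run x y (n + 1)).climbing ↔ (run x y (n + 1)).sum ≤ 1 / ((run x y n).round + 1)) := by
  simp [run, step, h]

lemma run_succ_of_not_climbing {n : ℕ} (h : ¬ (run x y n).climbing) :
    ((run x y (n + 1)).climbing ↔ (run x y (n + 1)).sum ≤ 0) ∧
      (run x y (n + 1)).round =
        (run x y n).round + if (run x y (n + 1)).climbing then 1 else 0 := by
  simp only [Bool.not_eq_true] at h
  by_cases hs : (run x y n).sum + y n ≤ 0 <;> simp [run, step, h, hs]

lemma run_sum_le_of_climbing {n : ℕ} (h : (run x y n).climbing) :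
    (run x y n).sum ≤ 1 / ((run x y n).round + 1) := by
  cases n with
  | zero => simp [run]
  | succ n =>
    by_cases hc : (run x y n).climbing
    · rw [(run_succ_of_climbing hc).1]
      exact (run_succ_of_climbing hc).2.1 h
    · have : (0 : ℝ) ≤ 1 / ((run x y (n + 1)).round + 1) := by positivity
      linarith [(run_succ_of_not_climbing hc).1.1 h]

lemma run_sum_pos_of_not_climbing {n : ℕ} (h : ¬ (run x y n).climbing) :
    0 < (run x y n).sum := by
  cases n with
  | zero => simp [run] at h
  | succ n =>
    by_cases hc : (run x y n).climbing
    · have : (0 : ℝ) < 1 / ((run x y n).round + 1) := by positivity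
      linarith [not_le.1 (mt (run_succ_of_climbing hc).2.2 h)]
    · exact not_le.1 (mt (run_succ_of_not_climbing hc).1.2 h)

/-- Every completed round `k` contributes at least `1 / (k + 1)` to the variation. -/
lemma harmonic_le_sum_abs_term (n : ℕ) :
    ∑ i ∈ Finset.range (run x y n).round, (1 : ℝ) / (i + 1) +
        (if (run x y n).climbing then max (run x y n).sum 0 else 1 / ((run x y n).round + 1)) ≤
      ∑ m ∈ Finset.range n, |term x y m| := by
  induction n with
  | zero => simp [run]
  | succ n ih =>
    rw [Finset.sum_range_succ, run_succ_sum]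
    by_cases hc : (run x y n).climbing
    · obtain ⟨hround, hiff⟩ := run_succ_of_climbing hc
      have hterm : term x y n = x n := if_pos hc
      rw [hround, hterm]
      rw [if_pos hc] at ih
      split_ifs with hc'
      · have := le_abs_self (x n)
        have := abs_nonneg (x n)
        have : max ((run x y n).sum + x n) 0 ≤ max (run x y n).sum 0 + |x n| := by
          apply max_le <;> [linarith [le_max_left (run x y n).sum 0]; positivity]
        linarith
      · have hgt := not_le.1 (mt hiff.2 hc')
        rw [run_succ_sum, hterm] at hgt
        linarith [le_abs_self (x n), le_max_left (run x y n).sum 0]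
    · obtain ⟨hiff, hround⟩ := run_succ_of_not_climbing hc
      rw [if_neg hc] at ih
      split_ifs at hround ⊢ with hc'
      · have hle := hiff.1 hc'
        rw [run_succ_sum] at hle
        rw [hround, Finset.sum_range_succ, max_eq_right hle]
        linarith [abs_nonneg (term x y n)]
      · rw [hround, add_zero]
        linarith [abs_nonneg (term x y n)]

lemma frequently_not_climbing (hx : ∀ n, 0 ≤ x n) (hxs : ¬ Summable x) :
    ∃ᶠ n in atTop, ¬ (run x y n).climbing := by
  intro hclimb
  simp only [not_not] at hclimb
  have hterm : x =ᶠ[atTop] term x y := hclimb.mono fun n h => (if_pos h).symm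
  have hsum := tendsto_sum_range_atTop_of_eventuallyEq hterm
    ((not_summable_iff_tendsto_nat_atTop_of_nonneg hx).1 hxs)
  obtain ⟨n, hn, hbig⟩ := (hclimb.and (hsum.eventually_gt_atTop 1)).exists
  have hle := run_sum_le_of_climbing hn
  have : 1 / ((run x y n).round + 1 : ℝ) ≤ 1 := by
    rw [div_le_one (by positivity)]; simp
  rw [run_sum] at hle
  linarith

lemma frequently_climbing (hy : ∀ n, y n ≤ 0) (hys : ¬ Summable y) :
    ∃ᶠ n in atTop, (run x y n).climbing := by
  intro hdesc
  have hterm : -y =ᶠ[atTop] -term x y := hdesc.mono fun n h => by simp [term, h]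
  have hsum := tendsto_sum_range_atTop_of_eventuallyEq hterm
    ((not_summable_iff_tendsto_nat_atTop_of_nonneg fun n => neg_nonneg.2 (hy n)).1
      (fun h => hys (by simpa using h.neg)))
  obtain ⟨n, hn, hbig⟩ := (hdesc.and (hsum.eventually_gt_atTop 0)).exists
  have hpos := run_sum_pos_of_not_climbing hn
  rw [run_sum] at hpos
  simp only [Pi.neg_apply, Finset.sum_neg_distrib] at hbig
  linarith

variable (hx : ∀ n, 0 ≤ x n) (hy : ∀ n, y n ≤ 0) (hxs : ¬ Summable x) (hys : ¬ Summable y)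
include hx hy hxs hys

lemma frequently_round_succ :
    ∃ᶠ n in atTop, ¬ (run x y n).climbing ∧ (run x y (n + 1)).climbing := by
  simpa using Nat.frequently_and_not_succ (frequently_not_climbing (y := y) hx hxs)
    (by simpa using frequently_climbing (x := x) hy hys)

lemma tendsto_round : Tendsto (fun n => (run x y n).round) atTop atTop := by
  have hmono : Monotone fun n => (run x y n).round := by
    refine monotone_nat_of_le_succ fun n => ?_
    by_cases hc : (run x y n).climbing
    · exact (run_succ_of_climbing hc).1.ge
    · rw [(run_succ_of_not_climbing hc).2]; omega
  refine tendsto_atTop_atTop_of_monotone hmono fun b => ?_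
  induction b with
  | zero => exact ⟨0, Nat.zero_le _⟩
  | succ b ih =>
    obtain ⟨n₀, hn₀⟩ := ih
    obtain ⟨n, hn, hdesc, hclimb⟩ := (frequently_atTop.1 (frequently_round_succ hx hy hxs hys)) n₀
    refine ⟨n + 1, ?_⟩
    rw [(run_succ_of_not_climbing hdesc).2, if_pos hclimb]
    linarith [hmono hn]

lemma tendsto_sum (hx0 : Tendsto x atTop (𝓝 0)) (hy0 : Tendsto y atTop (𝓝 0)) :
    Tendsto (fun n => (run x y n).sum) atTop (𝓝 0) := by
  have hθ : Tendsto (fun n => 1 / ((run x y n).round + 1 : ℝ)) atTop (𝓝 0) :=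
    tendsto_one_div_add_atTop_nhds_zero_nat.comp (tendsto_round hx hy hxs hys)
  refine tendsto_zero_of_moves_toward_zero ?_ hθ (fun n => ?_) ?_ ?_
  · simp_rw [run_succ_sum, add_sub_cancel_left]
    exact Tendsto.if (hx0.mono_left inf_le_left) (hy0.mono_left inf_le_left)
  · by_cases hc : (run x y n).climbing
    · refine Or.inl ⟨run_sum_le_of_climbing hc, ?_⟩
      rw [run_succ_sum, term, if_pos hc]
      linarith [hx n]
    · refine Or.inr ⟨run_sum_pos_of_not_climbing hc, ?_⟩
      rw [run_succ_sum, term, if_neg hc]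
      linarith [hy n]
  · refine (tendsto_add_atTop_nat 1).frequently
      ((frequently_round_succ hx hy hxs hys).mono fun n h => ?_)
    exact (run_succ_of_not_climbing h.1).1.1 h.2
  · exact (frequently_not_climbing hx hxs).mono fun n h => run_sum_pos_of_not_climbing h

lemma condConv_term (hx0 : Tendsto x atTop (𝓝 0)) (hy0 : Tendsto y atTop (𝓝 0)) :
    CondConv (term x y) := by
  refine ⟨⟨0, ?_⟩, fun hs => ?_⟩
  · simpa only [run_sum] using tendsto_sum hx hy hxs hys hx0 hy0
  · refine (not_summable_iff_tendsto_nat_atTop_of_nonneg fun n => abs_nonneg _).2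
      (tendsto_atTop_mono (fun n => ?_) ((Real.tendsto_sum_range_one_div_nat_succ_atTop).comp
        (tendsto_round hx hy hxs hys))) hs
    refine le_trans ?_ (harmonic_le_sum_abs_term n)
    simp only [Function.comp_apply, le_add_iff_nonneg_right]
    split_ifs <;> positivity

end Zigzag

lemma exists_condConv_abs_eq {h : ℕ → ℝ} (h0 : ∀ n, 0 ≤ h n) (hlim : Tendsto h atTop (𝓝 0))
    (hs : ¬ Summable h) : ∃ a, CondConv a ∧ ∀ n, |a n| = h n := by
  refine ⟨Zigzag.term h (fun n => -h n), Zigzag.condConv_term h0 (fun n => neg_nonpos.2 (h0 n)) hs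
    (fun h' => hs (by simpa using h'.neg)) hlim (by simpa using hlim.neg), fun n => ?_⟩
  unfold Zigzag.term
  split_ifs <;> simp [abs_of_nonneg (h0 n)]

lemma exists_condConv_indicator {b : ℕ → ℝ} (hlim : Tendsto b atTop (𝓝 0))
    (hpos : ¬ Summable fun n => (b n)⁺) (hneg : ¬ Summable fun n => (b n)⁻) :
    ∃ B ⊆ Function.support b, CondConv (B.indicator b) := by
  set z := Zigzag.term (fun n => (b n)⁺) (fun n => -(b n)⁻)
  have hz : ∀ n, z n = 0 ∨ z n = b n := by
    intro n
    unfold z Zigzag.term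
    split_ifs
    · rcases le_total (b n) 0 with h | h
      · exact Or.inl (posPart_eq_zero.2 h)
      · exact Or.inr (posPart_eq_self.2 h)
    · rcases le_total (b n) 0 with h | h
      · exact Or.inr (show -(b n)⁻ = b n by rw [negPart_eq_neg.2 h, neg_neg])
      · exact Or.inl (show -(b n)⁻ = 0 by rw [negPart_eq_zero.2 h, neg_zero])
  have hzB : (Function.support z).indicator b = z := by
    ext n
    by_cases hn : z n = 0
    · rw [Set.indicator_of_notMem (by simpa using hn), hn]
    · rw [Set.indicator_of_mem hn, (hz n).resolve_left hn]
  refine ⟨Function.support z, fun n hn => ?_, ?_⟩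
  · rw [Function.mem_support, ← (hz n).resolve_left hn]
    exact hn
  · rw [hzB]
    refine Zigzag.condConv_term (fun n => posPart_nonneg _)
      (fun n => neg_nonpos.2 (negPart_nonneg _)) hpos (fun h => hneg (by simpa using h.neg)) ?_ ?_
    · exact (continuous_posPart.tendsto' 0 0 (by simp)).comp hlim
    · simpa using ((continuous_negPart.tendsto' 0 0 (by simp)).comp hlim).neg

lemma not_summable_min_one {f : ℕ → ℝ} (hs : ¬ Summable f) : ¬ Summable fun n => min (f n) 1 := by
  intro hsum
  refine hs (hsum.congr_cofinite ?_)
  rw [Nat.cofinite_eq_atTop]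
  filter_upwards [hsum.tendsto_atTop_zero.eventually (gt_mem_nhds one_pos)] with n hn
  exact min_eq_left (not_le.1 fun h => hn.not_ge (min_eq_right h).ge).le

lemma log_one_add_sum_range_le {g : ℕ → ℝ} (hg : ∀ n, 0 ≤ g n) (N : ℕ) :
    Real.log (1 + ∑ k ∈ Finset.range N, g k) ≤
      ∑ n ∈ Finset.range N, g n / (1 + ∑ k ∈ Finset.range n, g k) := by
  induction N with
  | zero => simp
  | succ N ih =>
    have hG : 0 ≤ ∑ k ∈ Finset.range N, g k := Finset.sum_nonneg fun k _ => hg k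
    have hstep : Real.log (1 + ∑ k ∈ Finset.range (N + 1), g k) ≤
        Real.log (1 + ∑ k ∈ Finset.range N, g k) + g N / (1 + ∑ k ∈ Finset.range N, g k) := by
      rw [Finset.sum_range_succ, ← sub_le_iff_le_add',
        ← Real.log_div (by linarith [hg N]) (by linarith)]
      refine (Real.log_le_sub_one_of_pos (div_pos (by linarith [hg N]) (by linarith))).trans
        (le_of_eq ?_)
      field_simp
      ring
    rw [Finset.sum_range_succ (fun n => g n / (1 + ∑ k ∈ Finset.range n, g k))]
    linarith

lemma exists_le_tendsto_zero_not_summable {f : ℕ → ℝ} (hf : ∀ n, 0 ≤ f n) (hs : ¬ Summable f) :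
    ∃ h : ℕ → ℝ, (∀ n, 0 ≤ h n ∧ h n ≤ f n) ∧ Tendsto h atTop (𝓝 0) ∧ ¬ Summable h := by
  set g := fun n => min (f n) 1
  set G := fun n => ∑ k ∈ Finset.range n, g k
  have hg0 : ∀ n, 0 ≤ g n := fun n => le_min (hf n) zero_le_one
  have hG : Tendsto G atTop atTop :=
    (not_summable_iff_tendsto_nat_atTop_of_nonneg hg0).1 (not_summable_min_one hs)
  have hG0 : ∀ n, 0 ≤ G n := fun n => Finset.sum_nonneg fun k _ => hg0 k
  refine ⟨fun n => g n / (1 + G n), fun n => ⟨by positivity [hg0 n, hG0 n], ?_⟩, ?_, fun hsum => ?_⟩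
  · exact (div_le_self (hg0 n) (by linarith [hG0 n])).trans (min_le_left _ _)
  · refine squeeze_zero (fun n => by positivity [hg0 n, hG0 n]) (fun n => ?_)
      (tendsto_inv_atTop_zero.comp (tendsto_atTop_add_const_left _ 1 hG))
    rw [Function.comp_apply, div_eq_mul_inv]
    exact mul_le_of_le_one_left (by positivity [hG0 n]) (min_le_right _ _)
  · refine (not_summable_iff_tendsto_nat_atTop_of_nonneg fun n => by positivity [hg0 n, hG0 n]).2
      (tendsto_atTop_mono (log_one_add_sum_range_le hg0) (Real.tendsto_log_atTop.comp
        (tendsto_atTop_add_const_left _ 1 hG))) hsum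

lemma exists_condConv_abs_le {f : ℕ → ℝ} (hf : ∀ n, 0 ≤ f n) (hs : ¬ Summable f) :
    ∃ a, CondConv a ∧ ∀ n, |a n| ≤ f n := by
  obtain ⟨h, hle, hlim, hhs⟩ := exists_le_tendsto_zero_not_summable hf hs
  obtain ⟨a, ha, habs⟩ := exists_condConv_abs_eq (fun n => (hle n).1) hlim hhs
  exact ⟨a, ha, fun n => (habs n).trans_le (hle n).2⟩

def interleave {α : Type*} (c : ℕ → Bool) (f g : ℕ → α) (m : ℕ) : α :=
  if c m then f (Nat.count (fun k => c k) m) else g (Nat.count (fun k => ¬ c k) m)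

section Interleave

variable {α : Type*} {c : ℕ → Bool}

lemma sum_range_interleave [AddCommMonoid α] (f g : ℕ → α) (m : ℕ) :
    ∑ k ∈ Finset.range m, interleave c f g k =
      ∑ i ∈ Finset.range (Nat.count (fun k => c k) m), f i +
        ∑ j ∈ Finset.range (Nat.count (fun k => ¬ c k) m), g j := by
  induction m with
  | zero => simp
  | succ m ih =>
    rw [Finset.sum_range_succ, ih, Nat.count_succ, Nat.count_succ, interleave]
    by_cases hcm : c m
    · rw [if_pos hcm, if_pos hcm, if_neg (not_not.2 hcm), add_zero, Finset.sum_range_succ]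
      abel
    · rw [if_neg hcm, if_neg hcm, if_pos hcm, add_zero, Finset.sum_range_succ]
      abel

lemma comp_interleave {β : Type*} (u : α → β) (f g : ℕ → α) :
    u ∘ interleave c f g = interleave c (u ∘ f) (u ∘ g) := by
  ext m
  simp only [Function.comp_apply, interleave, apply_ite u]

lemma bijective_interleave_nth {P : ℕ → Prop} [DecidablePred P] (hP : {n | P n}.Infinite)
    (hP' : {n | ¬ P n}.Infinite) (hc : {m | c m}.Infinite) (hc' : {m | ¬ c m}.Infinite) :
    Function.Bijective (interleave c (Nat.nth P) (Nat.nth fun n => ¬ P n)) := by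
  constructor
  · intro m m' h
    unfold interleave at h
    by_cases hm : c m <;> by_cases hm' : c m' <;>
      simp only [hm, hm', if_true, if_false, Bool.false_eq_true] at h
    · exact Nat.count_injective hm hm' ((Nat.nth_strictMono hP).injective h)
    · exact absurd (h ▸ Nat.nth_mem_of_infinite hP _) (Nat.nth_mem_of_infinite hP' _)
    · exact absurd (h ▸ Nat.nth_mem_of_infinite hP' _) (not_not.2 (Nat.nth_mem_of_infinite hP _))
    · exact Nat.count_injective hm hm' ((Nat.nth_strictMono hP').injective h)
  · intro n
    by_cases hn : P n
    · refine ⟨Nat.nth (fun k => c k) (Nat.count P n), ?_⟩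
      rw [interleave, if_pos (Nat.nth_mem_of_infinite hc _), Nat.count_nth_of_infinite hc,
        Nat.nth_count hn]
    · refine ⟨Nat.nth (fun k => ¬ c k) (Nat.count (fun k => ¬ P k) n), ?_⟩
      rw [interleave, if_neg (Nat.nth_mem_of_infinite hc' _), Nat.count_nth_of_infinite hc',
        Nat.nth_count hn]

end Interleave

/-- Numbers of terms used from each pile, and the current sum, of the greedy merge. -/
noncomputable def greedyState (p q τ : ℕ → ℝ) : ℕ → ℕ × ℕ × ℝ
  | 0 => (0, 0, 0)
  | m + 1 =>
    let st := greedyState p q τ m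
    if st.2.2 ≤ τ st.2.1 then (st.1 + 1, st.2.1, st.2.2 + p st.1)
    else (st.1, st.2.1 + 1, st.2.2 + q st.2.1)

def IsGreedyInterleave (p q τ : ℕ → ℝ) (c : ℕ → Bool) : Prop :=
  ∀ m, c m ↔ ∑ k ∈ Finset.range m, interleave c p q k ≤ τ (Nat.count (fun k => ¬ c k) m)

lemma exists_isGreedyInterleave (p q τ : ℕ → ℝ) : ∃ c, IsGreedyInterleave p q τ c := by
  set c : ℕ → Bool := fun m => decide ((greedyState p q τ m).2.2 ≤ τ (greedyState p q τ m).2.1)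
  have hstate : ∀ m, greedyState p q τ m = (Nat.count (fun k => c k) m,
      Nat.count (fun k => ¬ c k) m, ∑ k ∈ Finset.range m, interleave c p q k) := by
    intro m
    induction m with
    | zero => simp [greedyState]
    | succ m ih =>
      have hcm : c m = decide ((greedyState p q τ m).2.2 ≤ τ (greedyState p q τ m).2.1) := rfl
      rw [Finset.sum_range_succ, Nat.count_succ, Nat.count_succ, greedyState, interleave]
      rw [ih] at hcm ⊢
      by_cases h : c m <;> simp_all
  refine ⟨c, fun m => ?_⟩
  simp only [c, decide_eq_true_eq, hstate m]

section GreedyInterleave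

variable {p q τ : ℕ → ℝ} {c : ℕ → Bool}

lemma greedy_sum_succ (m : ℕ) :
    ∑ k ∈ Finset.range (m + 1), interleave c p q k - τ (Nat.count (fun k => ¬ c k) (m + 1)) =
      ∑ k ∈ Finset.range m, interleave c p q k - τ (Nat.count (fun k => ¬ c k) m) +
        if c m then p (Nat.count (fun k => c k) m)
        else q (Nat.count (fun k => ¬ c k) m) -
          (τ (Nat.count (fun k => ¬ c k) m + 1) - τ (Nat.count (fun k => ¬ c k) m)) := by
  rw [Finset.sum_range_succ, Nat.count_succ, interleave]
  by_cases h : c m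
  · rw [if_pos h, if_pos h, if_neg (not_not.2 h), add_zero]
    ring
  · rw [if_neg h, if_neg h, if_pos h]
    ring

variable (hc : IsGreedyInterleave p q τ c)
include hc

lemma infinite_greedy_true (hq : ∀ j, q j ≤ 0) (hqs : ¬ Summable q) (hτ : Monotone τ) :
    {m | c m}.Infinite := by
  rw [← Nat.frequently_atTop_iff_infinite]
  intro hev
  obtain ⟨m₀, hm₀⟩ := eventually_atTop.1 hev
  have hJ := Nat.tendsto_count_atTop
    (Nat.frequently_atTop_iff_infinite.1 (eventually_atTop.2 ⟨m₀, hm₀⟩).frequently)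
  have hqsum : Tendsto (fun n => ∑ j ∈ Finset.range n, q j) atTop atBot := by
    rw [← tendsto_neg_atTop_iff]
    simpa using (not_summable_iff_tendsto_nat_atTop_of_nonneg fun j => neg_nonneg.2 (hq j)).1
      (fun h => hqs (by simpa using h.neg))
  have hS : Tendsto (fun m => ∑ i ∈ Finset.range (Nat.count (fun k => c k) m₀), p i +
      ∑ j ∈ Finset.range (Nat.count (fun k => ¬ c k) m), q j) atTop atBot :=
    tendsto_atBot_add_const_left _ _ (hqsum.comp hJ)
  obtain ⟨m, hm, hlt⟩ := ((eventually_ge_atTop m₀).and (hS.eventually_lt_atBot (τ 0))).exists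
  have hgt := not_le.1 (mt (hc m).2 (hm₀ m hm))
  rw [sum_range_interleave, Nat.count_eq_of_forall_not hm₀ hm] at hgt
  linarith [hτ (Nat.zero_le (Nat.count (fun k => ¬ c k) m))]

lemma infinite_greedy_false (hp : ∀ i, 0 ≤ p i) (hps : ¬ Summable p) :
    {m | ¬ c m}.Infinite := by
  rw [← Nat.frequently_atTop_iff_infinite]
  intro hev
  obtain ⟨m₀, hm₀⟩ := eventually_atTop.1 hev
  have hI := Nat.tendsto_count_atTop (Nat.frequently_atTop_iff_infinite.1
    (eventually_atTop.2 ⟨m₀, fun m hm => not_not.1 (hm₀ m hm)⟩).frequently)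
  have hS : Tendsto (fun m => ∑ i ∈ Finset.range (Nat.count (fun k => c k) m), p i +
      ∑ j ∈ Finset.range (Nat.count (fun k => ¬ c k) m₀), q j) atTop atTop :=
    tendsto_atTop_add_const_right _ _
      (((not_summable_iff_tendsto_nat_atTop_of_nonneg hp).1 hps).comp hI)
  obtain ⟨m, hm, hgt⟩ :=
    ((eventually_ge_atTop m₀).and (hS.eventually_gt_atTop
      (τ (Nat.count (fun k => ¬ c k) m₀)))).exists
  have hle := (hc m).1 (not_not.1 (hm₀ m hm))
  rw [sum_range_interleave, Nat.count_eq_of_forall_not hm₀ hm] at hle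
  linarith

lemma tendsto_greedy_sub_target (hp : ∀ i, 0 ≤ p i) (hq : ∀ j, q j ≤ 0) (hps : ¬ Summable p)
    (hqs : ¬ Summable q) (hp0 : Tendsto p atTop (𝓝 0)) (hq0 : Tendsto q atTop (𝓝 0))
    (hτ : Monotone τ) (hτ0 : Tendsto (fun j => τ (j + 1) - τ j) atTop (𝓝 0)) :
    Tendsto (fun m => ∑ k ∈ Finset.range m, interleave c p q k -
      τ (Nat.count (fun k => ¬ c k) m)) atTop (𝓝 0) := by
  have htrue := infinite_greedy_true hc hq hqs hτ
  have hfalse := infinite_greedy_false hc hp hps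
  refine tendsto_zero_of_moves_toward_zero (θ := 0) ?_ tendsto_const_nhds (fun m => ?_) ?_ ?_
  · have hqτ : Tendsto (fun j => q j - (τ (j + 1) - τ j)) atTop (𝓝 0) := by
      simpa using hq0.sub hτ0
    simp_rw [greedy_sum_succ, add_sub_cancel_left]
    exact Tendsto.if ((hp0.comp (Nat.tendsto_count_atTop htrue)).mono_left inf_le_left)
      ((hqτ.comp (Nat.tendsto_count_atTop hfalse)).mono_left inf_le_left)
  · rw [greedy_sum_succ]
    by_cases h : c m
    · refine Or.inl ⟨sub_nonpos.2 ((hc m).1 h), ?_⟩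
      simp [h, hp]
    · refine Or.inr ⟨sub_pos.2 (not_le.1 (mt (hc m).2 h)), ?_⟩
      simp only [h, if_false, Bool.false_eq_true]
      linarith [hq (Nat.count (fun k => ¬ c k) m), hτ (Nat.le_succ (Nat.count (fun k => ¬ c k) m))]
  · exact (Nat.frequently_atTop_iff_infinite.2 htrue).mono fun m h => sub_nonpos.2 ((hc m).1 h)
  · exact (Nat.frequently_atTop_iff_infinite.2 hfalse).mono fun m h =>
      sub_pos.2 (not_le.1 (mt (hc m).2 h))

end GreedyInterleave

namespace CondConv

variable {a : ℕ → ℝ}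

lemma exists_perm_sub_tendsto {τ : ℕ → ℝ} (h : CondConv a) (hτ : Monotone τ)
    (hτ0 : Tendsto (fun j => τ (j + 1) - τ j) atTop (𝓝 0)) :
    ∃ σ : Equiv.Perm ℕ, ∃ J : ℕ → ℕ, Tendsto J atTop atTop ∧
      Tendsto (fun N => ∑ n ∈ Finset.range N, a (σ n) - τ (J N)) atTop (𝓝 0) := by
  set P : ℕ → Prop := fun n => 0 ≤ a n
  have hP := h.infinite_setOf_nonneg
  have hP' := h.infinite_setOf_neg
  have hp : ∀ i, 0 ≤ (a ∘ Nat.nth P) i := fun i => Nat.nth_mem_of_infinite hP i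
  have hq : ∀ j, (a ∘ Nat.nth fun n => ¬ P n) j ≤ 0 :=
    fun j => (not_le.1 (Nat.nth_mem_of_infinite hP' j)).le
  obtain ⟨c, hc⟩ := exists_isGreedyInterleave (a ∘ Nat.nth P) (a ∘ Nat.nth fun n => ¬ P n) τ
  have htrue := infinite_greedy_true hc hq h.not_summable_comp_nth_neg hτ
  have hfalse := infinite_greedy_false hc hp h.not_summable_comp_nth_nonneg
  refine ⟨Equiv.ofBijective _ (bijective_interleave_nth hP hP' htrue hfalse), _,
    Nat.tendsto_count_atTop hfalse, ?_⟩
  simp only [Equiv.ofBijective_apply, ← Function.comp_apply (f := a), comp_interleave]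
  exact tendsto_greedy_sub_target hc hp hq h.not_summable_comp_nth_nonneg
    h.not_summable_comp_nth_neg (h.tendsto_zero.comp (Nat.nth_strictMono hP).tendsto_atTop)
    (h.tendsto_zero.comp (Nat.nth_strictMono hP').tendsto_atTop) hτ hτ0

lemma exists_perm_tendsto_atTop (h : CondConv a) :
    ∃ σ : Equiv.Perm ℕ, Tendsto (fun N => ∑ n ∈ Finset.range N, a (σ n)) atTop atTop := by
  set H : ℕ → ℝ := fun j => ∑ i ∈ Finset.range j, 1 / ((i : ℝ) + 1)
  have hH : Monotone H := monotone_nat_of_le_succ fun j => by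
    simp only [H, Finset.sum_range_succ, le_add_iff_nonneg_right]
    positivity
  have hH0 : Tendsto (fun j => H (j + 1) - H j) atTop (𝓝 0) := by
    simpa [H, Finset.sum_range_succ] using tendsto_one_div_add_atTop_nhds_zero_nat (𝕜 := ℝ)
  obtain ⟨σ, J, hJ, hσ⟩ := h.exists_perm_sub_tendsto hH hH0
  exact ⟨σ, (hσ.add_atTop (Real.tendsto_sum_range_one_div_nat_succ_atTop.comp hJ)).congr
    fun N => sub_add_cancel _ (H (J N))⟩

lemma exists_perm_tendsto (h : CondConv a) (r : EReal) :
    ∃ σ : Equiv.Perm ℕ,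
      Tendsto (fun N => ((∑ n ∈ Finset.range N, a (σ n) : ℝ) : EReal)) atTop (𝓝 r) := by
  induction r using EReal.rec with
  | bot =>
    obtain ⟨σ, hσ⟩ := h.neg.exists_perm_tendsto_atTop
    refine ⟨σ, EReal.tendsto_coe_atBot.comp (tendsto_neg_atTop_iff.1 ?_)⟩
    simpa using hσ
  | coe x =>
    obtain ⟨σ, J, -, hσ⟩ := h.exists_perm_sub_tendsto (τ := fun _ => x) monotone_const
      (by simp)
    exact ⟨σ, EReal.tendsto_coe.2 (by simpa using hσ.add_const x)⟩
  | top =>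
    obtain ⟨σ, hσ⟩ := h.exists_perm_tendsto_atTop
    exact ⟨σ, EReal.tendsto_coe_atTop.comp hσ⟩

end CondConv

section Subsequence

variable {A : Set ℕ} [DecidablePred (· ∈ A)]

lemma sum_range_indicator_eq_sum_count_nth {M : Type*} [AddCommMonoid M] (a : ℕ → M) (N : ℕ) :
    ∑ n ∈ Finset.range N, A.indicator a n =
      ∑ k ∈ Finset.range (Nat.count (· ∈ A) N), a (Nat.nth (· ∈ A) k) := by
  induction N with
  | zero => simp
  | succ N ih =>
    rw [Finset.sum_range_succ, ih, Nat.count_succ]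
    by_cases h : N ∈ A
    · simp [h, Finset.sum_range_succ, Nat.nth_count h]
    · simp [h]

lemma CondConv.comp_nth {a : ℕ → ℝ} (h : CondConv (A.indicator a)) :
    CondConv (a ∘ Nat.nth (· ∈ A)) := by
  have hA : {n | n ∈ A}.Infinite := h.infinite_of_indicator
  obtain ⟨⟨l, hl⟩, hs⟩ := h
  refine ⟨⟨l, (hl.comp (Nat.nth_strictMono hA).tendsto_atTop).congr fun K => ?_⟩, fun habs => ?_⟩
  · simp [sum_range_indicator_eq_sum_count_nth, Nat.count_nth_of_infinite hA]
  · refine hs ((summable_comp_nth_iff hA fun n hn => by simp [hn]).1 (habs.congr fun k => ?_))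
    simp [Set.indicator_of_mem (Nat.nth_mem_of_infinite hA k)]

lemma exists_perm_subset_sum_eq (hA : A.Infinite) (σ : Equiv.Perm ℕ) :
    ∃ π : Equiv.Perm ℕ, {n | π n ≠ n} ⊆ A ∧ ∀ (a : ℕ → ℝ) (N : ℕ),
      ∑ n ∈ Finset.range N, a (π n) =
        ∑ k ∈ Finset.range (Nat.count (· ∈ A) N), a (Nat.nth (· ∈ A) (σ k)) +
          ∑ n ∈ Finset.range N, Aᶜ.indicator a n := by
  have hA' : {n | n ∈ A}.Infinite := hA
  let e : ℕ ≃ {n // n ∈ A} := Equiv.ofBijective (fun k => ⟨_, Nat.nth_mem_of_infinite hA' k⟩)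
    ⟨fun k k' h => (Nat.nth_strictMono hA').injective (congrArg Subtype.val h),
      fun n => ⟨Nat.count (· ∈ A) n, Subtype.ext (Nat.nth_count n.2)⟩⟩
  have hπA : ∀ n ∈ A, σ.extendDomain e n = Nat.nth (· ∈ A) (σ (Nat.count (· ∈ A) n)) := by
    intro n hn
    have : n = e (Nat.count (· ∈ A) n) := (Nat.nth_count hn).symm
    conv_lhs => rw [this]
    rw [Equiv.Perm.extendDomain_apply_image]
    rfl
  have hπAc : ∀ n ∉ A, σ.extendDomain e n = n := fun n hn =>
    Equiv.Perm.extendDomain_apply_not_subtype σ e hn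
  refine ⟨σ.extendDomain e, fun n hn => by_contra fun hnA => hn (hπAc n hnA), fun a N => ?_⟩
  induction N with
  | zero => simp
  | succ N ih =>
    rw [Finset.sum_range_succ, ih, Nat.count_succ, Finset.sum_range_succ _ N]
    by_cases h : N ∈ A
    · rw [if_pos h, hπA N h, Finset.sum_range_succ, Set.indicator_of_notMem (not_not.2 h)]
      ring
    · rw [if_neg h, hπAc N h, Set.indicator_of_mem h, add_zero]
      ring

end Subsequence

lemma tendsto_sum_range_perm_of_summable_indicator {a : ℕ → ℝ} {l : ℝ}
    (hl : Tendsto (fun N => ∑ n ∈ Finset.range N, a n) atTop (𝓝 l)) (π : Equiv.Perm ℕ)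
    (hs : Summable ({n | π n ≠ n}.indicator a)) :
    Tendsto (fun N => ∑ n ∈ Finset.range N, a (π n)) atTop (𝓝 l) := by
  set D := {n | π n ≠ n}
  have hD : ∀ n, π n ∈ D ↔ n ∈ D := fun n => not_congr π.injective.eq_iff
  -- `π` permutes `D`, on which `a` is unconditionally summable
  have hdiff : ∀ n, a (π n) - a n = D.indicator a (π n) - D.indicator a n := by
    intro n
    by_cases hn : n ∈ D
    · rw [Set.indicator_of_mem hn, Set.indicator_of_mem ((hD n).2 hn)]
    · rw [not_not.1 hn, sub_self, sub_self]
  have hsum := ((π.summable_iff.2 hs).hasSum.sub hs.hasSum).tendsto_sum_nat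
  rw [show ∑' n, (D.indicator a ∘ π) n = ∑' n, D.indicator a n from π.tsum_eq _, sub_self] at hsum
  rw [← add_zero l]
  refine (hl.add hsum).congr fun N => ?_
  simp only [Function.comp_apply, ← hdiff, ← Finset.sum_add_distrib, add_sub_cancel]

lemma PropertyR.not_extendsToSummable {I : Set (Set ℕ)} (hR : PropertyR I) :
    ¬ ExtendsToSummable I := by
  rintro ⟨f, hf0, hfs, hIf⟩
  obtain ⟨a, ha, hle⟩ := exists_condConv_abs_le hf0 hfs
  obtain ⟨l, hl⟩ := ha.1
  obtain ⟨π, hπ, hD⟩ := hR a ha ⊤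
  have hs : Summable ({n | π n ≠ n}.indicator a) := by
    rw [← summable_subtype_iff_indicator]
    exact (hIf hD).of_norm_bounded fun n => hle n
  have hfin := EReal.tendsto_coe.2 (tendsto_sum_range_perm_of_summable_indicator hl π hs)
  exact EReal.coe_ne_top l (tendsto_nhds_unique hfin hπ)

lemma PropertyW.propertyR {I : Set (Set ℕ)} (hI : IsIdeal I) (hW : PropertyW I) :
    PropertyR I := by
  intro a ha r
  obtain ⟨A, hAI, hA⟩ := hW a ha
  classical
  obtain ⟨l, hl⟩ := ha.1
  obtain ⟨lA, hlA⟩ := hA.1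
  have hrest : Tendsto (fun N => ∑ n ∈ Finset.range N, Aᶜ.indicator a n) atTop (𝓝 (l - lA)) :=
    (hl.sub hlA).congr fun N => by simp [Set.indicator_compl, Finset.sum_sub_distrib]
  obtain ⟨σ, hσ⟩ := hA.comp_nth.exists_perm_tendsto (r - (l - lA : ℝ))
  obtain ⟨π, hπA, hπ⟩ := exists_perm_subset_sum_eq hA.infinite_of_indicator σ
  refine ⟨π, ?_, hI.2.2.2 _ _ hπA hAI⟩
  have hadd := (EReal.continuousAt_add (p := (r - (l - lA : ℝ), ((l - lA : ℝ) : EReal)))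
    (Or.inr (EReal.coe_ne_bot _)) (Or.inr (EReal.coe_ne_top _))).tendsto.comp
      ((hσ.comp (Nat.tendsto_count_atTop (P := (· ∈ A)) hA.infinite_of_indicator)).prodMk_nhds
        (EReal.tendsto_coe.2 hrest))
  rw [EReal.sub_add_cancel] at hadd
  refine hadd.congr fun N => ?_
  simp [hπ a N]

lemma exists_mem_not_summable_indicator {I : Set (Set ℕ)} (hI : ¬ ExtendsToSummable I)
    {g : ℕ → ℝ} (hg : ∀ n, 0 ≤ g n) (hgs : ¬ Summable g) :
    ∃ A ∈ I, ¬ Summable (A.indicator g) := by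
  by_contra! h
  exact hI ⟨g, hg, hgs, fun A hA => summable_subtype_iff_indicator.2 (h A hA)⟩

lemma not_summable_comp_indicator_of_subset {φ : ℝ → ℝ} (hφ0 : φ 0 = 0) (hφ : ∀ x, 0 ≤ φ x)
    {a : ℕ → ℝ} {A B : Set ℕ} (hAB : A ⊆ B) (h : ¬ Summable (A.indicator fun n => φ (a n))) :
    ¬ Summable fun n => φ (B.indicator a n) := by
  refine fun hs => h (hs.of_nonneg_of_le (fun n => Set.indicator_nonneg (fun n _ => hφ _) n)
    fun n => ?_)
  have hφB : φ (B.indicator a n) = B.indicator (fun n => φ (a n)) n := by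
    by_cases hn : n ∈ B <;> simp [hn, hφ0]
  rw [hφB]
  exact Set.indicator_le_indicator_of_subset hAB (fun n => hφ _) n

lemma propertyW_of_not_extendsToSummable {I : Set (Set ℕ)} (hI : IsIdeal I)
    (hext : ¬ ExtendsToSummable I) : PropertyW I := by
  intro a ha
  obtain ⟨A₁, hA₁I, hA₁⟩ := exists_mem_not_summable_indicator hext (fun n => posPart_nonneg (a n))
    ha.not_summable_posPart
  obtain ⟨A₂, hA₂I, hA₂⟩ := exists_mem_not_summable_indicator hext (fun n => negPart_nonneg (a n))
    ha.not_summable_negPart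
  set A := A₁ ∪ A₂
  obtain ⟨B, hBA, hB⟩ := exists_condConv_indicator
    (squeeze_zero_norm (fun n => norm_indicator_le_norm_self a n)
      (tendsto_zero_iff_norm_tendsto_zero.1 ha.tendsto_zero))
    (not_summable_comp_indicator_of_subset (by simp) posPart_nonneg Set.subset_union_left hA₁)
    (not_summable_comp_indicator_of_subset (by simp) negPart_nonneg Set.subset_union_right hA₂)
  have hBA' : B ⊆ A := hBA.trans Set.support_indicator_subset
  refine ⟨B, hI.2.2.2 _ _ hBA' (hI.2.2.1 _ _ hA₁I hA₂I), ?_⟩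
  rwa [Set.indicator_indicator, Set.inter_eq_left.2 hBA'] at hB

theorem property_R_iff_no_summable_ext_iff_W_general (I : Set (Set ℕ)) (hI : IsIdeal I) :
    (PropertyR I ↔ ¬ ExtendsToSummable I) ∧ (¬ ExtendsToSummable I ↔ PropertyW I) := by
  have hW : ¬ ExtendsToSummable I → PropertyW I := propertyW_of_not_extendsToSummable hI
  have hR : PropertyW I → PropertyR I := PropertyW.propertyR hI
  exact ⟨⟨PropertyR.not_extendsToSummable, hR ∘ hW⟩, ⟨hW, PropertyR.not_extendsToSummable ∘ hR⟩⟩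

/-- Filipów–Szuca: property `R`, non-extendability to a summable ideal, and
property `W` are equivalent. -/
theorem property_R_iff_no_summable_ext_iff_W (I : Set (Set ℕ)) (hI : IsIdeal I)
    (hfin : ContainsFin I) :
    (PropertyR I ↔ ¬ ExtendsToSummable I) ∧ (¬ ExtendsToSummable I ↔ PropertyW I) :=
  property_R_iff_no_summable_ext_iff_W_general I hI
end
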